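/- arXiv:math/9901124 — 6 statements merged into one kernel-verified Lean document; each statement's English description precedes it below -/
import Mathlib

section
/- Let F : ℂ³ → ℂ³ be a bijective polynomial map preserving the Fricke–Vogt invariant I(x,y,z) = x² + y² + z² − 2xyz − 1. Then for each i ∈ {1,2,3}, the conjugate F ∘ σᵢ ∘ F⁻¹ belongs to Σ = {id, σ₁, σ₂, σ₃}; that is, Σ is a normal subgroup of the group 𝒜 of all invariant-preserving polynomial maps of ℂ³. -/
open MvPolynomial

/-- The Fricke–Vogt invariant as a function on `ℂ³`. -/
noncomputable def fvInv (p : ℂ × ℂ × ℂ) : ℂ :=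
  p.1 ^ 2 + p.2.1 ^ 2 + p.2.2 ^ 2 - 2 * p.1 * p.2.1 * p.2.2 - 1

/-- A map `A : ℂ³ → ℂ³` is a polynomial map if its three components are given
by polynomials in `ℂ[x,y,z]`. -/
def IsPolyMap (A : ℂ × ℂ × ℂ → ℂ × ℂ × ℂ) : Prop :=
  ∃ P Q R : MvPolynomial (Fin 3) ℂ, ∀ x y z : ℂ,
    A (x, y, z) = (eval ![x, y, z] P, eval ![x, y, z] Q, eval ![x, y, z] R)

/-- `A` preserves the Fricke–Vogt invariant. -/
def PreservesFV (A : ℂ × ℂ × ℂ → ℂ × ℂ × ℂ) : Prop :=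
  ∀ p, fvInv (A p) = fvInv p

/-- `σ₁(x,y,z) = (x,−y,−z)`. -/
def σ₁ : ℂ × ℂ × ℂ → ℂ × ℂ × ℂ := fun p => (p.1, -p.2.1, -p.2.2)

/-- `σ₂(x,y,z) = (−x,y,−z)`. -/
def σ₂ : ℂ × ℂ × ℂ → ℂ × ℂ × ℂ := fun p => (-p.1, p.2.1, -p.2.2)

/-- `σ₃(x,y,z) = (−x,−y,z)`. -/
def σ₃ : ℂ × ℂ × ℂ → ℂ × ℂ × ℂ := fun p => (-p.1, -p.2.1, p.2.2)

/-- The set `Σ = {id, σ₁, σ₂, σ₃}`. -/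
def SigmaSet : Set (ℂ × ℂ × ℂ → ℂ × ℂ × ℂ) := {id, σ₁, σ₂, σ₃}

namespace FVaux
set_option linter.unusedSectionVars false

variable {σ : Type*} [DecidableEq σ] {R : Type*} [CommRing R] [IsDomain R]

lemma degree_eq_sum (d : σ →₀ ℕ) : d.degree = d.sum fun _ e => e := rfl

lemma le_totalDegree' {p : MvPolynomial σ R} {d : σ →₀ ℕ} (h : d ∈ p.support) :
    d.degree ≤ p.totalDegree := MvPolynomial.le_totalDegree h

lemma coeff_zero_of_deg_gt {p : MvPolynomial σ R} {d : σ →₀ ℕ}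
    (h : p.totalDegree < d.degree) : coeff d p = 0 := by
  by_contra hc
  exact absurd (le_totalDegree' (by simpa [MvPolynomial.mem_support_iff] using hc)) (not_le.2 h)

lemma degree_add (u v : σ →₀ ℕ) : (u + v).degree = u.degree + v.degree := by
  classical
  simp only [degree_eq_sum]
  exact Finsupp.sum_add_index' (fun _ => rfl) (fun _ _ _ => rfl)

/-- top-degree homogeneous component of a product -/
lemma hcomp_mul {f g : MvPolynomial σ R} {a b : ℕ}
    (hf : f.totalDegree ≤ a) (hg : g.totalDegree ≤ b) :
    homogeneousComponent (a + b) (f * g) =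
      homogeneousComponent a f * homogeneousComponent b g := by
  classical
  apply MvPolynomial.ext
  intro m
  rw [coeff_homogeneousComponent]
  by_cases hm : m.degree = a + b
  · rw [if_pos hm, coeff_mul, coeff_mul]
    apply Finset.sum_congr rfl
    intro x hx
    rw [Finset.HasAntidiagonal.mem_antidiagonal] at hx
    rw [coeff_homogeneousComponent, coeff_homogeneousComponent]
    by_cases h1 : x.1.degree = a
    · have h2 : x.2.degree = b := by
        have := degree_add x.1 x.2
        rw [hx] at this; omega
      rw [if_pos h1, if_pos h2]
    · have hsum : x.1.degree + x.2.degree = a + b := by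
        rw [← degree_add, hx, hm]
      rcases lt_or_gt_of_ne h1 with hlt | hgt
      · have h2 : b < x.2.degree := by omega
        rw [coeff_zero_of_deg_gt (lt_of_le_of_lt hg h2)]
        simp
      · rw [coeff_zero_of_deg_gt (lt_of_le_of_lt hf hgt)]
        simp
  · rw [if_neg hm]
    refine ((MvPolynomial.IsHomogeneous.mul (homogeneousComponent_isHomogeneous a f)
      (homogeneousComponent_isHomogeneous b g)).coeff_eq_zero ?_).symm
    exact hm

lemma hcomp_top_ne_zero {f : MvPolynomial σ R} (hf : f ≠ 0) :
    homogeneousComponent f.totalDegree f ≠ 0 := by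
  classical
  obtain ⟨m, hm, hdeg⟩ := Finset.exists_mem_eq_sup f.support
    (by simpa [MvPolynomial.support_eq_empty, Finset.nonempty_iff_ne_empty] using hf)
    (fun m => m.sum fun _ e => e)
  intro h0
  have : coeff m (homogeneousComponent f.totalDegree f) = coeff m f := by
    rw [coeff_homogeneousComponent, if_pos]
    show m.degree = f.totalDegree
    rw [degree_eq_sum, MvPolynomial.totalDegree, hdeg]
  rw [h0] at this
  simp only [coeff_zero] at this
  exact (MvPolynomial.mem_support_iff.1 hm) this.symm

lemma totalDegree_ge_of_hcomp_ne {f : MvPolynomial σ R} {d : ℕ}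
    (h : homogeneousComponent d f ≠ 0) : d ≤ f.totalDegree := by
  by_contra hc
  exact h (homogeneousComponent_eq_zero d f (by omega))

lemma totalDegree_drop {f : MvPolynomial σ R} {d : ℕ} (hd : 1 ≤ d)
    (hle : f.totalDegree ≤ d) (h0 : homogeneousComponent d f = 0) :
    f.totalDegree ≤ d - 1 := by
  classical
  rw [MvPolynomial.totalDegree]
  apply Finset.sup_le
  intro m hm
  have h1 : m.degree ≤ d := le_trans (le_totalDegree' hm) hle
  have h2 : m.degree ≠ d := by
    intro he
    have : coeff m (homogeneousComponent d f) = coeff m f := by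
      rw [coeff_homogeneousComponent, if_pos he]
    rw [h0] at this
    simp only [coeff_zero] at this
    exact (MvPolynomial.mem_support_iff.1 hm) this.symm
  show m.degree ≤ d - 1
  omega

lemma deg_le_one_cases (d : Fin 3 →₀ ℕ) (h : d.degree ≤ 1) :
    d = 0 ∨ d = Finsupp.single 0 1 ∨ d = Finsupp.single 1 1 ∨ d = Finsupp.single 2 1 := by
  classical
  have hsum : d 0 + d 1 + d 2 ≤ 1 := by
    have h1 : ∑ i : Fin 3, d i = ∑ i ∈ d.support, d i :=
      (Finset.sum_subset (Finset.subset_univ _)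
        (fun i _ hi => Finsupp.notMem_support_iff.1 hi)).symm
    have h2 : d.degree = ∑ i ∈ d.support, d i := rfl
    have := Fin.sum_univ_three d
    omega
  rcases Nat.eq_zero_or_pos (d 0) with h0 | h0
  · rcases Nat.eq_zero_or_pos (d 1) with h1 | h1
    · rcases Nat.eq_zero_or_pos (d 2) with h2 | h2
      · left
        apply Finsupp.ext; intro i; fin_cases i <;> simpa
      · right; right; right
        apply Finsupp.ext; intro i; fin_cases i <;>
          simp [Finsupp.single_apply] <;> omega
    · right; right; left
      apply Finsupp.ext; intro i; fin_cases i <;>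
        simp [Finsupp.single_apply] <;> omega
  · right; left
    apply Finsupp.ext; intro i; fin_cases i <;>
      simp [Finsupp.single_apply] <;> omega

lemma degree_single (k : Fin 3) : (Finsupp.single k 1).degree = 1 := by
  classical
  rw [degree_eq_sum]
  rw [Finsupp.sum_single_index]
  rfl

lemma eval_affine {f : MvPolynomial (Fin 3) ℂ} (h : f.totalDegree ≤ 1) (v : Fin 3 → ℂ) :
    eval v f = coeff 0 f + (coeff (Finsupp.single 0 1) f) * v 0
      + (coeff (Finsupp.single 1 1) f) * v 1 + (coeff (Finsupp.single 2 1) f) * v 2 := by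
  classical
  rw [eval_eq']
  have hsub : f.support ⊆ ({0, Finsupp.single 0 1, Finsupp.single 1 1, Finsupp.single 2 1} :
      Finset (Fin 3 →₀ ℕ)) := by
    intro d hd
    have : d.degree ≤ 1 := le_trans (le_totalDegree' hd) h
    rcases deg_le_one_cases d this with h' | h' | h' | h' <;> simp [h']
  rw [Finset.sum_subset hsub (by
    intro d _ hd
    have hcz : coeff d f = 0 := MvPolynomial.notMem_support_iff.1 hd
    rw [hcz]; ring)]
  have hne01 : (Finsupp.single (0:Fin 3) 1) ≠ Finsupp.single 1 1 := by
    intro hcon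
    have := DFunLike.congr_fun hcon 0
    simp [Finsupp.single_apply] at this
  have hne02 : (Finsupp.single (0:Fin 3) 1) ≠ Finsupp.single 2 1 := by
    intro hcon
    have := DFunLike.congr_fun hcon 0
    simp [Finsupp.single_apply] at this
  have hne12 : (Finsupp.single (1:Fin 3) 1) ≠ Finsupp.single 2 1 := by
    intro hcon
    have := DFunLike.congr_fun hcon 1
    simp [Finsupp.single_apply] at this
  have hz0 : (0 : Fin 3 →₀ ℕ) ≠ Finsupp.single 0 1 := fun hcon => by
    have := DFunLike.congr_fun hcon 0; simp [Finsupp.single_apply] at this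
  have hz1 : (0 : Fin 3 →₀ ℕ) ≠ Finsupp.single 1 1 := fun hcon => by
    have := DFunLike.congr_fun hcon 1; simp [Finsupp.single_apply] at this
  have hz2 : (0 : Fin 3 →₀ ℕ) ≠ Finsupp.single 2 1 := fun hcon => by
    have := DFunLike.congr_fun hcon 2; simp [Finsupp.single_apply] at this
  rw [Finset.sum_insert (by simp [hz0, hz1, hz2]),
      Finset.sum_insert (by simp [hne01, hne02]),
      Finset.sum_insert (by simp [hne12]),
      Finset.sum_singleton]
  have hp0 : (∏ i : Fin 3, v i ^ (0 : Fin 3 →₀ ℕ) i) = 1 := by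
    simp
  have hp1 : (∏ i : Fin 3, v i ^ (Finsupp.single (0:Fin 3) 1) i) = v 0 := by
    rw [Fin.prod_univ_three]
    simp [Finsupp.single_apply]
  have hp2 : (∏ i : Fin 3, v i ^ (Finsupp.single (1:Fin 3) 1) i) = v 1 := by
    rw [Fin.prod_univ_three]
    simp [Finsupp.single_apply]
  have hp3 : (∏ i : Fin 3, v i ^ (Finsupp.single (2:Fin 3) 1) i) = v 2 := by
    rw [Fin.prod_univ_three]
    simp [Finsupp.single_apply]
  rw [hp0, hp1, hp2, hp3]
  ring

lemma eval_const_of_deg0 {f : MvPolynomial (Fin 3) ℂ} (h : f.totalDegree = 0) (v : Fin 3 → ℂ) :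
    eval v f = coeff 0 f := by
  have h1 := eval_affine (f := f) (by omega) v
  have hc : ∀ k : Fin 3, coeff (Finsupp.single k 1) f = 0 := by
    intro k
    apply coeff_zero_of_deg_gt
    rw [degree_single k, h]
    omega
  rw [h1, hc 0, hc 1, hc 2]
  ring




noncomputable def Fmap (P Q R : MvPolynomial (Fin 3) ℂ) : ℂ × ℂ × ℂ → ℂ × ℂ × ℂ :=
  fun p => (eval ![p.1, p.2.1, p.2.2] P, eval ![p.1, p.2.1, p.2.2] Q,
            eval ![p.1, p.2.1, p.2.2] R)

noncomputable def Jpoly : MvPolynomial (Fin 3) ℂ :=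
  X 0 ^ 2 + X 1 ^ 2 + X 2 ^ 2 - C 2 * (X 0 * X 1 * X 2)

def Ident (P Q R : MvPolynomial (Fin 3) ℂ) : Prop :=
  P ^ 2 + Q ^ 2 + R ^ 2 - C 2 * (P * Q * R) = Jpoly

def KeyFun (F : ℂ × ℂ × ℂ → ℂ × ℂ × ℂ) : Prop :=
  ∀ s0 ∈ ({σ₁, σ₂, σ₃} : Set (ℂ × ℂ × ℂ → ℂ × ℂ × ℂ)),
    ∃ s' ∈ SigmaSet, F ∘ s0 = s' ∘ F

lemma eval_J (v : Fin 3 → ℂ) :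
    eval v Jpoly = v 0 ^ 2 + v 1 ^ 2 + v 2 ^ 2 - 2 * (v 0 * v 1 * v 2) := by
  simp [Jpoly]

lemma totalDegree_J_le : Jpoly.totalDegree ≤ 3 := by
  unfold Jpoly
  rw [sub_eq_add_neg]
  refine le_trans (totalDegree_add _ _) (sup_le ?_ ?_)
  · refine le_trans (totalDegree_add _ _) (sup_le ?_ ?_)
    · refine le_trans (totalDegree_add _ _) (sup_le ?_ ?_) <;>
        simp [totalDegree_X_pow]
    · simp [totalDegree_X_pow]
  · rw [totalDegree_neg]
    refine le_trans (totalDegree_mul _ _) ?_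
    have h1 : (X 0 * X 1 * X 2 : MvPolynomial (Fin 3) ℂ).totalDegree ≤ 3 := by
      refine le_trans (totalDegree_mul _ _) ?_
      have := totalDegree_mul (X 0 : MvPolynomial (Fin 3) ℂ) (X 1)
      simp [totalDegree_X] at *
      omega
    simp [totalDegree_C]
    omega

lemma hcomp_J_eq_zero {n : ℕ} (hn : 4 ≤ n) : homogeneousComponent n Jpoly = 0 :=
  homogeneousComponent_eq_zero _ _ (lt_of_le_of_lt totalDegree_J_le (by omega))

def sgn (e1 e2 e3 : ℂ) : ℂ × ℂ × ℂ → ℂ × ℂ × ℂ :=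
  fun p => (e1 * p.1, e2 * p.2.1, e3 * p.2.2)

lemma sgn_mem {e1 e2 e3 : ℂ} (h1 : e1 = 1 ∨ e1 = -1) (h2 : e2 = 1 ∨ e2 = -1)
    (h3 : e3 = 1 ∨ e3 = -1) (hp : e1 * e2 * e3 = 1) : sgn e1 e2 e3 ∈ SigmaSet := by
  rcases h1 with h1 | h1 <;> rcases h2 with h2 | h2 <;> rcases h3 with h3 | h3 <;>
    subst h1 <;> subst h2 <;> subst h3 <;> norm_num at hp <;>
    simp only [SigmaSet, Set.mem_insert_iff, Set.mem_singleton_iff]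
  · left
    funext p
    simp only [sgn, id_eq]
    exact Prod.ext (by ring) (Prod.ext (by ring) (by ring))
  · right; left
    funext p
    simp only [sgn, σ₁]
    exact Prod.ext (by ring) (Prod.ext (by ring) (by ring))
  · right; right; left
    funext p
    simp only [sgn, σ₂]
    exact Prod.ext (by ring) (Prod.ext (by ring) (by ring))
  · right; right; right
    funext p
    simp only [sgn, σ₃]
    exact Prod.ext (by ring) (Prod.ext (by ring) (by ring))

def Vm : ℂ × ℂ × ℂ → ℂ × ℂ × ℂ := fun p => (2 * p.2.1 * p.2.2 - p.1, p.2.1, p.2.2)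
def W12 : ℂ × ℂ × ℂ → ℂ × ℂ × ℂ := fun p => (p.2.1, p.1, p.2.2)
def W13 : ℂ × ℂ × ℂ → ℂ × ℂ × ℂ := fun p => (p.2.2, p.2.1, p.1)

lemma Vm_invol : Vm ∘ Vm = id := by
  funext p
  simp only [Function.comp_apply, Vm, id_eq]
  exact Prod.ext (by ring) (Prod.ext rfl rfl)
lemma W12_invol : W12 ∘ W12 = id := by funext p; rfl
lemma W13_invol : W13 ∘ W13 = id := by funext p; rfl

lemma conj_Vm_mem {s : ℂ × ℂ × ℂ → ℂ × ℂ × ℂ} (hs : s ∈ SigmaSet) :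
    Vm ∘ s ∘ Vm ∈ SigmaSet := by
  rcases hs with h | h | h | h <;> subst h <;>
    simp only [SigmaSet, Set.mem_insert_iff, Set.mem_singleton_iff]
  · left
    funext p
    simp only [Function.comp_apply, Vm, id_eq]
    exact Prod.ext (by ring) (Prod.ext rfl rfl)
  · right; left
    funext p
    simp only [Function.comp_apply, Vm, σ₁]
    exact Prod.ext (by ring) (Prod.ext (by ring) (by ring))
  · right; right; left
    funext p
    simp only [Function.comp_apply, Vm, σ₂]
    exact Prod.ext (by ring) (Prod.ext (by ring) (by ring))
  · right; right; right
    funext p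
    simp only [Function.comp_apply, Vm, σ₃]
    exact Prod.ext (by ring) (Prod.ext (by ring) (by ring))

lemma conj_W12_mem {s : ℂ × ℂ × ℂ → ℂ × ℂ × ℂ} (hs : s ∈ SigmaSet) :
    W12 ∘ s ∘ W12 ∈ SigmaSet := by
  rcases hs with h | h | h | h <;> subst h <;>
    simp only [SigmaSet, Set.mem_insert_iff, Set.mem_singleton_iff]
  · left; funext p; rfl
  · right; right; left; funext p; rfl
  · right; left; funext p; rfl
  · right; right; right; funext p; rfl

lemma conj_W13_mem {s : ℂ × ℂ × ℂ → ℂ × ℂ × ℂ} (hs : s ∈ SigmaSet) :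
    W13 ∘ s ∘ W13 ∈ SigmaSet := by
  rcases hs with h | h | h | h <;> subst h <;>
    simp only [SigmaSet, Set.mem_insert_iff, Set.mem_singleton_iff]
  · left; funext p; rfl
  · right; right; right; funext p; rfl
  · right; right; left; funext p; rfl
  · right; left; funext p; rfl

lemma key_trans {F F' W : ℂ × ℂ × ℂ → ℂ × ℂ × ℂ} (hW : W ∘ W = id)
    (hconj : ∀ s ∈ SigmaSet, W ∘ s ∘ W ∈ SigmaSet) (hFF' : F = W ∘ F')
    (hk : KeyFun F') : KeyFun F := by
  intro s0 hs0
  obtain ⟨s', hs', h⟩ := hk s0 hs0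
  refine ⟨W ∘ s' ∘ W, hconj s' hs', ?_⟩
  funext p
  have hWW : ∀ x, W (W x) = x := fun x => congrFun hW x
  have h1 : F' (s0 p) = s' (F' p) := congrFun h p
  simp only [Function.comp, hFF', h1, hWW]

lemma surj_trans {F F' W : ℂ × ℂ × ℂ → ℂ × ℂ × ℂ} (hW : W ∘ W = id)
    (hFF' : F = W ∘ F') (hs : Function.Surjective F) : Function.Surjective F' := by
  have hWW : ∀ x, W (W x) = x := fun x => congrFun hW x
  intro t
  obtain ⟨p, hp⟩ := hs (W t)
  rw [hFF'] at hp
  have h2 := congrArg W hp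
  simp only [Function.comp_apply] at h2
  rw [hWW, hWW] at h2
  exact ⟨p, h2⟩

lemma cubic_coeffs {α β γ δ : ℂ} (h : ∀ s : ℂ, α + β * s + γ * s ^ 2 + δ * s ^ 3 = 0) :
    α = 0 ∧ β = 0 ∧ γ = 0 ∧ δ = 0 := by
  have h0 := h 0
  have h1 := h 1
  have h2 := h (-1)
  have h3 := h 2
  refine ⟨by linear_combination h0,
    by linear_combination (-1/2) * h0 + h1 - (1/3) * h2 - (1/6) * h3,
    by linear_combination (-1) * h0 + (1/2) * h1 + (1/2) * h2,
    by linear_combination (1/2) * h0 - (1/2) * h1 - (1/6) * h2 + (1/6) * h3⟩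

lemma exists_ne3 (a b c : ℂ) : ∃ t : ℂ, t ≠ a ∧ t ≠ b ∧ t ≠ c := by
  obtain ⟨t, ht⟩ := Infinite.exists_notMem_finset ({a, b, c} : Finset ℂ)
  simp only [Finset.mem_insert, Finset.mem_singleton] at ht
  push_neg at ht
  exact ⟨t, ht⟩

lemma lin_ne {α1 α2 : ℂ} (hn : ¬(α1 = 0 ∧ α2 = 0)) {t : ℂ} (ht : t ≠ -(α2 / α1)) :
    α1 * t + α2 ≠ 0 := by
  intro heq
  by_cases hα : α1 = 0
  · subst hα
    simp at heq
    exact hn ⟨rfl, heq⟩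
  · apply ht
    have h2 : α2 = -(α1 * t) := by linear_combination heq
    rw [h2, neg_div, neg_neg, mul_comm, mul_div_assoc, div_self hα, mul_one]

lemma tripleLinZero {a1 a2 b1 b2 c1 c2 : ℂ}
    (h : ∀ y z : ℂ, (a1 * y + a2 * z) * (b1 * y + b2 * z) * (c1 * y + c2 * z) = 0) :
    (a1 = 0 ∧ a2 = 0) ∨ (b1 = 0 ∧ b2 = 0) ∨ (c1 = 0 ∧ c2 = 0) := by
  by_contra hcon
  push_neg at hcon
  obtain ⟨ha, hb, hc⟩ : ¬(a1 = 0 ∧ a2 = 0) ∧ ¬(b1 = 0 ∧ b2 = 0) ∧ ¬(c1 = 0 ∧ c2 = 0) := by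
    tauto
  obtain ⟨t, ht1, ht2, ht3⟩ := exists_ne3 (-(a2 / a1)) (-(b2 / b1)) (-(c2 / c1))
  have := h t 1
  simp only [mul_one] at this
  exact (mul_ne_zero (mul_ne_zero (lin_ne ha ht1) (lin_ne hb ht2)) (lin_ne hc ht3)) this



lemma vec3_eta (v : Fin 3 → ℂ) : (![v 0, v 1, v 2] : Fin 3 → ℂ) = v := by
  funext m; fin_cases m <;> rfl

lemma ident_eval {P Q R : MvPolynomial (Fin 3) ℂ} (h : Ident P Q R) (v : Fin 3 → ℂ) :
    (eval v P) ^ 2 + (eval v Q) ^ 2 + (eval v R) ^ 2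
      - 2 * (eval v P * eval v Q * eval v R)
      = v 0 ^ 2 + v 1 ^ 2 + v 2 ^ 2 - 2 * (v 0 * v 1 * v 2) := by
  have h2 := congrArg (eval v) h
  simp only [map_add, map_sub, map_mul, map_pow, eval_C, eval_J] at h2
  linear_combination h2

lemma deg_pos_of_surj {P Q R : MvPolynomial (Fin 3) ℂ}
    (hs : Function.Surjective (Fmap P Q R)) :
    1 ≤ P.totalDegree ∧ 1 ≤ Q.totalDegree ∧ 1 ≤ R.totalDegree := by
  refine ⟨?_, ?_, ?_⟩
  · by_contra hc
    have h0 : P.totalDegree = 0 := by omega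
    obtain ⟨p, hp⟩ := hs (coeff 0 P + 1, 0, 0)
    have h1 := congrArg Prod.fst hp
    simp only [Fmap] at h1
    rw [eval_const_of_deg0 h0] at h1
    simp at h1
  · by_contra hc
    have h0 : Q.totalDegree = 0 := by omega
    obtain ⟨p, hp⟩ := hs (0, coeff 0 Q + 1, 0)
    have h1 := congrArg (fun t => t.2.1) hp
    simp only [Fmap] at h1
    rw [eval_const_of_deg0 h0] at h1
    simp at h1
  · by_contra hc
    have h0 : R.totalDegree = 0 := by omega
    obtain ⟨p, hp⟩ := hs (0, 0, coeff 0 R + 1)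
    have h1 := congrArg (fun t => t.2.2) hp
    simp only [Fmap] at h1
    rw [eval_const_of_deg0 h0] at h1
    simp at h1

lemma prod_sign_perm {i j k : Fin 3} (hij : i ≠ j) (hik : i ≠ k) (hjk : j ≠ k)
    (ε : Fin 3 → ℂ) : ε i * ε j * ε k = ε 0 * ε 1 * ε 2 := by
  fin_cases i <;> fin_cases j <;> fin_cases k <;>
    simp only [Fin.isValue, show (⟨0, by omega⟩ : Fin 3) = 0 from rfl,
      show (⟨1, by omega⟩ : Fin 3) = 1 from rfl,
      show (⟨2, by omega⟩ : Fin 3) = 2 from rfl] <;>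
    first
      | exact absurd rfl hij
      | exact absurd rfl hik
      | exact absurd rfl hjk
      | ring

lemma sum_sq_perm {i j k : Fin 3} (hij : i ≠ j) (hik : i ≠ k) (hjk : j ≠ k)
    (v : Fin 3 → ℂ) : v 0 ^ 2 + v 1 ^ 2 + v 2 ^ 2 = v i ^ 2 + v j ^ 2 + v k ^ 2 := by
  fin_cases i <;> fin_cases j <;> fin_cases k <;>
    simp only [Fin.isValue, show (⟨0, by omega⟩ : Fin 3) = 0 from rfl,
      show (⟨1, by omega⟩ : Fin 3) = 1 from rfl,
      show (⟨2, by omega⟩ : Fin 3) = 2 from rfl] <;>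
    first
      | exact absurd rfl hij
      | exact absurd rfl hik
      | exact absurd rfl hjk
      | ring

lemma prod_perm {i j k : Fin 3} (hij : i ≠ j) (hik : i ≠ k) (hjk : j ≠ k)
    (v : Fin 3 → ℂ) : v 0 * v 1 * v 2 = v i * v j * v k := by
  fin_cases i <;> fin_cases j <;> fin_cases k <;>
    simp only [Fin.isValue, show (⟨0, by omega⟩ : Fin 3) = 0 from rfl,
      show (⟨1, by omega⟩ : Fin 3) = 1 from rfl,
      show (⟨2, by omega⟩ : Fin 3) = 2 from rfl] <;>
    first
      | exact absurd rfl hij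
      | exact absurd rfl hik
      | exact absurd rfl hjk
      | ring

lemma core_sign {P Q R : MvPolynomial (Fin 3) ℂ} {i j k : Fin 3}
    (hij : i ≠ j) (hik : i ≠ k) (hjk : j ≠ k) {α β γ : ℂ}
    (hP : ∀ v : Fin 3 → ℂ, eval v P = α * v i)
    (hQ : ∀ v : Fin 3 → ℂ, eval v Q = β * v j)
    (hR : ∀ v : Fin 3 → ℂ, eval v R = γ * v k)
    (ε : Fin 3 → ℂ) (hε : ∀ m, ε m = 1 ∨ ε m = -1) (hεp : ε 0 * ε 1 * ε 2 = 1)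
    (s0 : ℂ × ℂ × ℂ → ℂ × ℂ × ℂ)
    (hs0 : ∀ p : ℂ × ℂ × ℂ,
      (![(s0 p).1, (s0 p).2.1, (s0 p).2.2] : Fin 3 → ℂ)
        = fun m => ε m * (![p.1, p.2.1, p.2.2] : Fin 3 → ℂ) m) :
    ∃ s' ∈ SigmaSet, Fmap P Q R ∘ s0 = s' ∘ Fmap P Q R := by
  refine ⟨sgn (ε i) (ε j) (ε k), sgn_mem (hε i) (hε j) (hε k)
    (by rw [prod_sign_perm hij hik hjk ε]; exact hεp), ?_⟩
  funext p
  have hv := hs0 p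
  simp only [Function.comp_apply, Fmap, hv, hP, hQ, hR, sgn]
  exact Prod.ext (by ring) (Prod.ext (by ring) (by ring))

lemma base_core {P Q R : MvPolynomial (Fin 3) ℂ} (i j k : Fin 3)
    (hij : i ≠ j) (hik : i ≠ k) (hjk : j ≠ k) (α β γ p0 q0 r0 : ℂ)
    (hP : ∀ v : Fin 3 → ℂ, eval v P = p0 + α * v i)
    (hQ : ∀ v : Fin 3 → ℂ, eval v Q = q0 + β * v j)
    (hR : ∀ v : Fin 3 → ℂ, eval v R = r0 + γ * v k)
    (hid : Ident P Q R) : KeyFun (Fmap P Q R) := by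
  -- scalar form of the identity
  have hS : ∀ x y z : ℂ,
      (p0 + α * x) ^ 2 + (q0 + β * y) ^ 2 + (r0 + γ * z) ^ 2
        - 2 * ((p0 + α * x) * (q0 + β * y) * (r0 + γ * z))
        = x ^ 2 + y ^ 2 + z ^ 2 - 2 * (x * y * z) := by
    intro x y z
    set w : Fin 3 → ℂ := fun m => if m = i then x else if m = j then y else z with hw
    have hwi : w i = x := by simp [hw]
    have hwj : w j = y := by
      simp only [hw]
      rw [if_neg (Ne.symm hij)]
      simp
    have hwk : w k = z := by
      simp only [hw]
      rw [if_neg (Ne.symm hik), if_neg (Ne.symm hjk)]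
    have h := ident_eval hid w
    rw [hP w, hQ w, hR w, hwi, hwj, hwk, sum_sq_perm hij hik hjk w,
        prod_perm hij hik hjk w, hwi, hwj, hwk] at h
    linear_combination h
  -- scalar consequences
  have hα2 : α ^ 2 = 1 := by
    linear_combination (1/2) * hS 1 0 0 + (1/2) * hS (-1) 0 0 - hS 0 0 0
  have hβ2 : β ^ 2 = 1 := by
    linear_combination (1/2) * hS 0 1 0 + (1/2) * hS 0 (-1) 0 - hS 0 0 0
  have hγ2 : γ ^ 2 = 1 := by
    linear_combination (1/2) * hS 0 0 1 + (1/2) * hS 0 0 (-1) - hS 0 0 0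
  have hαne : α ≠ 0 := fun h => by rw [h] at hα2; norm_num at hα2
  have hβne : β ≠ 0 := fun h => by rw [h] at hβ2; norm_num at hβ2
  have hγne : γ ≠ 0 := fun h => by rw [h] at hγ2; norm_num at hγ2
  have hr0 : r0 = 0 := by
    have h := hS 1 1 0
    have h1 := hS 1 0 0
    have h2 := hS 0 1 0
    have h3 := hS 0 0 0
    have hab : α * β * r0 = 0 := by linear_combination (-1/2) * h + (1/2) * h1 + (1/2) * h2 - (1/2) * h3
    rcases mul_eq_zero.1 hab with h' | h'
    · rcases mul_eq_zero.1 h' with h'' | h''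
      · exact absurd h'' hαne
      · exact absurd h'' hβne
    · exact h'
  have hq0 : q0 = 0 := by
    have h := hS 1 0 1
    have h1 := hS 1 0 0
    have h2 := hS 0 0 1
    have h3 := hS 0 0 0
    have hab : α * γ * q0 = 0 := by linear_combination (-1/2) * h + (1/2) * h1 + (1/2) * h2 - (1/2) * h3
    rcases mul_eq_zero.1 hab with h' | h'
    · rcases mul_eq_zero.1 h' with h'' | h''
      · exact absurd h'' hαne
      · exact absurd h'' hγne
    · exact h'
  have hp0 : p0 = 0 := by
    have h := hS 0 1 1
    have h1 := hS 0 1 0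
    have h2 := hS 0 0 1
    have h3 := hS 0 0 0
    have hab : β * γ * p0 = 0 := by linear_combination (-1/2) * h + (1/2) * h1 + (1/2) * h2 - (1/2) * h3
    rcases mul_eq_zero.1 hab with h' | h'
    · rcases mul_eq_zero.1 h' with h'' | h''
      · exact absurd h'' hβne
      · exact absurd h'' hγne
    · exact h'
  have hP' : ∀ v : Fin 3 → ℂ, eval v P = α * v i := by
    intro v; rw [hP v, hp0]; ring
  have hQ' : ∀ v : Fin 3 → ℂ, eval v Q = β * v j := by
    intro v; rw [hQ v, hq0]; ring
  have hR' : ∀ v : Fin 3 → ℂ, eval v R = γ * v k := by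
    intro v; rw [hR v, hr0]; ring
  intro s0 hs0
  rcases hs0 with h | h | h
  · subst h
    refine core_sign hij hik hjk hP' hQ' hR' ![1, -1, -1]
      (fun m => by fin_cases m <;> norm_num) (by norm_num [Matrix.cons_val_two]) σ₁ ?_
    intro p
    funext m
    fin_cases m <;> simp [σ₁] <;> ring
  · subst h
    refine core_sign hij hik hjk hP' hQ' hR' ![-1, 1, -1]
      (fun m => by fin_cases m <;> norm_num) (by norm_num [Matrix.cons_val_two]) σ₂ ?_
    intro p
    funext m
    fin_cases m <;> simp [σ₂] <;> ring
  · subst h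
    refine core_sign hij hik hjk hP' hQ' hR' ![-1, -1, 1]
      (fun m => by fin_cases m <;> norm_num) (by norm_num [Matrix.cons_val_two]) σ₃ ?_
    intro p
    funext m
    fin_cases m <;> simp [σ₃] <;> ring

lemma base_case {P Q R : MvPolynomial (Fin 3) ℂ} (hid : Ident P Q R)
    (hdP : P.totalDegree ≤ 1) (hdQ : Q.totalDegree ≤ 1) (hdR : R.totalDegree ≤ 1) :
    KeyFun (Fmap P Q R) := by
  obtain ⟨p0, a0, a1, a2, hPa⟩ :
      ∃ c d e f : ℂ, ∀ v : Fin 3 → ℂ, eval v P = c + d * v 0 + e * v 1 + f * v 2 :=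
    ⟨_, _, _, _, fun v => eval_affine hdP v⟩
  obtain ⟨q0, b0, b1, b2, hQa⟩ :
      ∃ c d e f : ℂ, ∀ v : Fin 3 → ℂ, eval v Q = c + d * v 0 + e * v 1 + f * v 2 :=
    ⟨_, _, _, _, fun v => eval_affine hdQ v⟩
  obtain ⟨r0, c0, c1, c2, hRa⟩ :
      ∃ c d e f : ℂ, ∀ v : Fin 3 → ℂ, eval v R = c + d * v 0 + e * v 1 + f * v 2 :=
    ⟨_, _, _, _, fun v => eval_affine hdR v⟩
  have hEv : ∀ x y z : ℂ,
      (p0 + a0*x + a1*y + a2*z)^2 + (q0 + b0*x + b1*y + b2*z)^2 + (r0 + c0*x + c1*y + c2*z)^2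
        - 2*((p0 + a0*x + a1*y + a2*z) * (q0 + b0*x + b1*y + b2*z) * (r0 + c0*x + c1*y + c2*z))
        = x^2 + y^2 + z^2 - 2*(x*y*z) := by
    intro x y z
    have h := ident_eval hid ![x, y, z]
    rw [hPa, hQa, hRa] at h
    exact h
  have hE : ∀ x y z : ℂ,
      (a0*x + a1*y + a2*z) * (b0*x + b1*y + b2*z) * (c0*x + c1*y + c2*z) = x*y*z := by
    intro x y z
    obtain ⟨h_, hβ, hγ, hδ⟩ := cubic_coeffs
      (α := p0^2 + q0^2 + r0^2 - 2*(p0*q0*r0))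
      (β := 2*(p0*(a0*x+a1*y+a2*z) + q0*(b0*x+b1*y+b2*z) + r0*(c0*x+c1*y+c2*z))
        - 2*(p0*q0*(c0*x+c1*y+c2*z) + p0*r0*(b0*x+b1*y+b2*z) + q0*r0*(a0*x+a1*y+a2*z)))
      (γ := (a0*x+a1*y+a2*z)^2 + (b0*x+b1*y+b2*z)^2 + (c0*x+c1*y+c2*z)^2
        - 2*(p0*(b0*x+b1*y+b2*z)*(c0*x+c1*y+c2*z) + q0*(a0*x+a1*y+a2*z)*(c0*x+c1*y+c2*z)
          + r0*(a0*x+a1*y+a2*z)*(b0*x+b1*y+b2*z)) - (x^2+y^2+z^2))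
      (δ := -2*((a0*x+a1*y+a2*z)*(b0*x+b1*y+b2*z)*(c0*x+c1*y+c2*z) - x*y*z))
      (fun s => by linear_combination hEv (s*x) (s*y) (s*z))
    linear_combination (-1/2) * hδ
  have hane : ¬(a0 = 0 ∧ a1 = 0 ∧ a2 = 0) := by
    rintro ⟨u0, u1, u2⟩
    have h := hE 1 1 1
    rw [u0, u1, u2] at h
    norm_num at h
  have hbne : ¬(b0 = 0 ∧ b1 = 0 ∧ b2 = 0) := by
    rintro ⟨u0, u1, u2⟩
    have h := hE 1 1 1
    rw [u0, u1, u2] at h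
    norm_num at h
  have hcne : ¬(c0 = 0 ∧ c1 = 0 ∧ c2 = 0) := by
    rintro ⟨u0, u1, u2⟩
    have h := hE 1 1 1
    rw [u0, u1, u2] at h
    norm_num at h
  have h0 := tripleLinZero (a1 := a1) (a2 := a2) (b1 := b1) (b2 := b2) (c1 := c1) (c2 := c2)
    (fun y z => by linear_combination hE 0 y z)
  have h1 := tripleLinZero (a1 := a0) (a2 := a2) (b1 := b0) (b2 := b2) (c1 := c0) (c2 := c2)
    (fun x z => by linear_combination hE x 0 z)
  have h2 := tripleLinZero (a1 := a0) (a2 := a1) (b1 := b0) (b2 := b1) (c1 := c0) (c2 := c1)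
    (fun x y => by linear_combination hE x y 0)
  rcases h0 with ⟨h01, h02⟩ | ⟨h01, h02⟩ | ⟨h01, h02⟩ <;>
    rcases h1 with ⟨h11, h12⟩ | ⟨h11, h12⟩ | ⟨h11, h12⟩ <;>
    rcases h2 with ⟨h21, h22⟩ | ⟨h21, h22⟩ | ⟨h21, h22⟩ <;>
    first
      | exact absurd ⟨‹a0 = 0›, ‹a1 = 0›, ‹a2 = 0›⟩ hane
      | exact absurd ⟨‹b0 = 0›, ‹b1 = 0›, ‹b2 = 0›⟩ hbne
      | exact absurd ⟨‹c0 = 0›, ‹c1 = 0›, ‹c2 = 0›⟩ hcne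
      | skip
  -- six remaining permutation cases
  · exact base_core 0 1 2 (by decide) (by decide) (by decide) a0 b1 c2 p0 q0 r0
      (fun v => by rw [hPa v, h01, h02]; ring) (fun v => by rw [hQa v, h11, h12]; ring)
      (fun v => by rw [hRa v, h21, h22]; ring) hid
  · exact base_core 0 2 1 (by decide) (by decide) (by decide) a0 b2 c1 p0 q0 r0
      (fun v => by rw [hPa v, h01, h02]; ring) (fun v => by rw [hQa v, h21, h22]; ring)
      (fun v => by rw [hRa v, h11, h12]; ring) hid
  · exact base_core 1 0 2 (by decide) (by decide) (by decide) a1 b0 c2 p0 q0 r0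
      (fun v => by rw [hPa v, h11, h12]; ring) (fun v => by rw [hQa v, h01, h02]; ring)
      (fun v => by rw [hRa v, h21, h22]; ring) hid
  · exact base_core 2 0 1 (by decide) (by decide) (by decide) a2 b0 c1 p0 q0 r0
      (fun v => by rw [hPa v, h21, h22]; ring) (fun v => by rw [hQa v, h01, h02]; ring)
      (fun v => by rw [hRa v, h11, h12]; ring) hid
  · exact base_core 1 2 0 (by decide) (by decide) (by decide) a1 b2 c0 p0 q0 r0
      (fun v => by rw [hPa v, h11, h12]; ring) (fun v => by rw [hQa v, h21, h22]; ring)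
      (fun v => by rw [hRa v, h01, h02]; ring) hid
  · exact base_core 2 1 0 (by decide) (by decide) (by decide) a2 b1 c0 p0 q0 r0
      (fun v => by rw [hPa v, h21, h22]; ring) (fun v => by rw [hQa v, h11, h12]; ring)
      (fun v => by rw [hRa v, h01, h02]; ring) hid

lemma hcomp_sq {f : MvPolynomial (Fin 3) ℂ} {a : ℕ} (hf : f.totalDegree ≤ a) :
    homogeneousComponent (a + a) (f ^ 2) =
      homogeneousComponent a f * homogeneousComponent a f := by
  rw [pow_two]
  exact hcomp_mul hf hf

lemma hcomp_sq_zero {f : MvPolynomial (Fin 3) ℂ} {N : ℕ}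
    (h : 2 * f.totalDegree < N) : homogeneousComponent N (f ^ 2) = 0 := by
  apply homogeneousComponent_eq_zero
  calc (f ^ 2).totalDegree ≤ 2 * f.totalDegree := totalDegree_pow f 2
    _ < N := h

lemma hcomp_triple {P Q R : MvPolynomial (Fin 3) ℂ} {a b c : ℕ}
    (ha : P.totalDegree ≤ a) (hb : Q.totalDegree ≤ b) (hc : R.totalDegree ≤ c) :
    homogeneousComponent (a + b + c) (C 2 * (P * Q * R)) =
      C 2 * (homogeneousComponent a P * homogeneousComponent b Q
        * homogeneousComponent c R) := by
  have h1 : (P * Q).totalDegree ≤ a + b :=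
    le_trans (totalDegree_mul P Q) (by omega)
  have h2 : (P * Q * R).totalDegree ≤ a + b + c :=
    le_trans (totalDegree_mul _ R) (by omega)
  have h3 : (C 2 : MvPolynomial (Fin 3) ℂ).totalDegree ≤ 0 := by
    rw [totalDegree_C]
  have e1 : homogeneousComponent (0 + (a + b + c)) (C 2 * (P * Q * R)) =
      homogeneousComponent 0 (C 2) * homogeneousComponent (a + b + c) (P * Q * R) :=
    hcomp_mul h3 h2
  rw [zero_add] at e1
  rw [e1, homogeneousComponent_zero]
  have e2 : homogeneousComponent ((a + b) + c) (P * Q * R) =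
      homogeneousComponent (a + b) (P * Q) * homogeneousComponent c R :=
    hcomp_mul h1 hc
  have e3 : homogeneousComponent (a + b) (P * Q) =
      homogeneousComponent a P * homogeneousComponent b Q := hcomp_mul ha hb
  rw [show a + b + c = (a + b) + c from rfl, e2, e3]
  congr 1
  simp

lemma hcomp_triple_zero {P Q R : MvPolynomial (Fin 3) ℂ} {N : ℕ}
    (h : P.totalDegree + Q.totalDegree + R.totalDegree < N) :
    homogeneousComponent N (C 2 * (P * Q * R)) = 0 := by
  apply homogeneousComponent_eq_zero
  calc (C 2 * (P * Q * R)).totalDegree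
      ≤ (C (2:ℂ) : MvPolynomial (Fin 3) ℂ).totalDegree + (P * Q * R).totalDegree :=
        totalDegree_mul _ _
    _ ≤ 0 + (P.totalDegree + Q.totalDegree + R.totalDegree) := by
        have := totalDegree_mul (P * Q) R
        have := totalDegree_mul P Q
        rw [totalDegree_C]
        omega
    _ < N := by omega

lemma descent_step (n : ℕ)
    (IH : ∀ m, m < n → ∀ P Q R : MvPolynomial (Fin 3) ℂ,
      P.totalDegree + Q.totalDegree + R.totalDegree ≤ m → Ident P Q R →
      Function.Surjective (Fmap P Q R) → KeyFun (Fmap P Q R))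
    (P Q R : MvPolynomial (Fin 3) ℂ)
    (hsum : P.totalDegree + Q.totalDegree + R.totalDegree ≤ n)
    (hs3 : 3 < P.totalDegree + Q.totalDegree + R.totalDegree)
    (h1 : Q.totalDegree ≤ P.totalDegree) (h2 : R.totalDegree ≤ P.totalDegree)
    (hQ1 : 1 ≤ Q.totalDegree) (hR1 : 1 ≤ R.totalDegree)
    (hid : Ident P Q R) (hsurj : Function.Surjective (Fmap P Q R)) :
    KeyFun (Fmap P Q R) := by
  set a := P.totalDegree with ha
  set b := Q.totalDegree with hb
  set c := R.totalDegree with hc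
  have hP1 : 1 ≤ a := le_trans hQ1 h1
  have hPne : P ≠ 0 := by
    intro h
    rw [h, totalDegree_zero] at ha
    omega
  have hQne : Q ≠ 0 := by
    intro h
    rw [h, totalDegree_zero] at hb
    omega
  have hRne : R ≠ 0 := by
    intro h
    rw [h, totalDegree_zero] at hc
    omega
  have hPh := hcomp_top_ne_zero hPne
  have hQh := hcomp_top_ne_zero hQne
  have hRh := hcomp_top_ne_zero hRne
  -- step A : a ≤ b + c
  have hA : a ≤ b + c := by
    by_contra hgt
    push_neg at hgt
    have hid2 := congrArg (homogeneousComponent (a + a)) hid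
    rw [map_sub, map_add, map_add, hcomp_sq (le_of_eq ha.symm),
        hcomp_sq_zero (by omega), hcomp_sq_zero (by omega),
        hcomp_triple_zero (by omega), hcomp_J_eq_zero (by omega)] at hid2
    simp only [add_zero, sub_zero] at hid2
    exact (mul_ne_zero hPh hPh) hid2
  -- step B : b + c ≤ a
  have hB : b + c ≤ a := by
    by_contra hgt
    push_neg at hgt
    have hid2 := congrArg (homogeneousComponent (a + b + c)) hid
    rw [map_sub, map_add, map_add, hcomp_sq_zero (by omega), hcomp_sq_zero (by omega),
        hcomp_sq_zero (by omega), hcomp_triple (le_of_eq ha.symm) (le_of_eq hb.symm)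
          (le_of_eq hc.symm), hcomp_J_eq_zero (by omega)] at hid2
    simp only [zero_add, zero_sub, neg_eq_zero] at hid2
    rcases mul_eq_zero.1 hid2 with h' | h'
    · have h2 : (2 : ℂ) = 0 := MvPolynomial.C_eq_zero.1 h'
      norm_num at h2
    · rcases mul_eq_zero.1 h' with h'' | h''
      · rcases mul_eq_zero.1 h'' with h3 | h3
        · exact hPh h3
        · exact hQh h3
      · exact hRh h''
  have hab : a = b + c := le_antisymm hA hB
  have ha2 : 2 ≤ a := by omega
  -- top-degree identity at degree 2a
  have hid2 := congrArg (homogeneousComponent (a + a)) hid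
  have htr : homogeneousComponent (a + a) (C 2 * (P * Q * R)) =
      C 2 * (homogeneousComponent a P * homogeneousComponent b Q
        * homogeneousComponent c R) := by
    have := hcomp_triple (P := P) (Q := Q) (R := R)
      (le_of_eq ha.symm) (le_of_eq hb.symm) (le_of_eq hc.symm)
    rw [show a + b + c = a + a by omega] at this
    exact this
  rw [map_sub, map_add, map_add, hcomp_sq (le_of_eq ha.symm),
      hcomp_sq_zero (by omega), hcomp_sq_zero (by omega), htr,
      hcomp_J_eq_zero (by omega)] at hid2
  have hfac : homogeneousComponent a P *
      (homogeneousComponent a P - C 2 * (homogeneousComponent b Q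
        * homogeneousComponent c R)) = 0 := by
    linear_combination hid2
  have hPh_eq : homogeneousComponent a P =
      C 2 * (homogeneousComponent b Q * homogeneousComponent c R) := by
    rcases mul_eq_zero.1 hfac with h' | h'
    · exact absurd h' hPh
    · linear_combination h'
  -- Vieta descent
  set P' := C 2 * (Q * R) - P with hP'
  have hPP : P = C 2 * (Q * R) - P' := by rw [hP']; ring
  have hid' : Ident P' Q R := by
    unfold Ident at hid ⊢
    rw [hP']
    linear_combination hid
  have hd'le : P'.totalDegree ≤ a := by
    rw [hP', sub_eq_add_neg]
    refine le_trans (totalDegree_add _ _) (sup_le ?_ ?_)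
    · refine le_trans (totalDegree_mul _ _) ?_
      have := totalDegree_mul Q R
      rw [totalDegree_C]
      omega
    · rw [totalDegree_neg]
  have hd'comp : homogeneousComponent a P' = 0 := by
    rw [hP', map_sub]
    have e1 : homogeneousComponent a (C 2 * (Q * R)) =
        C 2 * (homogeneousComponent b Q * homogeneousComponent c R) := by
      have h3 : (C 2 : MvPolynomial (Fin 3) ℂ).totalDegree ≤ 0 := by rw [totalDegree_C]
      have hqr : (Q * R).totalDegree ≤ b + c := totalDegree_mul Q R
      have e2 := hcomp_mul (f := (C 2 : MvPolynomial (Fin 3) ℂ)) (g := Q * R) h3 hqr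
      rw [zero_add] at e2
      have e3 := hcomp_mul (f := Q) (g := R) (le_of_eq hb.symm) (le_of_eq hc.symm)
      rw [show a = b + c from hab, e2, e3, homogeneousComponent_zero]
      congr 1
      simp
    rw [e1, hPh_eq]
    ring
  have hd' : P'.totalDegree ≤ a - 1 := totalDegree_drop hP1 hd'le hd'comp
  have hFF' : Fmap P Q R = Vm ∘ Fmap P' Q R := by
    funext p
    simp only [Function.comp_apply, Fmap, Vm]
    refine Prod.ext ?_ (Prod.ext rfl rfl)
    show eval _ P = _
    rw [hPP]
    simp only [map_sub, map_mul, eval_C]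
    ring
  have hsurj' : Function.Surjective (Fmap P' Q R) := surj_trans Vm_invol hFF' hsurj
  refine key_trans Vm_invol (fun s hs => conj_Vm_mem hs) hFF' ?_
  exact IH (n - 1) (by omega) P' Q R (by omega) hid' hsurj'

lemma key_of_ident : ∀ (n : ℕ) (P Q R : MvPolynomial (Fin 3) ℂ),
    P.totalDegree + Q.totalDegree + R.totalDegree ≤ n →
    Ident P Q R → Function.Surjective (Fmap P Q R) → KeyFun (Fmap P Q R) := by
  intro n
  induction n using Nat.strong_induction_on with
  | _ n IH =>
  intro P Q R hsum hid hsurj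
  obtain ⟨hP1, hQ1, hR1⟩ := deg_pos_of_surj hsurj
  by_cases hs3 : P.totalDegree + Q.totalDegree + R.totalDegree ≤ 3
  · exact base_case hid (by omega) (by omega) (by omega)
  · push_neg at hs3
    have trich : (Q.totalDegree ≤ P.totalDegree ∧ R.totalDegree ≤ P.totalDegree) ∨
        (P.totalDegree ≤ Q.totalDegree ∧ R.totalDegree ≤ Q.totalDegree) ∨
        (P.totalDegree ≤ R.totalDegree ∧ Q.totalDegree ≤ R.totalDegree) := by omega
    rcases trich with ⟨h1, h2⟩ | ⟨h1, h2⟩ | ⟨h1, h2⟩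
    · exact descent_step n IH P Q R hsum hs3 h1 h2 hQ1 hR1 hid hsurj
    · have hFF' : Fmap P Q R = W12 ∘ Fmap Q P R := by
        funext p
        rfl
      have hsurj' : Function.Surjective (Fmap Q P R) := surj_trans W12_invol hFF' hsurj
      have hid' : Ident Q P R := by
        unfold Ident at hid ⊢
        linear_combination hid
      refine key_trans W12_invol (fun s hs => conj_W12_mem hs) hFF' ?_
      exact descent_step n IH Q P R (by omega) (by omega) h1 h2 hP1 hR1 hid' hsurj'
    · have hFF' : Fmap P Q R = W13 ∘ Fmap R Q P := by
        funext p
        rfl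
      have hsurj' : Function.Surjective (Fmap R Q P) := surj_trans W13_invol hFF' hsurj
      have hid' : Ident R Q P := by
        unfold Ident at hid ⊢
        linear_combination hid
      refine key_trans W13_invol (fun s hs => conj_W13_mem hs) hFF' ?_
      exact descent_step n IH R Q P (by omega) (by omega) h2 h1 hQ1 hP1 hid' hsurj'

end FVaux

/-- If `F` is a bijective polynomial map preserving the Fricke–Vogt invariant,
with inverse `G`, then conjugation by `F` maps `Σ = {id, σ₁, σ₂, σ₃}` into
itself; i.e. `Σ` is a normal subgroup of the group `𝒜` of invariant-preserving
polynomial maps. -/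
theorem sigmaSet_normal
    (F G : ℂ × ℂ × ℂ → ℂ × ℂ × ℂ) (hF : IsPolyMap F) (hI : PreservesFV F)
    (hFG : F ∘ G = id) (hGF : G ∘ F = id) :
    ∀ σ ∈ SigmaSet, F ∘ σ ∘ G ∈ SigmaSet := by
  obtain ⟨P, Q, R, hPQR⟩ := hF
  have hFeq : F = FVaux.Fmap P Q R := by
    funext p
    exact hPQR p.1 p.2.1 p.2.2
  have hFG' : ∀ x, F (G x) = x := fun x => congrFun hFG x
  have hsurjF : Function.Surjective F := fun t => ⟨G t, hFG' t⟩
  have hid : FVaux.Ident P Q R := by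
    apply MvPolynomial.funext
    intro v
    have h1 := hI (v 0, v 1, v 2)
    rw [hFeq] at h1
    simp only [FVaux.Fmap, fvInv] at h1
    rw [FVaux.vec3_eta v] at h1
    simp only [FVaux.Ident, map_add, map_sub, map_mul, map_pow, eval_C, FVaux.eval_J]
    linear_combination h1
  have hkey : FVaux.KeyFun (FVaux.Fmap P Q R) :=
    FVaux.key_of_ident (P.totalDegree + Q.totalDegree + R.totalDegree) P Q R le_rfl hid
      (hFeq ▸ hsurjF)
  intro σ hσ
  have solve : ∀ s0, s0 ∈ ({σ₁, σ₂, σ₃} : Set (ℂ × ℂ × ℂ → ℂ × ℂ × ℂ)) →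
      F ∘ s0 ∘ G ∈ SigmaSet := by
    intro s0 hs0
    obtain ⟨s', hs', hcomm⟩ := hkey s0 hs0
    have heq : F ∘ s0 ∘ G = s' := by
      funext x
      have h2 := congrFun hcomm (G x)
      rw [← hFeq] at h2
      simp only [Function.comp_apply] at h2 ⊢
      rw [h2, hFG' x]
    rw [heq]
    exact hs'
  rcases hσ with h | h | h | h
  · subst h
    have : F ∘ id ∘ G = id := by
      funext x
      simp [hFG' x]
    rw [this]
    exact Set.mem_insert _ _
  · subst h
    exact solve σ₁ (Set.mem_insert _ _)
  · subst h
    exact solve σ₂ (Set.mem_insert_iff.2 (Or.inr (Set.mem_insert _ _)))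
  · subst h
    exact solve σ₃ (Set.mem_insert_iff.2 (Or.inr (Set.mem_insert_iff.2 (Or.inr rfl))))
end

section
/- Theorem 1, case (2): If F ∈ PGL(2,ℤ) satisfies F² = 1 and F ≠ 1, then the centralizer of F in PGL(2,ℤ) is isomorphic to the Klein four group C₂ × C₂ (i.e. to ZMod 2 × ZMod 2). -/
set_option maxHeartbeats 1000000

open Matrix


lemma exists_round (p r : ℤ) (hr : r ≠ 0) : ∃ n : ℤ, 2 * |p + n * r| ≤ |r| := by
  obtain ⟨s, hs⟩ : ∃ s : ℤ, s * r = |r| := by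
    rcases abs_choice r with h | h
    · exact ⟨1, by omega⟩
    · exact ⟨-1, by omega⟩
  have hb : 0 < |r| := abs_pos.mpr hr
  have h1 : 0 ≤ p % |r| := Int.emod_nonneg p (by omega)
  have h2 : p % |r| < |r| := Int.emod_lt_of_pos p hb
  have h3 : p % |r| = p - |r| * (p / |r|) := Int.emod_def p |r|
  by_cases hc : 2 * (p % |r|) ≤ |r|
  · refine ⟨-(p / |r|) * s, ?_⟩
    have he : p + -(p / |r|) * s * r = p % |r| := by
      rw [h3, mul_assoc, hs]; ring
    rw [he, abs_of_nonneg h1]; exact hc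
  · refine ⟨(-(p / |r|) - 1) * s, ?_⟩
    have he : p + (-(p / |r|) - 1) * s * r = p % |r| - |r| := by
      rw [h3, mul_assoc, hs]; ring
    rw [he, abs_of_nonpos (by omega)]; omega

/-- key descent : existence of an "anticommuting vector". -/
lemma existsAnti (N : ℕ) : ∀ d p q r : ℤ, (d = 1 ∨ d = -1) → p^2 + q*r = -d →
    q.natAbs + r.natAbs ≤ N →
    ∃ x y z : ℤ, 2*p*x + r*y + q*z = 0 ∧ (x^2 + y*z = 1 ∨ x^2 + y*z = -1) := by
  induction N with
  | zero =>
    intro d p q r hd hpqr hN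
    have hq : q = 0 := by omega
    have hr : r = 0 := by omega
    exact ⟨0, 1, -1, by simp [hq, hr], Or.inr (by ring)⟩
  | succ N ih =>
    intro d p q r hd hpqr hN
    by_cases hq1 : q = 1 ∨ q = -1
    · exact ⟨q, 0, -2*p, by ring, Or.inl (by rcases hq1 with h | h <;> rw [h] <;> ring)⟩
    by_cases hr1 : r = 1 ∨ r = -1
    · exact ⟨-r, 2*p, 0, by ring, Or.inl (by rcases hr1 with h | h <;> rw [h] <;> ring)⟩
    by_cases hq0 : q = 0
    · subst hq0
      have hp : p^2 = 1 := by
        rcases hd with h | h <;> subst h <;> nlinarith [sq_nonneg p]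
      rcases Int.even_or_odd r with ⟨k, hk⟩ | ⟨k, hk⟩
      · subst hk
        exact ⟨-k*p, 1, -1-k^2, by linear_combination (-2*k)*hp, Or.inr (by linear_combination k^2*hp)⟩
      · subst hk
        exact ⟨-(2*k+1)*p, 2, -(2*k^2+2*k+1), by linear_combination (-2*(2*k+1))*hp,
          Or.inr (by linear_combination ((2*k+1)^2)*hp)⟩
    by_cases hr0 : r = 0
    · subst hr0
      have hp : p^2 = 1 := by
        rcases hd with h | h <;> subst h <;> nlinarith [sq_nonneg p]
      rcases Int.even_or_odd q with ⟨k, hk⟩ | ⟨k, hk⟩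
      · subst hk
        exact ⟨-k*p, -1-k^2, 1, by linear_combination (-2*k)*hp, Or.inr (by linear_combination k^2*hp)⟩
      · subst hk
        exact ⟨-(2*k+1)*p, -(2*k^2+2*k+1), 2, by linear_combination (-2*(2*k+1))*hp,
          Or.inr (by linear_combination ((2*k+1)^2)*hp)⟩
    have habs_q : 2 ≤ q.natAbs := by omega
    have habs_r : 2 ≤ r.natAbs := by omega
    by_cases hle : r.natAbs ≤ q.natAbs
    · obtain ⟨n, hn⟩ := exists_round p r hr0
      have hpqr' : (p + n*r)^2 + (q - 2*n*p - n^2*r)*r = -d := by linear_combination hpqr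
      have hlt : (q - 2*n*p - n^2*r).natAbs < r.natAbs := by
        by_contra hcon
        push_neg at hcon
        have c0 : (q - 2*n*p - n^2*r) * r = -(d + (p + n*r)^2) := by linear_combination hpqr'
        have c1 : |q - 2*n*p - n^2*r| * |r| = |d + (p + n*r)^2| := by
          rw [← abs_mul, c0, abs_neg]
        have c2 : |d + (p + n*r)^2| ≤ 1 + (p+n*r)^2 := by
          rcases hd with h | h <;> subst h <;> rw [abs_le] <;>
            constructor <;> nlinarith [sq_nonneg (p+n*r)]
        have c3 : (2:ℤ) ≤ |r| := by rw [Int.abs_eq_natAbs]; exact_mod_cast habs_r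
        have c4 : |r| ≤ |q - 2*n*p - n^2*r| := by
          rw [Int.abs_eq_natAbs, Int.abs_eq_natAbs]; exact_mod_cast hcon
        have e1 : |r| * |r| ≤ |q - 2*n*p - n^2*r| * |r| :=
          mul_le_mul_of_nonneg_right c4 (abs_nonneg r)
        have e2 : (2*|p+n*r|) * (2*|p+n*r|) ≤ |r| * |r| :=
          mul_le_mul hn hn (by positivity) (abs_nonneg r)
        have e3 : |p+n*r| * |p+n*r| = (p+n*r)^2 := by rw [← abs_mul, ← sq, abs_sq]
        have e4 : (4:ℤ) ≤ |r| * |r| := by nlinarith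
        nlinarith
      obtain ⟨x', y', z', he, hv⟩ := ih d (p + n*r) (q - 2*n*p - n^2*r) r hd hpqr' (by omega)
      refine ⟨x' - n*z', y' + 2*n*x' - n^2*z', z', by linear_combination he, ?_⟩
      rcases hv with h | h
      · exact Or.inl (by linear_combination h)
      · exact Or.inr (by linear_combination h)
    · obtain ⟨n, hn⟩ := exists_round p q hq0
      have hpqr' : (p + n*q)^2 + q*(r - 2*n*p - n^2*q) = -d := by linear_combination hpqr
      have hlt : (r - 2*n*p - n^2*q).natAbs < q.natAbs := by
        by_contra hcon
        push_neg at hcon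
        have c0 : (r - 2*n*p - n^2*q) * q = -(d + (p + n*q)^2) := by linear_combination hpqr'
        have c1 : |r - 2*n*p - n^2*q| * |q| = |d + (p + n*q)^2| := by
          rw [← abs_mul, c0, abs_neg]
        have c2 : |d + (p + n*q)^2| ≤ 1 + (p+n*q)^2 := by
          rcases hd with h | h <;> subst h <;> rw [abs_le] <;>
            constructor <;> nlinarith [sq_nonneg (p+n*q)]
        have c3 : (2:ℤ) ≤ |q| := by rw [Int.abs_eq_natAbs]; exact_mod_cast habs_q
        have c4 : |q| ≤ |r - 2*n*p - n^2*q| := by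
          rw [Int.abs_eq_natAbs, Int.abs_eq_natAbs]; exact_mod_cast hcon
        have e1 : |q| * |q| ≤ |r - 2*n*p - n^2*q| * |q| :=
          mul_le_mul_of_nonneg_right c4 (abs_nonneg q)
        have e2 : (2*|p+n*q|) * (2*|p+n*q|) ≤ |q| * |q| :=
          mul_le_mul hn hn (by positivity) (abs_nonneg q)
        have e3 : |p+n*q| * |p+n*q| = (p+n*q)^2 := by rw [← abs_mul, ← sq, abs_sq]
        have e4 : (4:ℤ) ≤ |q| * |q| := by nlinarith
        nlinarith
      obtain ⟨x', y', z', he, hv⟩ := ih d (p + n*q) q (r - 2*n*p - n^2*q) hd hpqr' (by omega)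
      refine ⟨x' - n*y', y', z' + 2*n*x' - n^2*y', by linear_combination he, ?_⟩
      rcases hv with h | h
      · exact Or.inl (by linear_combination h)
      · exact Or.inr (by linear_combination h)


lemma commClassify (d p q r e f g h : ℤ)
    (hd : d = 1 ∨ d = -1) (hA : p^2 + q*r = -d)
    (c1 : f*r = q*g) (c2 : q*(e-h) = 2*p*f) (c3 : r*(e-h) = 2*p*g)
    (hdet : e*h - f*g = 1 ∨ e*h - f*g = -1) :
    (e = 1 ∧ f = 0 ∧ g = 0 ∧ h = 1) ∨ (e = -1 ∧ f = 0 ∧ g = 0 ∧ h = -1) ∨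
    (e = p ∧ f = q ∧ g = r ∧ h = -p) ∨ (e = -p ∧ f = -q ∧ g = -r ∧ h = p) := by
  have hd2 : d^2 = 1 := by rcases hd with h' | h' <;> rw [h'] <;> ring
  obtain ⟨s, hs⟩ : ∃ s, e + h = s := ⟨_, rfl⟩
  obtain ⟨t, ht⟩ : ∃ t, e - h = t := ⟨_, rfl⟩
  obtain ⟨E, hE⟩ : ∃ E, -d * (t^2 + 4*f*g) = E := ⟨_, rfl⟩
  rw [ht] at c2 c3
  have key1 : p^2 * E = t^2 := by
    rw [← hE]; linear_combination (-d*t^2) * hA + (d*r*t) * c2 + (2*d*p*f) * c3 + t^2 * hd2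
  have key2 : q^2 * E = 4*f^2 := by
    rw [← hE]
    linear_combination (-d*(q*t+2*p*f)) * c2 + (4*d*f*q) * c1 + (-4*d*f^2) * hA + (4*f^2) * hd2
  have key3 : r^2 * E = 4*g^2 := by
    rw [← hE]
    linear_combination (-d*(r*t+2*p*g)) * c3 + (-4*d*g*r) * c1 + (-4*d*g^2) * hA + (4*g^2) * hd2
  have key4 : q*r * E = 4*f*g := by
    rw [← hE]
    linear_combination (-d*r*t)*c2 + (-2*d*p*f)*c3 + (-4*d*f*g)*hA + (4*f*g)*hd2
  have hdet4 : s^2 + d*E = 4 ∨ s^2 + d*E = -4 := by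
    rcases hdet with h' | h' <;> [left; right] <;> rw [← hE, ← hs] <;>
      linear_combination 4 * h' + (e-h+t)*ht - (t^2+4*f*g) * hd2
  obtain ⟨c, hcnn, hc⟩ : ∃ c : ℤ, 0 ≤ c ∧ E = c^2 := by
    have square_of : ∀ a b : ℤ, a ≠ 0 → a^2 * E = b^2 → ∃ c : ℤ, 0 ≤ c ∧ E = c^2 := by
      intro a b ha hab
      have hdvd : a ∣ b := by
        refine (Int.pow_dvd_pow_iff two_ne_zero).mp ⟨E, ?_⟩; linarith [hab]
      obtain ⟨c, rfl⟩ := hdvd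
      have h2' : a^2 * E = a^2 * c^2 := by linear_combination hab
      have hE' : E = c^2 := mul_left_cancel₀ (pow_ne_zero 2 ha) h2'
      exact ⟨|c|, abs_nonneg c, by rw [hE', sq_abs]⟩
    by_cases hp : p = 0
    · by_cases hq : q = 0
      · have hr : r ≠ 0 := by
          intro hr; rw [hp, hq, hr] at hA; rcases hd with h' | h' <;> omega
        exact square_of r (2*g) hr (by linear_combination key3)
      · exact square_of q (2*f) hq (by linear_combination key2)
    · exact square_of p t hp key1
  have hcases : (s^2 = 4 ∧ c = 0) ∨ (s = 0 ∧ c = 2) := by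
    rcases hd with h' | h'
    · subst h'
      rcases hdet4 with h4 | h4
      · rw [hc, one_mul] at h4
        have hc2 : c ≤ 2 := by nlinarith [sq_nonneg s]
        interval_cases c
        · exact Or.inl ⟨by linarith, rfl⟩
        · exfalso
          have hs3 : s^2 = 3 := by linarith
          have hb1 : -2 ≤ s := by nlinarith [sq_nonneg (s+2)]
          have hb2 : s ≤ 2 := by nlinarith [sq_nonneg (s-2)]
          interval_cases s <;> norm_num at hs3
        · refine Or.inr ⟨?_, rfl⟩
          have : s^2 = 0 := by linarith
          exact pow_eq_zero_iff two_ne_zero |>.mp this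
      · exfalso; rw [hc, one_mul] at h4; nlinarith [sq_nonneg s, sq_nonneg c]
    · subst h'
      have h4 : s^2 - c^2 = 4 ∨ s^2 - c^2 = -4 := by
        rcases hdet4 with hh | hh <;> [left; right] <;> rw [hc] at hh <;> linarith
      rcases Int.even_or_odd s with ⟨a, ha⟩ | ⟨a, ha⟩ <;>
        rcases Int.even_or_odd c with ⟨b, hb⟩ | ⟨b, hb⟩
      · -- both even
        rcases h4 with hh | hh
        · have h5 : 4*a^2 - 4*b^2 = 4 := by
            linear_combination hh - (s+a+a)*ha + (c+b+b)*hb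
          have hab1 : (a-b)*(a+b) = 1 := by linarith [h5]
          rcases Int.mul_eq_one_iff_eq_one_or_neg_one.mp hab1 with ⟨h6, h7⟩ | ⟨h6, h7⟩ <;>
          · have hcz : c = 0 := by omega
            refine Or.inl ⟨?_, hcz⟩
            rw [hcz] at hh; linarith
        · have h5 : 4*b^2 - 4*a^2 = 4 := by
            linear_combination -hh + (s+a+a)*ha - (c+b+b)*hb
          have hab1 : (b-a)*(b+a) = 1 := by linarith [h5]
          rcases Int.mul_eq_one_iff_eq_one_or_neg_one.mp hab1 with ⟨h6, h7⟩ | ⟨h6, h7⟩ <;>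
            exact Or.inr ⟨by omega, by omega⟩
      · -- s even, c odd : impossible
        exfalso
        have h5 : 4*a^2 - (4*b^2+4*b+1) = 4 ∨ 4*a^2 - (4*b^2+4*b+1) = -4 := by
          rcases h4 with hh | hh <;> [left; right] <;>
            linear_combination hh - (s+a+a)*ha + (c+2*b+1)*hb
        obtain ⟨u, hu⟩ : ∃ u, a^2 = u := ⟨_, rfl⟩
        obtain ⟨v, hv⟩ : ∃ v, b^2 = v := ⟨_, rfl⟩
        rw [hu, hv] at h5
        rcases h5 with h5 | h5 <;> omega
      · -- s odd, c even : impossible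
        exfalso
        have h5 : (4*a^2+4*a+1) - 4*b^2 = 4 ∨ (4*a^2+4*a+1) - 4*b^2 = -4 := by
          rcases h4 with hh | hh <;> [left; right] <;>
            linear_combination hh - (s+2*a+1)*ha + (c+b+b)*hb
        obtain ⟨u, hu⟩ : ∃ u, a^2 = u := ⟨_, rfl⟩
        obtain ⟨v, hv⟩ : ∃ v, b^2 = v := ⟨_, rfl⟩
        rw [hu, hv] at h5
        rcases h5 with h5 | h5 <;> omega
      · -- both odd : impossible
        exfalso
        have h5 : 4*(a^2+a) - 4*(b^2+b) = 4 ∨ 4*(a^2+a) - 4*(b^2+b) = -4 := by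
          rcases h4 with hh | hh <;> [left; right] <;>
            linear_combination hh - (s+2*a+1)*ha + (c+2*b+1)*hb
        obtain ⟨k, hk⟩ := Int.even_mul_succ_self a
        obtain ⟨l, hl⟩ := Int.even_mul_succ_self b
        have hk' : a^2 + a = k + k := by linear_combination hk
        have hl' : b^2 + b = l + l := by linear_combination hl
        have h6 : 4*(k+k) - 4*(l+l) = 4 ∨ 4*(k+k) - 4*(l+l) = -4 := by
          rcases h5 with hh | hh <;> [left; right] <;> linear_combination hh - 4*hk' + 4*hl'
        rcases h6 with h6 | h6 <;> omega
  rcases hcases with ⟨hs4, hc0⟩ | ⟨hs0, hc2⟩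
  · -- B = ±1
    have hE0 : E = 0 := by rw [hc, hc0]; ring
    rw [hE0] at key1 key2 key3
    have ht0 : t = 0 := by
      have : t^2 = 0 := by linarith [key1]
      exact pow_eq_zero_iff two_ne_zero |>.mp this
    have hf0 : f = 0 := by
      have : f^2 = 0 := by linarith [key2]
      exact pow_eq_zero_iff two_ne_zero |>.mp this
    have hg0 : g = 0 := by
      have : g^2 = 0 := by linarith [key3]
      exact pow_eq_zero_iff two_ne_zero |>.mp this
    have hs24 : (s-2)*(s+2) = 0 := by linear_combination hs4
    rcases mul_eq_zero.mp hs24 with h6 | h6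
    · exact Or.inl ⟨by omega, hf0, hg0, by omega⟩
    · exact Or.inr (Or.inl ⟨by omega, hf0, hg0, by omega⟩)
  · -- B = ±A
    have hE4 : E = 4 := by rw [hc, hc2]; ring
    rw [hE4] at key1 key2 key3 key4
    have hte : t = 2*e := by omega
    have hpe : p^2 = e^2 := by
      have h44 : 4*p^2 = 4*e^2 := by linear_combination key1 + (t+2*e)*hte
      linarith
    have hqf : q^2 = f^2 := by linarith [key2]
    have hrg : r^2 = g^2 := by linarith [key3]
    have hc2' : q*e = p*f := by
      have : q*(2*e) = 2*p*f := by rw [← hte]; exact c2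
      linarith
    have hc3' : r*e = p*g := by
      have : r*(2*e) = 2*p*g := by rw [← hte]; exact c3
      linarith
    by_cases hp : p = 0
    · have he0 : e = 0 := by
        have : e^2 = 0 := by rw [← hpe, hp]; ring
        exact pow_eq_zero_iff two_ne_zero |>.mp this
      have hq0 : q ≠ 0 := by
        intro hq0; rw [hp, hq0] at hA; rcases hd with h' | h' <;> simp at hA <;> omega
      rcases mul_eq_zero.mp (show (f-q)*(f+q) = 0 by linear_combination -hqf) with h6 | h6
      · -- f = q
        have hfq : f = q := by omega
        have hgr : g = r := by
          have : q*(r - g) = 0 := by linear_combination c1 - r*hfq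
          rcases mul_eq_zero.mp this with h7 | h7
          · exact absurd h7 hq0
          · omega
        exact Or.inr (Or.inr (Or.inl ⟨by omega, hfq, hgr, by omega⟩))
      · -- f = -q
        have hfq : f = -q := by omega
        have hgr : g = -r := by
          have : q*(r + g) = 0 := by linear_combination r*hfq - c1
          rcases mul_eq_zero.mp this with h7 | h7
          · exact absurd h7 hq0
          · omega
        exact Or.inr (Or.inr (Or.inr ⟨by omega, hfq, hgr, by omega⟩))
    · rcases mul_eq_zero.mp (show (e-p)*(e+p) = 0 by linear_combination -hpe) with h6 | h6
      · -- e = p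
        have hep : e = p := by omega
        have hfq : f = q := by
          have : p*(f - q) = 0 := by linear_combination -hc2' + q*hep
          rcases mul_eq_zero.mp this with h7 | h7
          · exact absurd h7 hp
          · omega
        have hgr : g = r := by
          have : p*(g - r) = 0 := by linear_combination -hc3' + r*hep
          rcases mul_eq_zero.mp this with h7 | h7
          · exact absurd h7 hp
          · omega
        exact Or.inr (Or.inr (Or.inl ⟨hep, hfq, hgr, by omega⟩))
      · -- e = -p
        have hep : e = -p := by omega
        have hfq : f = -q := by
          have : p*(f + q) = 0 := by linear_combination -hc2' + q*hep
          rcases mul_eq_zero.mp this with h7 | h7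
          · exact absurd h7 hp
          · omega
        have hgr : g = -r := by
          have : p*(g + r) = 0 := by linear_combination -hc3' + r*hep
          rcases mul_eq_zero.mp this with h7 | h7
          · exact absurd h7 hp
          · omega
        exact Or.inr (Or.inr (Or.inr ⟨hep, hfq, hgr, by omega⟩))

open Matrix

lemma ent4 {a b c d a' b' c' d' : ℤ} (H : !![a,b;c,d] = !![a',b';c',d']) :
    a = a' ∧ b = b' ∧ c = c' ∧ d = d' := by
  refine ⟨?_, ?_, ?_, ?_⟩
  · simpa using congrFun (congrFun H 0) 0
  · simpa using congrFun (congrFun H 0) 1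
  · simpa using congrFun (congrFun H 1) 0
  · simpa using congrFun (congrFun H 1) 1

lemma GL2_detpm (U : GL (Fin 2) ℤ) : U.val.det = 1 ∨ U.val.det = -1 := by
  refine Int.isUnit_iff.mp (IsUnit.of_mul_eq_one U.inv.det ?_)
  rw [← Matrix.det_mul, U.val_inv, Matrix.det_one]

lemma GL2_det_ent (U : GL (Fin 2) ℤ) :
    U.val 0 0 * U.val 1 1 - U.val 0 1 * U.val 1 0 = 1 ∨
    U.val 0 0 * U.val 1 1 - U.val 0 1 * U.val 1 0 = -1 := by
  have := GL2_detpm U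
  rwa [Matrix.det_fin_two] at this

lemma mem_center_GL2 (U : GL (Fin 2) ℤ) :
    U ∈ Subgroup.center (GL (Fin 2) ℤ) ↔ U = 1 ∨ U = -1 := by
  constructor
  · intro hU
    have hcomm := Subgroup.mem_center_iff.mp hU
    set a := U.val 0 0 with ha
    set b := U.val 0 1 with hb
    set c := U.val 1 0 with hc
    set dd := U.val 1 1 with hd
    have hUeta : U.val = !![a, b; c, dd] := by
      rw [ha, hb, hc, hd]; exact Matrix.eta_fin_two U.val
    have hT1 : ∃ T1 : GL (Fin 2) ℤ, T1.val = !![1,1;0,1] := by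
      refine ⟨⟨!![1,1;0,1], !![1,-1;0,1], ?_, ?_⟩, rfl⟩ <;>
        simp [Matrix.mul_fin_two, Matrix.one_fin_two]
    have hT2 : ∃ T2 : GL (Fin 2) ℤ, T2.val = !![1,0;1,1] := by
      refine ⟨⟨!![1,0;1,1], !![1,0;-1,1], ?_, ?_⟩, rfl⟩ <;>
        simp [Matrix.mul_fin_two, Matrix.one_fin_two]
    obtain ⟨T1, hT1v⟩ := hT1
    obtain ⟨T2, hT2v⟩ := hT2
    have e1 : T1.val * U.val = U.val * T1.val := congrArg Units.val (hcomm T1)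
    have e2 : T2.val * U.val = U.val * T2.val := congrArg Units.val (hcomm T2)
    rw [hUeta, hT1v, Matrix.mul_fin_two, Matrix.mul_fin_two] at e1
    rw [hUeta, hT2v, Matrix.mul_fin_two, Matrix.mul_fin_two] at e2
    obtain ⟨f1, f2, f3, f4⟩ := ent4 (by convert e1 using 2 <;> ring)
    obtain ⟨g1, g2, g3, g4⟩ := ent4 (by convert e2 using 2 <;> ring)
    have hc0 : c = 0 := by linarith
    have hb0 : b = 0 := by linarith
    have had : dd = a := by linarith
    have hdet := GL2_detpm U
    rw [Matrix.det_fin_two, ← ha, ← hb, ← hc, ← hd, hb0, hc0, had] at hdet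
    have ha1 : a = 1 ∨ a = -1 := by
      rcases hdet with h' | h'
      · rcases Int.mul_eq_one_iff_eq_one_or_neg_one.mp (by linarith : a * a = 1) with ⟨h,_⟩|⟨h,_⟩
        · exact Or.inl h
        · exact Or.inr h
      · exfalso; nlinarith
    rcases ha1 with h' | h'
    · left; ext : 1
      rw [hUeta, hc0, hb0, had, h', Units.val_one, Matrix.one_fin_two]
    · right; ext : 1
      rw [hUeta, hc0, hb0, had, h', Units.val_neg, Units.val_one]
      ext i j
      fin_cases i <;> fin_cases j <;> simp [Matrix.one_fin_two]
  · rintro (rfl | rfl) <;> refine Subgroup.mem_center_iff.mpr fun g => ?_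
    · simp
    · simp

abbrev PGL2Z' := GL (Fin 2) ℤ ⧸ Subgroup.center (GL (Fin 2) ℤ)

lemma mat2_ext {α : Type*} {a b c d a' b' c' d' : α} (h1 : a = a') (h2 : b = b')
    (h3 : c = c') (h4 : d = d') : !![a,b;c,d] = !![a',b';c',d'] := by rw [h1,h2,h3,h4]

lemma neg_mat2 {a b c d : ℤ} : -(!![a,b;c,d]) = !![-a,-b;-c,-d] := by
  ext i j; fin_cases i <;> fin_cases j <;> simp

/-- classification of units commuting with M (M of trace zero, `M² = ∓1`). -/
lemma commute_classify_units (M B : GL (Fin 2) ℤ) (d : ℤ) (hd : d = 1 ∨ d = -1)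
    (htr : M.val 1 1 = -(M.val 0 0))
    (hA : (M.val 0 0)^2 + (M.val 0 1)*(M.val 1 0) = -d)
    (hBM : B * M = M * B) : B = 1 ∨ B = -1 ∨ B = M ∨ B = -M := by
  have hMeta : M.val = !![M.val 0 0, M.val 0 1; M.val 1 0, -(M.val 0 0)] := by
    conv_lhs => rw [Matrix.eta_fin_two M.val]
    rw [htr]
  have hBeta : B.val = !![B.val 0 0, B.val 0 1; B.val 1 0, B.val 1 1] :=
    Matrix.eta_fin_two B.val
  have hv : B.val * M.val = M.val * B.val := by
    have := congrArg Units.val hBM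
    rwa [Units.val_mul, Units.val_mul] at this
  rw [hBeta, hMeta, Matrix.mul_fin_two, Matrix.mul_fin_two] at hv
  obtain ⟨v1, v2, v3, v4⟩ := ent4 hv
  have hdet := GL2_det_ent B
  rcases commClassify d (M.val 0 0) (M.val 0 1) (M.val 1 0)
      (B.val 0 0) (B.val 0 1) (B.val 1 0) (B.val 1 1) hd hA
      (by linear_combination v1) (by linear_combination v2) (by linear_combination -v3)
      hdet with ⟨e1,e2,e3,e4⟩ | ⟨e1,e2,e3,e4⟩ | ⟨e1,e2,e3,e4⟩ | ⟨e1,e2,e3,e4⟩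
  · left; ext : 1
    rw [hBeta, e1, e2, e3, e4, Units.val_one, Matrix.one_fin_two]
  · right; left; ext : 1
    rw [hBeta, e1, e2, e3, e4, Units.val_neg, Units.val_one]
    ext i j; fin_cases i <;> fin_cases j <;> simp [Matrix.one_fin_two]
  · right; right; left; ext : 1
    rw [hBeta, e1, e2, e3, e4]
    conv_rhs => rw [hMeta]
  · right; right; right; ext : 1
    rw [hBeta, e1, e2, e3, e4, Units.val_neg]
    conv_rhs => rw [hMeta, neg_mat2]
    exact mat2_ext rfl rfl rfl (by ring)
/-- a unit anticommuting with M squares to ±1. -/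
lemma anticommute_sq (M B : GL (Fin 2) ℤ) (d : ℤ) (hd : d = 1 ∨ d = -1)
    (htr : M.val 1 1 = -(M.val 0 0))
    (hA : (M.val 0 0)^2 + (M.val 0 1)*(M.val 1 0) = -d)
    (hBM : B * M = -(M * B)) : B^2 = 1 ∨ B^2 = -1 := by
  have hMeta : M.val = !![M.val 0 0, M.val 0 1; M.val 1 0, -(M.val 0 0)] := by
    conv_lhs => rw [Matrix.eta_fin_two M.val]
    rw [htr]
  have hBeta : B.val = !![B.val 0 0, B.val 0 1; B.val 1 0, B.val 1 1] :=
    Matrix.eta_fin_two B.val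
  have hv : B.val * M.val = -(M.val * B.val) := by
    have := congrArg Units.val hBM
    rwa [Units.val_mul, Units.val_neg, Units.val_mul] at this
  rw [hBeta, hMeta, Matrix.mul_fin_two, Matrix.mul_fin_two, neg_mat2] at hv
  obtain ⟨v1, v2, v3, v4⟩ := ent4 hv
  -- notation
  set p := M.val 0 0 with hp
  set q := M.val 0 1 with hq
  set r := M.val 1 0 with hr
  set e := B.val 0 0 with he
  set f := B.val 0 1 with hf
  set g := B.val 1 0 with hg
  set h := B.val 1 1 with hh
  have hdet := GL2_det_ent B
  rw [← he, ← hf, ← hg, ← hh] at hdet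
  -- e + h = 0
  have hii : q*(e+h) = 0 := by linear_combination v2
  have hiii : r*(e+h) = 0 := by linear_combination v3
  have hi2 : 2*(p*(e+h)) = 0 := by linear_combination v1 - v4
  have hi : p*(e+h) = 0 := by linarith
  have hsum : e + h = 0 := by
    by_cases hpz : p = 0
    · by_cases hqz : q = 0
      · have hrz : r ≠ 0 := by
          intro hrz; rw [hpz, hqz, hrz] at hA; rcases hd with h' | h' <;> omega
        rcases mul_eq_zero.mp hiii with h' | h'
        · exact absurd h' hrz
        · exact h'
      · rcases mul_eq_zero.mp hii with h' | h'
        · exact absurd h' hqz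
        · exact h'
    · rcases mul_eq_zero.mp hi with h' | h'
      · exact absurd h' hpz
      · exact h'
  -- B² = (e² + fg) • 1
  have hBsq : (B^2).val = !![e*e+f*g, 0; 0, e*e+f*g] := by
    have : (B^2).val = B.val * B.val := by rw [sq, Units.val_mul]
    rw [this, hBeta, Matrix.mul_fin_two]
    exact mat2_ext (by ring) (by linear_combination f*hsum) (by linear_combination g*hsum)
      (by linear_combination (h-e)*hsum)
  rcases hdet with h' | h'
  · right; ext : 1
    rw [hBsq, Units.val_neg, Units.val_one]
    have : e*e + f*g = -1 := by linear_combination -h' + e*hsum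
    rw [this]
    ext i j; fin_cases i <;> fin_cases j <;> simp [Matrix.one_fin_two]
  · left; ext : 1
    rw [hBsq, Units.val_one]
    have : e*e + f*g = 1 := by linear_combination -h' + e*hsum
    rw [this, Matrix.one_fin_two]

lemma mem_centralizer_mk (M B : GL (Fin 2) ℤ) :
    ((B : PGL2Z') ∈ Subgroup.centralizer {(M : PGL2Z')}) ↔
      (B*M = M*B ∨ B*M = -(M*B)) := by
  rw [Subgroup.mem_centralizer_iff]
  constructor
  · intro hx
    have h := hx _ (Set.mem_singleton _)
    rw [← QuotientGroup.mk_mul, ← QuotientGroup.mk_mul] at h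
    have h2 := QuotientGroup.eq.mp h
    rcases (mem_center_GL2 _).mp h2 with h3 | h3
    · left; exact (inv_mul_eq_one.mp h3).symm
    · right
      have : B*M = (M*B) * (-1) := by rw [← h3, mul_inv_cancel_left]
      rw [this, mul_neg_one]
  · intro hx g hg
    rw [Set.mem_singleton_iff] at hg
    subst hg
    rcases hx with h | h
    · rw [← QuotientGroup.mk_mul, ← QuotientGroup.mk_mul, h]
    · rw [← QuotientGroup.mk_mul, ← QuotientGroup.mk_mul, h]
      refine (QuotientGroup.eq).mpr ((mem_center_GL2 _).mpr (Or.inr ?_))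
      rw [mul_neg, inv_mul_cancel]

/-- `PGL(2,ℤ)`: the quotient of `GL(2,ℤ)` by its center `{±𝟙}`. -/
abbrev PGL2Z := GL (Fin 2) ℤ ⧸ Subgroup.center (GL (Fin 2) ℤ)

lemma mk_neg_eq (B : GL (Fin 2) ℤ) : ((-B : GL (Fin 2) ℤ) : PGL2Z) = (B : PGL2Z) := by
  have h1 : ((-1 : GL (Fin 2) ℤ) : PGL2Z) = 1 :=
    (QuotientGroup.eq_one_iff _).mpr ((mem_center_GL2 _).mpr (Or.inr rfl))
  rw [show (-B : GL (Fin 2) ℤ) = B * (-1) by rw [mul_neg_one], QuotientGroup.mk_mul, h1, mul_one]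

/-- If `F ∈ PGL(2,ℤ)` is an involution (`F² = 1`, `F ≠ 1`), then its
centralizer is isomorphic to the Klein four group `C₂ × C₂`. -/
theorem PGL2Z_centralizer_of_involution (F : PGL2Z)
    (h2 : F ^ 2 = 1) (h1 : F ≠ 1) :
    Nonempty (Subgroup.centralizer {F} ≃* Multiplicative (ZMod 2 × ZMod 2)) := by
  obtain ⟨M, rfl⟩ := QuotientGroup.mk_surjective F
  have hMn : M ∉ Subgroup.center (GL (Fin 2) ℤ) := fun hc =>
    h1 ((QuotientGroup.eq_one_iff _).mpr hc)
  have hM2 : M^2 = 1 ∨ M^2 = -1 := by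
    refine (mem_center_GL2 _).mp ((QuotientGroup.eq_one_iff _).mp ?_)
    rw [QuotientGroup.mk_pow]; exact h2
  -- scalar data
  obtain ⟨d, hd, hMMval⟩ : ∃ d : ℤ, (d = 1 ∨ d = -1) ∧
      M.val * M.val = !![-d, 0; 0, -d] := by
    rcases hM2 with hh | hh
    · refine ⟨-1, Or.inr rfl, ?_⟩
      have hv := congrArg Units.val hh
      rw [Units.val_pow_eq_pow_val, sq, Units.val_one, Matrix.one_fin_two] at hv
      rw [hv]; norm_num
    · refine ⟨1, Or.inl rfl, ?_⟩
      have hv := congrArg Units.val hh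
      rw [Units.val_pow_eq_pow_val, sq, Units.val_neg, Units.val_one, Matrix.one_fin_two,
        neg_mat2] at hv
      rw [hv]; norm_num
  have hMsq := hMMval
  rw [Matrix.eta_fin_two M.val, Matrix.mul_fin_two] at hMsq
  obtain ⟨w1, w2, w3, w4⟩ := ent4 hMsq
  -- trace zero
  have htr : M.val 1 1 = -(M.val 0 0) := by
    by_contra hne
    have hpu : M.val 0 0 + M.val 1 1 ≠ 0 := fun hc => hne (by linarith)
    have hq0 : M.val 0 1 = 0 := by
      rcases mul_eq_zero.mp (show (M.val 0 1) * (M.val 0 0 + M.val 1 1) = 0 by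
        linear_combination w2) with h' | h'
      · exact h'
      · exact absurd h' hpu
    have hr0 : M.val 1 0 = 0 := by
      rcases mul_eq_zero.mp (show (M.val 1 0) * (M.val 0 0 + M.val 1 1) = 0 by
        linear_combination w3) with h' | h'
      · exact h'
      · exact absurd h' hpu
    rw [hq0] at w1
    rw [hr0] at w4
    rcases hd with h' | h'
    · subst h'
      nlinarith [w1, sq_nonneg (M.val 0 0)]
    · subst h'
      have hp1 : M.val 0 0 = 1 ∨ M.val 0 0 = -1 := by
        rcases Int.mul_eq_one_iff_eq_one_or_neg_one.mp (by linarith [w1] :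
          M.val 0 0 * M.val 0 0 = 1) with ⟨h'', _⟩ | ⟨h'', _⟩
        · exact Or.inl h''
        · exact Or.inr h''
      have hu1 : M.val 1 1 = 1 ∨ M.val 1 1 = -1 := by
        rcases Int.mul_eq_one_iff_eq_one_or_neg_one.mp (by linarith [w4] :
          M.val 1 1 * M.val 1 1 = 1) with ⟨h'', _⟩ | ⟨h'', _⟩
        · exact Or.inl h''
        · exact Or.inr h''
      have hpe : M.val 1 1 = M.val 0 0 := by rcases hp1 with h5|h5 <;> rcases hu1 with h6|h6 <;>
        omega
      refine hMn ((mem_center_GL2 M).mpr ?_)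
      rcases hp1 with h5 | h5
      · left; ext : 1
        rw [Matrix.eta_fin_two M.val, hq0, hr0, hpe, h5, Units.val_one, Matrix.one_fin_two]
      · right; ext : 1
        rw [Matrix.eta_fin_two M.val, hq0, hr0, hpe, h5, Units.val_neg, Units.val_one,
          Matrix.one_fin_two, neg_mat2]
        exact mat2_ext rfl (by norm_num) (by norm_num) rfl
  have hA : (M.val 0 0)^2 + (M.val 0 1)*(M.val 1 0) = -d := by
    linear_combination w1
  have hMeta : M.val = !![M.val 0 0, M.val 0 1; M.val 1 0, -(M.val 0 0)] := by
    conv_lhs => rw [Matrix.eta_fin_two M.val]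
    rw [htr]
  -- anticommuting unit
  obtain ⟨x, y, z, hxyz, hvv⟩ := existsAnti ((M.val 0 1).natAbs + (M.val 1 0).natAbs) d
    (M.val 0 0) (M.val 0 1) (M.val 1 0) hd hA le_rfl
  obtain ⟨w, hw1, hw2⟩ : ∃ w : ℤ, w * (x^2 + y*z) = -1 ∧ (w = 1 ∨ w = -1) := by
    rcases hvv with h | h
    · exact ⟨-1, by rw [h]; ring, Or.inr rfl⟩
    · exact ⟨1, by rw [h]; ring, Or.inl rfl⟩
  obtain ⟨SU, hSUval⟩ : ∃ SU : GL (Fin 2) ℤ, SU.val = !![x, y; z, -x] := by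
    refine ⟨⟨!![x, y; z, -x], !![-w*x, -w*y; -w*z, w*x], ?_, ?_⟩, rfl⟩
    · rw [Matrix.mul_fin_two, Matrix.one_fin_two]
      exact mat2_ext (by linear_combination -hw1) (by ring) (by ring) (by linear_combination -hw1)
    · rw [Matrix.mul_fin_two, Matrix.one_fin_two]
      exact mat2_ext (by linear_combination -hw1) (by ring) (by ring) (by linear_combination -hw1)
  have hanti : SU * M = -(M * SU) := by
    ext : 1
    rw [Units.val_mul, Units.val_neg, Units.val_mul, hSUval, hMeta, Matrix.mul_fin_two,
      Matrix.mul_fin_two, neg_mat2]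
    exact mat2_ext (by linear_combination hxyz) (by ring) (by ring) (by linear_combination hxyz)
  -- the four elements
  set C := Subgroup.centralizer {((M : PGL2Z))} with hC
  have memM : (M : PGL2Z) ∈ C := (mem_centralizer_mk M M).mpr (Or.inl rfl)
  have memS : (SU : PGL2Z) ∈ C := (mem_centralizer_mk M SU).mpr (Or.inr hanti)
  have memMS : ((M : PGL2Z) * (SU : PGL2Z)) ∈ C := mul_mem memM memS
  -- distinctness
  have hMval_ne : ¬(M * M = -(M * M)) := by
    intro hc
    have hcv := congrArg Units.val hc
    rw [Units.val_mul, Units.val_neg, Units.val_mul, hMMval] at hcv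
    have h00 := congrFun (congrFun hcv 0) 0
    simp at h00
    rcases hd with h' | h' <;> omega
  have hS1 : (SU : PGL2Z) ≠ 1 := by
    intro hc
    have hSU' : SU = 1 ∨ SU = -1 := (mem_center_GL2 _).mp ((QuotientGroup.eq_one_iff _).mp hc)
    have hMneg : M = -M := by
      rcases hSU' with h' | h'
      · rw [h', one_mul, mul_one] at hanti; exact hanti
      · rw [h', neg_one_mul, mul_neg_one, neg_neg] at hanti
        exact hanti.symm
    have hcv := congrArg Units.val hMneg
    rw [Units.val_neg] at hcv
    have e1 := congrFun (congrFun hcv 0) 0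
    have e2 := congrFun (congrFun hcv 0) 1
    have e3 := congrFun (congrFun hcv 1) 0
    simp at e1 e2 e3
    have hp0 : M.val 0 0 = 0 := by omega
    have hq0 : M.val 0 1 = 0 := by omega
    have hr0 : M.val 1 0 = 0 := by omega
    rw [hp0, hq0, hr0] at hA
    simp at hA
    rcases hd with h' | h' <;> omega
  have hMS : (M : PGL2Z) ≠ (SU : PGL2Z) := by
    intro hc
    have hcen := QuotientGroup.eq.mp hc
    rcases (mem_center_GL2 _).mp hcen with h' | h'
    · have hSU' : SU = M := (inv_mul_eq_one.mp h').symm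
      rw [hSU'] at hanti
      exact hMval_ne hanti
    · have hSU' : SU = -M := by
        have := (mul_inv_cancel_left M SU).symm
        rw [h', mul_neg_one] at this
        exact this
      rw [hSU', neg_mul, mul_neg, neg_neg] at hanti
      exact hMval_ne hanti.symm
  have hSq2 : SU^2 = 1 ∨ SU^2 = -1 := anticommute_sq M SU d hd htr hA hanti
  have hb2 : ((SU : PGL2Z))^2 = 1 := by
    rw [← QuotientGroup.mk_pow]
    rcases hSq2 with h' | h'
    · rw [h', QuotientGroup.mk_one]
    · rw [h']
      exact (QuotientGroup.eq_one_iff _).mpr ((mem_center_GL2 _).mpr (Or.inr rfl))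
  have hab1 : (M : PGL2Z) * (SU : PGL2Z) ≠ 1 := by
    intro hc
    have : (SU : PGL2Z) = ((M : PGL2Z))⁻¹ := eq_inv_of_mul_eq_one_right hc
    rw [inv_eq_of_mul_eq_one_right (by rw [← sq]; exact h2)] at this
    exact hMS this.symm
  have hab_a : (M : PGL2Z) * (SU : PGL2Z) ≠ (M : PGL2Z) := by
    intro hc
    exact hS1 (mul_left_cancel (a := (M : PGL2Z)) (show _ * _ = _ * 1 by rw [mul_one]; exact hc))
  have hab_b : (M : PGL2Z) * (SU : PGL2Z) ≠ (SU : PGL2Z) := by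
    intro hc
    exact h1 (mul_right_cancel (b := (SU : PGL2Z)) (show _ * _ = 1 * _ by rw [one_mul]; exact hc))
  -- the centralizer is {1, M, SU, M*SU}
  have hset : (C : Set PGL2Z) = {1, (M : PGL2Z), (SU : PGL2Z), (M : PGL2Z) * (SU : PGL2Z)} := by
    ext xx
    simp only [SetLike.mem_coe, Set.mem_insert_iff, Set.mem_singleton_iff]
    constructor
    · intro hx
      obtain ⟨B, rfl⟩ := QuotientGroup.mk_surjective xx
      rcases (mem_centralizer_mk M B).mp hx with hcomm | hanti'
      · rcases commute_classify_units M B d hd htr hA hcomm with h' | h' | h' | h'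
        · left; rw [h', QuotientGroup.mk_one]
        · left; rw [h']
          exact (QuotientGroup.eq_one_iff _).mpr ((mem_center_GL2 _).mpr (Or.inr rfl))
        · right; left; rw [h']
        · right; left; rw [h', mk_neg_eq]
      · have hSUinvM : SU⁻¹ * M = -(M * SU⁻¹) := by
          have h0 : SU⁻¹ * (SU * M) * SU⁻¹ = SU⁻¹ * (-(M * SU)) * SU⁻¹ := by rw [hanti]
          rw [inv_mul_cancel_left, mul_neg, neg_mul, ← mul_assoc SU⁻¹ M SU,
            mul_assoc (SU⁻¹ * M), mul_inv_cancel, mul_one] at h0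
          exact neg_eq_iff_eq_neg.mp h0.symm
        have hcomm2 : (B * SU⁻¹) * M = M * (B * SU⁻¹) := by
          rw [mul_assoc, hSUinvM, mul_neg, ← mul_assoc, hanti', neg_mul, neg_neg, mul_assoc]
        have hBX : ∀ X : GL (Fin 2) ℤ, B * SU⁻¹ = X → B = X * SU := by
          intro X hX
          rw [← hX, inv_mul_cancel_right]
        rcases commute_classify_units M (B * SU⁻¹) d hd htr hA hcomm2 with h' | h' | h' | h'
        · right; right; left; rw [hBX _ h', one_mul]
        · right; right; left; rw [hBX _ h', neg_one_mul, mk_neg_eq]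
        · right; right; right; rw [hBX _ h', QuotientGroup.mk_mul]
        · right; right; right
          rw [hBX _ h', neg_mul, mk_neg_eq, QuotientGroup.mk_mul]
    · rintro (rfl | rfl | rfl | rfl)
      · exact one_mem C
      · exact memM
      · exact memS
      · exact memMS
  -- cardinality
  have hcard : Nat.card ↥C = 4 := by
    have e1 : Nat.card ↥C = Nat.card ↥({1, (M : PGL2Z), (SU : PGL2Z),
        (M : PGL2Z) * (SU : PGL2Z)} : Set PGL2Z) := Nat.card_congr (Equiv.setCongr hset)
    rw [e1, Nat.card_coe_set_eq]
    rw [Set.ncard_insert_of_notMem (by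
        simp only [Set.mem_insert_iff, Set.mem_singleton_iff]
        push_neg
        exact ⟨Ne.symm h1, Ne.symm hS1, Ne.symm hab1⟩) (Set.toFinite _),
      Set.ncard_insert_of_notMem (by
        simp only [Set.mem_insert_iff, Set.mem_singleton_iff]
        push_neg
        exact ⟨hMS, Ne.symm hab_a⟩) (Set.toFinite _),
      Set.ncard_pair (Ne.symm hab_b)]
  -- exponent two
  have hpow : ∀ xx : ↥C, xx ^ 2 = 1 := by
    rintro ⟨xx, hx⟩
    obtain ⟨B, rfl⟩ := QuotientGroup.mk_surjective xx
    have hsq : ((B : PGL2Z))^2 = 1 := by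
      have hBsq : B^2 = 1 ∨ B^2 = -1 := by
        rcases (mem_centralizer_mk M B).mp hx with hco | han
        · rcases commute_classify_units M B d hd htr hA hco with h' | h' | h' | h'
          · left; rw [h', one_pow]
          · left; rw [h', neg_one_sq]
          · rw [h']; exact hM2
          · rw [h', neg_sq]; exact hM2
        · exact anticommute_sq M B d hd htr hA han
      rw [← QuotientGroup.mk_pow]
      rcases hBsq with h' | h'
      · rw [h', QuotientGroup.mk_one]
      · rw [h']
        exact (QuotientGroup.eq_one_iff _).mpr ((mem_center_GL2 _).mpr (Or.inr rfl))
    exact Subtype.ext (by rw [SubmonoidClass.coe_pow, OneMemClass.coe_one]; exact hsq)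
  have hexpC : Monoid.exponent ↥C = 2 := by
    have hdvd : Monoid.exponent ↥C ∣ 2 := Monoid.exponent_dvd_of_forall_pow_eq_one hpow
    rcases (Nat.dvd_prime Nat.prime_two).mp hdvd with h' | h'
    · exfalso
      have hf1 := Monoid.pow_exponent_eq_one (⟨(M : PGL2Z), memM⟩ : ↥C)
      rw [h', pow_one] at hf1
      exact h1 (by simpa using congrArg Subtype.val hf1)
    · exact h'
  haveI : IsKleinFour ↥C := ⟨hcard, hexpC⟩
  exact IsKleinFour.nonempty_mulEquiv
end

section
/- Theorem 1, case (3): If F ∈ PGL(2,ℤ) satisfies F³ = 1 and F ≠ 1, then the centralizer of F in PGL(2,ℤ) is isomorphic to the cyclic group C₃ of order 3 (i.e. to ZMod 3). -/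
open Matrix

/-!
Lift `F` to `A ∈ GL(2,ℤ)` with `A³ = 1`. Then `tr A = -1` and `det A = 1`, so `A² + A + 1 = 0`
and `ℤ[A]` is a copy of the Eisenstein integers `ℤ[ω]`. A class commuting with `[A]` lifts to
some `B` with `AB = ±BA`, and the sign `-` would force `tr A = 0`. A matrix commuting with the
non-scalar `A` lies in `ℚ[A]`, and even in `ℤ[A]` because the discriminant `-3` of `A` is
squarefree. So `B` is one of the six units `±1, ±ω, ±ω²` of `ℤ[ω]`, and these map onto the
cyclic group `⟨[A]⟩` of order `3`.
-/

namespace Matrix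

section CommRing

variable {R : Type*} [CommRing R]

theorem sq_eq_trace_smul_sub_det_smul_one (A : Matrix (Fin 2) (Fin 2) R) :
    A ^ 2 = A.trace • A - A.det • 1 := by
  ext i j
  fin_cases i <;> fin_cases j <;> simp [sq, mul_apply, trace_fin_two, det_fin_two] <;> ring

theorem det_smul_one_add_smul_fin_two (x y : R) (A : Matrix (Fin 2) (Fin 2) R) :
    (x • 1 + y • A).det = x ^ 2 + x * y * A.trace + y ^ 2 * A.det := by
  simp [det_fin_two, trace_fin_two]
  ring

theorem trace_eq_neg_of_mul_eq_neg_mul {n : Type*} [Fintype n] [DecidableEq n]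
    {A : Matrix n n R} (B : GL n R) (h : A * B = -(B * A)) : A.trace = -A.trace := by
  have hconj : (↑B⁻¹ : Matrix n n R) * A * B = -A := by
    rw [mul_assoc, h, mul_neg, ← mul_assoc, Units.inv_mul, one_mul]
  rw [← trace_neg, ← hconj, trace_units_conj']

theorem exists_eq_smul_one_add_smul_of_commute [IsDomain R] [DecompositionMonoid R]
    {A B : Matrix (Fin 2) (Fin 2) R} (hA : Squarefree A.discr) (hAB : Commute A B) :
    ∃ x y : R, B = x • 1 + y • A := by
  obtain ⟨a, b, c, d, rfl⟩ : ∃ a b c d, A = !![a, b; c, d] := ⟨_, _, _, _, eta_fin_two A⟩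
  obtain ⟨p, q, r, s, rfl⟩ : ∃ p q r s, B = !![p, q; r, s] := ⟨_, _, _, _, eta_fin_two B⟩
  have hAB' := congrFun₂ hAB.eq
  have h00 := hAB' 0 0
  have h01 := hAB' 0 1
  have h10 := hAB' 1 0
  simp only [mul_fin_two, of_apply, cons_val', cons_val_zero, cons_val_one, empty_val',
    cons_val_fin_one] at h00 h01 h10
  rw [discr_fin_two, trace_fin_two_of, det_fin_two_of] at hA
  set D := (a + d) ^ 2 - 4 * (a * d - b * c)
  -- `w = (q, r, p - s)` is parallel to `v = (b, c, a - d)`, and `Q v = D` for the quadratic form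
  -- `Q (u, u', u'') = u''² + 4 u u'`. Pairing `w` with `v` gives `n` with `n • v = D • w` and
  -- `n² = D * Q w`, so squarefreeness of `D` yields `D ∣ n`, i.e. `w ∈ R • v`.
  have hbr : b * r = c * q := by linear_combination h00
  have hbm : b * (p - s) = q * (a - d) := by linear_combination -h01
  have hcm : c * (p - s) = r * (a - d) := by linear_combination h10
  set n := (a - d) * (p - s) + 2 * (b * r + c * q)
  have hnb : n * b = D * q := by linear_combination (a - d) * hbm + 2 * b * hbr
  have hnc : n * c = D * r := by linear_combination (a - d) * hcm - 2 * c * hbr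
  have hne : n * (a - d) = D * (p - s) := by linear_combination -2 * b * hcm - 2 * c * hbm
  obtain ⟨y, hy⟩ : D ∣ n := by
    refine (hA.dvd_pow_iff_dvd two_ne_zero).mp ⟨(p - s) ^ 2 + 4 * q * r, ?_⟩
    linear_combination (p - s) * hne + 2 * r * hnb + 2 * q * hnc
  rw [hy] at hnb hnc hne
  have hD := hA.ne_zero
  obtain rfl : q = y * b := mul_left_cancel₀ hD (by linear_combination -hnb)
  obtain rfl : r = y * c := mul_left_cancel₀ hD (by linear_combination -hnc)
  have hm : p - s = y * (a - d) := mul_left_cancel₀ hD (by linear_combination -hne)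
  obtain rfl : s = p - y * (a - d) := by linear_combination -hm
  refine ⟨p - y * a, y, ?_⟩
  ext i j
  fin_cases i <;> fin_cases j <;> simp
  ring

end CommRing

theorem trace_eq_neg_one_and_det_eq_one_of_pow_three_eq_one {A : Matrix (Fin 2) (Fin 2) ℤ}
    (h3 : A ^ 3 = 1) (h1 : A ≠ 1) : A.trace = -1 ∧ A.det = 1 := by
  set t := A.trace
  set δ := A.det
  have hcube : (t ^ 2 - δ) • A = (1 + t * δ) • (1 : Matrix (Fin 2) (Fin 2) ℤ) := by
    have hsq := A.sq_eq_trace_smul_sub_det_smul_one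
    calc (t ^ 2 - δ) • A = A ^ 3 + (t * δ) • 1 := by
          rw [pow_succ A 2, hsq]
          simp only [sub_mul, smul_mul_assoc, ← sq, hsq, one_mul, smul_sub, smul_smul]
          module
      _ = (1 + t * δ) • 1 := by rw [h3]; module
  by_cases hdeg : t ^ 2 - δ = 0
  · have h0 := congrFun₂ hcube 0 0
    simp only [hdeg, smul_apply, one_apply_eq, smul_eq_mul, mul_one] at h0
    have ht : t = -1 :=
      (Odd.pow_inj (by decide)).mp (by linear_combination t * hdeg - h0 : t ^ 3 = (-1) ^ 3)
    exact ⟨ht, by linear_combination -hdeg + (t - 1) * ht⟩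
  · -- otherwise `A` is scalar, and the only integer cube root of unity is `1`
    refine absurd ?_ h1
    have hcube' := congrFun₂ hcube
    have h00 := hcube' 0 0
    have h01 := hcube' 0 1
    have h10 := hcube' 1 0
    have h11 := hcube' 1 1
    simp only [smul_apply, smul_eq_mul, one_apply_eq, one_apply_ne, ne_eq, zero_ne_one,
      one_ne_zero, not_false_eq_true, mul_one, mul_zero, mul_eq_zero, hdeg, false_or]
      at h00 h01 h10 h11
    have hA : A = A 0 0 • 1 := by
      rw [eta_fin_two A, mul_left_cancel₀ hdeg (h11.trans h00.symm), h01, h10]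
      ext i j
      fin_cases i <;> fin_cases j <;> simp
    have ha : A 0 0 ^ 3 = 1 ^ 3 := by
      have h00 := congrFun₂ h3 0 0
      rw [hA, smul_pow, one_pow] at h00
      simpa using h00
    rw [hA, (Odd.pow_inj (by decide)).mp ha, one_smul]

end Matrix

theorem Int.eq_of_sq_sub_mul_add_sq_eq_one {x y : ℤ} (h : x ^ 2 - x * y + y ^ 2 = 1) :
    x = 1 ∧ y = 0 ∨ x = -1 ∧ y = 0 ∨ x = 0 ∧ y = 1 ∨ x = 0 ∧ y = -1 ∨ x = 1 ∧ y = 1 ∨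
      x = -1 ∧ y = -1 := by
  obtain ⟨hx₁, hx₂⟩ : -1 ≤ x ∧ x ≤ 1 := by constructor <;> nlinarith [sq_nonneg (x - 2 * y)]
  obtain ⟨hy₁, hy₂⟩ : -1 ≤ y ∧ y ≤ 1 := by constructor <;> nlinarith [sq_nonneg (y - 2 * x)]
  interval_cases x <;> interval_cases y <;> omega

theorem Matrix.GeneralLinearGroup.mem_center_int_iff {n : Type*} [Fintype n] [DecidableEq n]
    {g : GL n ℤ} : g ∈ Subgroup.center (GL n ℤ) ↔ g = 1 ∨ g = -1 := by
  have hneg : scalar n (-1 : ℤˣ) = -1 := Units.ext (by simp [coe_scalar])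
  rw [center_eq_range_scalar]
  constructor
  · rintro ⟨u, rfl⟩
    rcases Int.units_eq_one_or u with rfl | rfl
    · exact .inl (map_one _)
    · exact .inr hneg
  · rintro (rfl | rfl)
    · exact Subgroup.one_mem _
    · exact ⟨-1, hneg⟩

namespace PGL2Z

theorem mk_eq_mk_iff {A B : GL (Fin 2) ℤ} : (A : PGL2Z) = B ↔ B = A ∨ B = -A := by
  rw [QuotientGroup.eq, GeneralLinearGroup.mem_center_int_iff, inv_mul_eq_one,
    inv_mul_eq_iff_eq_mul, mul_neg_one, eq_comm (a := A)]

theorem exists_lift_pow_three_eq_one {F : PGL2Z} (h3 : F ^ 3 = 1) :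
    ∃ A : GL (Fin 2) ℤ, (A : PGL2Z) = F ∧ A ^ 3 = 1 := by
  obtain ⟨A, rfl⟩ := QuotientGroup.mk_surjective F
  rw [← QuotientGroup.mk_pow, ← QuotientGroup.mk_one, mk_eq_mk_iff] at h3
  rcases h3 with h | h
  · exact ⟨A, rfl, h.symm⟩
  · refine ⟨-A, mk_eq_mk_iff.mpr (.inr (neg_neg A).symm), ?_⟩
    rw [Odd.neg_pow (by decide), ← h]

variable {A : GL (Fin 2) ℤ}

theorem mk_mem_zpowers_of_val_eq_smul_one_add_smul
    (htr : (A : Matrix (Fin 2) (Fin 2) ℤ).trace = -1)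
    (hdet : (A : Matrix (Fin 2) (Fin 2) ℤ).det = 1) {B : GL (Fin 2) ℤ} {x y : ℤ}
    (hB : (B : Matrix (Fin 2) (Fin 2) ℤ) = x • 1 + y • (A : Matrix (Fin 2) (Fin 2) ℤ))
    (hxy : x ^ 2 - x * y + y ^ 2 = 1) : (B : PGL2Z) ∈ Subgroup.zpowers (A : PGL2Z) := by
  have hA2 : (A : Matrix (Fin 2) (Fin 2) ℤ) ^ 2 = -A - 1 := by
    rw [sq_eq_trace_smul_sub_det_smul_one, htr, hdet]
    module
  suffices ∃ k : ℕ, A ^ k = B ∨ A ^ k = -B by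
    obtain ⟨k, hk⟩ := this
    rw [mk_eq_mk_iff.mpr hk, QuotientGroup.mk_pow]
    exact Subgroup.npow_mem_zpowers _ k
  rcases Int.eq_of_sq_sub_mul_add_sq_eq_one hxy with
    ⟨rfl, rfl⟩ | ⟨rfl, rfl⟩ | ⟨rfl, rfl⟩ | ⟨rfl, rfl⟩ | ⟨rfl, rfl⟩ | ⟨rfl, rfl⟩
  · exact ⟨0, .inl (Units.ext (by simp [hB]))⟩
  · exact ⟨0, .inr (Units.ext (by simp [hB]))⟩
  · exact ⟨1, .inl (Units.ext (by simp [hB]))⟩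
  · exact ⟨1, .inr (Units.ext (by simp [hB]))⟩
  · exact ⟨2, .inr (Units.ext (by simp [hB, hA2]; module))⟩
  · exact ⟨2, .inl (Units.ext (by simp [hB, hA2]; module))⟩

theorem centralizer_eq_zpowers (htr : (A : Matrix (Fin 2) (Fin 2) ℤ).trace = -1)
    (hdet : (A : Matrix (Fin 2) (Fin 2) ℤ).det = 1) :
    Subgroup.centralizer {(A : PGL2Z)} = Subgroup.zpowers (A : PGL2Z) := by
  refine le_antisymm (fun S hS => ?_)
    (Subgroup.zpowers_le.mpr (Subgroup.mem_centralizer_singleton_iff.mpr rfl))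
  obtain ⟨B, rfl⟩ := QuotientGroup.mk_surjective S
  rw [Subgroup.mem_centralizer_singleton_iff, ← QuotientGroup.mk_mul, ← QuotientGroup.mk_mul,
    mk_eq_mk_iff] at hS
  rcases hS with hcomm | hanti
  · have hdiscr : Squarefree (A : Matrix (Fin 2) (Fin 2) ℤ).discr := by
      rw [discr_fin_two, htr, hdet]
      exact Int.prime_three.neg.squarefree
    obtain ⟨x, y, hB⟩ := exists_eq_smul_one_add_smul_of_commute hdiscr
      (Commute.units_val hcomm)
    refine mk_mem_zpowers_of_val_eq_smul_one_add_smul htr hdet hB ?_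
    have hdetB := Int.isUnit_iff.mp ((isUnit_iff_isUnit_det _).mp B.isUnit)
    rw [hB, det_smul_one_add_smul_fin_two, htr, hdet] at hdetB
    rcases hdetB with h | h
    · linear_combination h
    · nlinarith [sq_nonneg (2 * x - y), sq_nonneg y]
  · have := trace_eq_neg_of_mul_eq_neg_mul B (congrArg Units.val hanti)
    omega

end PGL2Z

/-- If `F ∈ PGL(2,ℤ)` satisfies `F³ = 1`, `F ≠ 1`, then its centralizer is
isomorphic to the cyclic group `C₃` of order 3. -/
theorem PGL2Z_centralizer_of_order_three (F : PGL2Z)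
    (h3 : F ^ 3 = 1) (h1 : F ≠ 1) :
    Nonempty (Subgroup.centralizer {F} ≃* Multiplicative (ZMod 3)) := by
  obtain ⟨A, rfl, hA3⟩ := PGL2Z.exists_lift_pow_three_eq_one h3
  have hA1 : (A : Matrix (Fin 2) (Fin 2) ℤ) ≠ 1 := fun h => h1 (by rw [(Units.ext h : A = 1)]; rfl)
  obtain ⟨htr, hdet⟩ := trace_eq_neg_one_and_det_eq_one_of_pow_three_eq_one
    (by rw [← Units.val_pow_eq_pow_val, hA3, Units.val_one]) hA1
  have : Fact (Nat.Prime 3) := ⟨Nat.prime_three⟩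
  have hcard : Nat.card (Subgroup.centralizer {(A : PGL2Z)}) = 3 := by
    rw [PGL2Z.centralizer_eq_zpowers htr hdet, Nat.card_zpowers, orderOf_eq_prime h3 h1]
  exact ⟨mulEquivOfPrimeCardEq hcard (by simp)⟩
end

section
/- Every element F of finite order in PGL(2,ℤ) is reversible: there exists G ∈ PGL(2,ℤ) with G·F·G⁻¹ = F⁻¹. -/
open Matrix

/-- A positive binary quadratic form of discriminant `-3` represents `1`. -/
lemma PGL2Z_aux_repOne (n : ℕ) : ∀ A B C : ℤ, A.toNat = n → 0 < A → B*B - 4*A*C = -3 →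
    ∃ x y : ℤ, A*x*x + B*x*y + C*y*y = 1 := by
  induction n using Nat.strong_induction_on with
  | _ n ih =>
    intro A B C hAn hA hdisc
    by_cases hA1 : A = 1
    · exact ⟨1, 0, by subst hA1; ring⟩
    have hA2 : 2 ≤ A := by omega
    have h2A : (0:ℤ) < 2*A := by omega
    have hmod : B + A - 2*A*((B + A) / (2*A)) = (B + A) % (2*A) := by
      rw [Int.emod_def]
    have hm0 : 0 ≤ (B + A) % (2*A) := Int.emod_nonneg _ (by omega)
    have hm1 : (B + A) % (2*A) < 2*A := Int.emod_lt_of_pos _ h2A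
    set q : ℤ := (B + A) / (2*A) with hq
    set B' : ℤ := B - 2*A*q with hB'
    have hr1 : -A ≤ B' := by omega
    have hr2 : B' < A := by omega
    set C' : ℤ := A*q*q - B*q + C with hC'
    have hdisc' : B'*B' - 4*A*C' = -3 := by rw [hB', hC']; ring_nf; linear_combination hdisc
    have hC'pos : 0 < C' := by nlinarith [sq_nonneg B']
    have hB'sq : B'*B' ≤ A*A := by nlinarith
    have hlt : C' < A := by nlinarith
    obtain ⟨x, y, hxy⟩ := ih C'.toNat (by omega) C' B' A rfl hC'pos
      (by linear_combination hdisc')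
    exact ⟨y - q*x, x, by rw [hB', hC'] at hxy; linear_combination hxy⟩

/-- Cayley–Hamilton for 2×2 integer matrices. -/
lemma PGL2Z_aux_ch2 (A : Matrix (Fin 2) (Fin 2) ℤ) : A*A = A.trace • A - A.det • 1 := by
  ext i j
  fin_cases i <;> fin_cases j <;>
    simp only [Matrix.sub_apply, Matrix.smul_apply, Matrix.mul_apply, Fin.sum_univ_two,
      smul_eq_mul, Matrix.one_apply, Matrix.trace_fin_two, Matrix.det_fin_two] <;>
    norm_num <;> ring

/-- A 2×2 integer matrix of finite order has trace of absolute value at most 2. -/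
lemma PGL2Z_aux_trace_big (A : Matrix (Fin 2) (Fin 2) ℤ) (n : ℕ) (hn : 0 < n)
    (h1 : A^n = 1) (ht : 3 ≤ |A.trace|) : False := by
  have hdet : A.det = 1 ∨ A.det = -1 := by
    have hd : A.det ^ n = 1 := by
      rw [← Matrix.det_pow, h1, Matrix.det_one]
    exact Int.isUnit_iff.mp (IsUnit.of_pow_eq_one hd hn.ne')
  have habsd : |A.det| = 1 := by rcases hdet with h | h <;> simp [h]
  set u : ℕ → ℤ := fun k => (A^k).trace with hu
  have hrec : ∀ k, u (k+2) = A.trace * u (k+1) - A.det * u k := by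
    intro k
    have h2 : A^(k+2) = A.trace • A^(k+1) - A.det • A^k := by
      have he : A^(k+2) = A^k * (A*A) := by rw [pow_add, pow_two]
      rw [he, PGL2Z_aux_ch2, Matrix.mul_sub, mul_smul_comm, mul_smul_comm, mul_one, ← pow_succ]
    simp only [hu, h2, Matrix.trace_sub, Matrix.trace_smul, smul_eq_mul]
  have key : ∀ k, 3 ≤ |u (k+1)| ∧ |u k| < |u (k+1)| := by
    intro k
    induction k with
    | zero =>
      have h0 : u 0 = 2 := by simp [hu]
      have h1' : |u 1| = |A.trace| := by simp [hu]
      have h2 : |(2:ℤ)| = 2 := by norm_num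
      constructor
      · rw [h1']; exact ht
      · rw [h0, h1', h2]; omega
    | succ k ihk =>
      obtain ⟨h3, hlt⟩ := ihk
      have hb : |A.trace * u (k+1)| - |A.det * u k| ≤ |u (k+2)| := by
        rw [hrec k]; exact abs_sub_abs_le_abs_sub _ _
      rw [abs_mul, abs_mul, habsd, one_mul] at hb
      have h3u : 3 * |u (k+1)| ≤ |A.trace| * |u (k+1)| :=
        mul_le_mul_of_nonneg_right ht (abs_nonneg _)
      have hre : u (k+1+1) = u (k+2) := rfl
      rw [hre]
      constructor <;> omega
  have hun : u n = 2 := by simp [hu, h1]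
  obtain ⟨h3, -⟩ := key (n - 1)
  have hnn : n - 1 + 1 = n := by omega
  rw [hnn, hun] at h3
  norm_num at h3

/-- A finite-order 2×2 integer matrix with trace 2 and determinant 1 is the identity. -/
lemma PGL2Z_aux_unip (A : Matrix (Fin 2) (Fin 2) ℤ) (n : ℕ) (hn : 0 < n) (h1 : A^n = 1)
    (ht : A.trace = 2) (hd : A.det = 1) : A = 1 := by
  set N := A - 1 with hN
  have hAA : A * A = A + A - 1 := by
    rw [PGL2Z_aux_ch2, ht, hd, two_smul, one_smul]
  have hNN : N * N = 0 := by
    have h2 : N * N = A*A - A - A + 1 := by rw [hN]; noncomm_ring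
    rw [h2, hAA]; abel
  have hA1 : A = 1 + N := by rw [hN]; abel
  have hpow : ∀ k : ℕ, A^k = 1 + (k:ℤ) • N := by
    intro k
    induction k with
    | zero => simp
    | succ k ih =>
      rw [pow_succ, ih, hA1]
      rw [mul_add, add_mul, add_mul, mul_one, one_mul, smul_mul_assoc, mul_one, smul_mul_assoc,
        hNN, smul_zero]
      push_cast
      rw [add_smul, one_smul]
      abel
  have hzero : (n:ℤ) • N = 0 := by
    have hh := hpow n
    rw [h1] at hh
    have h2 := congrArg (fun X => X - 1) hh
    simpa using h2.symm
  have hN0 : N = 0 := by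
    rcases smul_eq_zero.mp hzero with h | h
    · exfalso; omega
    · exact h
  rw [hA1, hN0, add_zero]

/-- Any 2×2 integer matrix satisfying `A² + A + 1 = 0` is `GL₂(ℤ)`-conjugate to the
companion matrix of `X² + X + 1`. -/
lemma PGL2Z_aux_conjCompanion (A : Matrix (Fin 2) (Fin 2) ℤ) (hA : A*A + A + 1 = 0) :
    ∃ P Pi : Matrix (Fin 2) (Fin 2) ℤ,
      P * Pi = 1 ∧ Pi * P = 1 ∧ A * P = P * !![0,-1;1,-1] := by
  obtain ⟨a,b,c,d, rfl⟩ : ∃ a b c d, A = !![a,b;c,d] := ⟨_,_,_,_, Matrix.eta_fin_two A⟩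
  have e00 : a*a + b*c + a + 1 = 0 := by
    have := congrFun (congrFun hA 0) 0
    simpa [Matrix.mul_apply, Fin.sum_univ_two, Matrix.one_apply] using this
  have e01 : a*b + b*d + b = 0 := by
    have := congrFun (congrFun hA 0) 1
    simpa [Matrix.mul_apply, Fin.sum_univ_two, Matrix.one_apply] using this
  have e10 : c*a + d*c + c = 0 := by
    have := congrFun (congrFun hA 1) 0
    simpa [Matrix.mul_apply, Fin.sum_univ_two, Matrix.one_apply] using this
  have hs : a + d + 1 = 0 := by
    by_contra hne
    have hb : b = 0 := by
      have h2 : b*(a+d+1) = 0 := by linear_combination e01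
      rcases mul_eq_zero.mp h2 with h | h
      · exact h
      · exact absurd h hne
    have hcc : c = 0 := by
      have h2 : c*(a+d+1) = 0 := by linear_combination e10
      rcases mul_eq_zero.mp h2 with h | h
      · exact h
      · exact absurd h hne
    rw [hb, hcc] at e00
    nlinarith [sq_nonneg (2*a+1)]
  have hd : d = -1 - a := by linarith
  subst hd
  have hbc : b*c = -(a*a) - a - 1 := by linear_combination e00
  have hc0 : c ≠ 0 := by
    intro h
    rw [h, mul_zero] at hbc
    nlinarith [sq_nonneg (2*a+1)]
  obtain ⟨x, y, ε, hε, hQ⟩ : ∃ x y ε : ℤ, (ε = 1 ∨ ε = -1) ∧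
      c*x*x - (2*a+1)*(x*y) - b*y*y = ε := by
    rcases hc0.lt_or_gt with hneg | hpos
    · obtain ⟨x,y,hxy⟩ := PGL2Z_aux_repOne (-c).toNat (-c) (2*a+1) b rfl (by omega)
        (by linear_combination 4*hbc)
      exact ⟨x, y, -1, Or.inr rfl, by linear_combination -hxy⟩
    · obtain ⟨x,y,hxy⟩ := PGL2Z_aux_repOne c.toNat c (-(2*a+1)) (-b) rfl hpos
        (by linear_combination 4*hbc)
      exact ⟨x, y, 1, Or.inl rfl, by linear_combination hxy⟩
  have hε2 : ε*ε = 1 := by rcases hε with h | h <;> rw [h] <;> norm_num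
  refine ⟨!![x, a*x+b*y; y, c*x+(-1-a)*y],
    !![ε*(c*x+(-1-a)*y), ε*(-(a*x+b*y)); ε*(-y), ε*x], ?_, ?_, ?_⟩ <;>
    ext i j <;> fin_cases i <;> fin_cases j <;>
    simp [Matrix.mul_apply, Fin.sum_univ_two, Matrix.one_apply]
  · linear_combination ε*hQ + hε2
  · ring
  · ring
  · linear_combination ε*hQ + hε2
  · linear_combination ε*hQ + hε2
  · ring
  · ring
  · linear_combination ε*hQ + hε2
  · linear_combination x*hbc
  · linear_combination y*hbc

/-- Central elements of `GL(2,ℤ)` are `±𝟙`. -/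
lemma PGL2Z_aux_center (Z : GL (Fin 2) ℤ) (hZ : Z ∈ Subgroup.center (GL (Fin 2) ℤ)) :
    (Z : Matrix (Fin 2) (Fin 2) ℤ) = 1 ∨ (Z : Matrix (Fin 2) (Fin 2) ℤ) = -1 := by
  set U : GL (Fin 2) ℤ := ⟨!![1,1;0,1], !![1,-1;0,1], by decide, by decide⟩ with hU
  set L : GL (Fin 2) ℤ := ⟨!![1,0;1,1], !![1,0;-1,1], by decide, by decide⟩ with hL
  have hZU : (U : Matrix (Fin 2) (Fin 2) ℤ) * Z = (Z : Matrix (Fin 2) (Fin 2) ℤ) * U := by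
    have := (Subgroup.mem_center_iff.mp hZ U)
    exact_mod_cast congrArg Units.val this
  have hZL : (L : Matrix (Fin 2) (Fin 2) ℤ) * Z = (Z : Matrix (Fin 2) (Fin 2) ℤ) * L := by
    have := (Subgroup.mem_center_iff.mp hZ L)
    exact_mod_cast congrArg Units.val this
  obtain ⟨p,q,r,s, hZm⟩ : ∃ p q r s, (Z : Matrix (Fin 2) (Fin 2) ℤ) = !![p,q;r,s] :=
    ⟨_,_,_,_, Matrix.eta_fin_two _⟩
  rw [hZm] at hZU hZL
  have h1 : r = 0 := by
    have := congrFun (congrFun hZU 0) 0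
    simp [hU, Matrix.mul_apply, Fin.sum_univ_two] at this
    linarith
  have h2 : s = p := by
    have := congrFun (congrFun hZU 0) 1
    simp [hU, Matrix.mul_apply, Fin.sum_univ_two] at this
    linarith
  have h3 : q = 0 := by
    have := congrFun (congrFun hZL 0) 0
    simp [hL, Matrix.mul_apply, Fin.sum_univ_two] at this
    linarith
  have hdet : p = 1 ∨ p = -1 := by
    have hmul : (Z : Matrix (Fin 2) (Fin 2) ℤ).det * ((Z⁻¹ : GL (Fin 2) ℤ) : Matrix (Fin 2) (Fin 2) ℤ).det = 1 := by
      rw [← Matrix.det_mul]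
      have hz1 : (Z : Matrix (Fin 2) (Fin 2) ℤ) * ((Z⁻¹ : GL (Fin 2) ℤ) : Matrix (Fin 2) (Fin 2) ℤ) = 1 := by
        have h := congrArg Units.val (mul_inv_cancel Z)
        simpa using h
      rw [hz1, Matrix.det_one]
    rw [hZm, h1, h2, h3] at hmul
    have hdp : Matrix.det !![p, 0; 0, p] = p * p := by
      simp [Matrix.det_fin_two]
    rw [hdp] at hmul
    have : IsUnit p := IsUnit.of_mul_eq_one (a := p)
      (p * ((Z⁻¹ : GL (Fin 2) ℤ) : Matrix (Fin 2) (Fin 2) ℤ).det) (by linear_combination hmul)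
    exact Int.isUnit_iff.mp this
  rw [hZm, h1, h2, h3]
  rcases hdet with h | h <;> [left; right] <;> subst h <;> decide

/-- Every element of finite order in `PGL(2,ℤ)` is reversible: it is
conjugate to its inverse. -/
theorem PGL2Z_finite_order_reversible (F : PGL2Z) (h : IsOfFinOrder F) :
    ∃ G : PGL2Z, G * F * G⁻¹ = F⁻¹ := by
  obtain ⟨n, hn, hFn⟩ := isOfFinOrder_iff_pow_eq_one.mp h
  obtain ⟨M, rfl⟩ := QuotientGroup.mk_surjective F
  set A := (M : Matrix (Fin 2) (Fin 2) ℤ) with hAdef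
  -- the case F² = 1
  have main2 : ((A * A = 1) ∨ (A * A = -1)) →
      ∃ G : PGL2Z, G * (QuotientGroup.mk M) * G⁻¹ = (QuotientGroup.mk M : PGL2Z)⁻¹ := by
    intro hMM
    have hFF : (QuotientGroup.mk M : PGL2Z) * QuotientGroup.mk M = 1 := by
      rw [← QuotientGroup.mk_mul, QuotientGroup.eq_one_iff]
      apply Subgroup.mem_center_iff.mpr
      intro g
      apply Units.ext
      rcases hMM with hmm | hmm <;>
        simp [Units.val_mul, ← hAdef, hmm]
    exact ⟨1, by rw [one_mul, inv_one, mul_one, inv_eq_of_mul_eq_one_right hFF]⟩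
  -- the order-3 case
  have main3 : ∀ M' : GL (Fin 2) ℤ,
      (QuotientGroup.mk M' : PGL2Z) = QuotientGroup.mk M →
      ((M' : Matrix (Fin 2) (Fin 2) ℤ) * M' + M' + 1 = 0) →
      ∃ G : PGL2Z, G * (QuotientGroup.mk M) * G⁻¹ = (QuotientGroup.mk M : PGL2Z)⁻¹ := by
    intro M' him hcomp
    obtain ⟨P, Pi, hp1, hp2, hAP⟩ := PGL2Z_aux_conjCompanion _ hcomp
    set Pu : GL (Fin 2) ℤ := ⟨P, Pi, hp1, hp2⟩ with hPu
    set Cu : GL (Fin 2) ℤ := ⟨!![0,-1;1,-1], !![-1,1;-1,0], by decide, by decide⟩ with hCu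
    set Ju : GL (Fin 2) ℤ := ⟨!![0,1;1,0], !![0,1;1,0], by decide, by decide⟩ with hJu
    have hMP : M' * Pu = Pu * Cu := by
      apply Units.ext
      exact hAP
    have hJC : Ju * Cu * Ju⁻¹ = Cu * Cu := by
      apply Units.ext
      decide
    have hM3 : M' * (M' * M') = 1 := by
      apply Units.ext
      have hsq : (M' : Matrix (Fin 2) (Fin 2) ℤ) * M' = -((M' : Matrix (Fin 2) (Fin 2) ℤ) + 1) :=
        eq_neg_of_add_eq_zero_left (by rw [← add_assoc]; exact hcomp)
      show (M' : Matrix (Fin 2) (Fin 2) ℤ) * ((M' : Matrix (Fin 2) (Fin 2) ℤ) * M') = 1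
      rw [hsq, mul_neg, mul_add, mul_one, hsq]
      abel
    have hMinv : M'⁻¹ = M' * M' := inv_eq_of_mul_eq_one_right hM3
    have hC : Pu⁻¹ * M' * Pu = Cu := by
      rw [mul_assoc, hMP, ← mul_assoc, inv_mul_cancel, one_mul]
    have hM'eq : M' = Pu * Cu * Pu⁻¹ := by
      rw [← hMP, mul_assoc, mul_inv_cancel, mul_one]
    have key : (Pu * Ju * Pu⁻¹) * M' * (Pu * Ju * Pu⁻¹)⁻¹ = M'⁻¹ := by
      calc (Pu * Ju * Pu⁻¹) * M' * (Pu * Ju * Pu⁻¹)⁻¹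
          = Pu * Ju * (Pu⁻¹ * M' * Pu) * Ju⁻¹ * Pu⁻¹ := by group
        _ = Pu * (Ju * Cu * Ju⁻¹) * Pu⁻¹ := by rw [hC]; group
        _ = Pu * (Cu * Cu) * Pu⁻¹ := by rw [hJC]
        _ = (Pu * Cu * Pu⁻¹) * (Pu * Cu * Pu⁻¹) := by group
        _ = M' * M' := by rw [← hM'eq]
        _ = M'⁻¹ := hMinv.symm
    refine ⟨QuotientGroup.mk (Pu * Ju * Pu⁻¹), ?_⟩
    rw [← him, ← QuotientGroup.mk_inv, ← QuotientGroup.mk_mul, ← QuotientGroup.mk_mul,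
      ← QuotientGroup.mk_inv]
    exact congrArg _ key
  -- basic facts about A
  have hcen := PGL2Z_aux_center (M^n) (by
    rw [← QuotientGroup.eq_one_iff]
    rw [show ((QuotientGroup.mk (M^n) : PGL2Z)) = (QuotientGroup.mk M : PGL2Z)^n from
      (QuotientGroup.mk_pow _ M n)]
    exact hFn)
  have hApown : A^n = 1 ∨ A^n = -1 := by
    rcases hcen with hc | hc
    · left; rw [← Units.val_pow_eq_pow_val] at *; exact hc
    · right; rw [← Units.val_pow_eq_pow_val] at *; exact hc
  have hApow : A^(2*n) = 1 := by
    rw [two_mul, pow_add]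
    rcases hApown with hc | hc <;> rw [hc] <;> simp
  have h2n : 0 < 2*n := by omega
  have hdet : A.det = 1 ∨ A.det = -1 := by
    have hdd : A.det ^ (2*n) = 1 := by
      rw [← Matrix.det_pow, hApow, Matrix.det_one]
    exact Int.isUnit_iff.mp (IsUnit.of_pow_eq_one hdd h2n.ne')
  have habs : |A.trace| ≤ 2 := by
    by_contra hge
    exact PGL2Z_aux_trace_big A (2*n) h2n hApow (by omega)
  have hAA2pow : (A*A)^(2*n) = 1 := by
    rw [← pow_two, ← pow_mul, mul_comm 2 (2*n), pow_mul, hApow, one_pow]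
  have hTAA : (A*A).trace = A.trace * A.trace - 2 * A.det := by
    rw [PGL2Z_aux_ch2, Matrix.trace_sub, Matrix.trace_smul, Matrix.trace_smul, Matrix.trace_one]
    simp only [smul_eq_mul]
    norm_num
    ring
  have ht5 : A.trace = -2 ∨ A.trace = -1 ∨ A.trace = 0 ∨ A.trace = 1 ∨ A.trace = 2 := by
    rcases abs_le.mp habs with ⟨hl, hr⟩
    omega
  rcases hdet with hd | hd
  · -- det A = 1
    rcases ht5 with htr | htr | htr | htr | htr
    · -- trace -2 : A = -1
      have hnegA : -A = 1 := by
        apply PGL2Z_aux_unip (-A) (2*n) h2n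
        · rw [Even.neg_pow ⟨n, by ring⟩, hApow]
        · rw [Matrix.trace_neg, htr]; ring
        · rw [Matrix.det_neg]; simp [hd]
      have hA1 : A = -1 := by
        have := congrArg Neg.neg hnegA
        simpa using this
      exact main2 (Or.inl (by rw [hA1]; simp))
    · -- trace -1 : order 3
      apply main3 M rfl
      have hch := PGL2Z_aux_ch2 A
      rw [htr, hd] at hch
      rw [show ((M : Matrix (Fin 2) (Fin 2) ℤ)) = A from rfl, hch]
      simp only [neg_smul, one_smul]
      abel
    · -- trace 0 : A² = -1
      apply main2
      right
      have hch := PGL2Z_aux_ch2 A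
      rw [htr, hd] at hch
      rw [hch]
      simp
    · -- trace 1 : -A has order 3
      have hmem : (-1 : GL (Fin 2) ℤ) ∈ Subgroup.center (GL (Fin 2) ℤ) := by
        apply Subgroup.mem_center_iff.mpr
        intro g
        apply Units.ext
        simp
      have him : (QuotientGroup.mk (-M) : PGL2Z) = QuotientGroup.mk M := by
        have : (-M) = M * (-1) := by
          apply Units.ext
          simp
        rw [this, QuotientGroup.mk_mul,
          (QuotientGroup.eq_one_iff (-1 : GL (Fin 2) ℤ)).mpr hmem, mul_one]
      apply main3 (-M) him
      have hval : ((-M : GL (Fin 2) ℤ) : Matrix (Fin 2) (Fin 2) ℤ) = -A := by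
        simp [hAdef]
      rw [hval]
      have hch := PGL2Z_aux_ch2 A
      rw [htr, hd] at hch
      simp only [one_smul] at hch
      rw [neg_mul_neg, hch]
      abel
    · -- trace 2 : A = 1
      have hA1 : A = 1 := PGL2Z_aux_unip A (2*n) h2n hApow htr hd
      exact main2 (Or.inl (by rw [hA1]; simp))
  · -- det A = -1
    rcases ht5 with htr | htr | htr | htr | htr
    · exfalso
      apply PGL2Z_aux_trace_big (A*A) (2*n) h2n hAA2pow
      rw [hTAA, htr, hd]; norm_num
    · exfalso
      apply PGL2Z_aux_trace_big (A*A) (2*n) h2n hAA2pow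
      rw [hTAA, htr, hd]; norm_num
    · apply main2
      left
      have hch := PGL2Z_aux_ch2 A
      rw [htr, hd] at hch
      rw [hch]
      simp
    · exfalso
      apply PGL2Z_aux_trace_big (A*A) (2*n) h2n hAA2pow
      rw [hTAA, htr, hd]; norm_num
    · exfalso
      apply PGL2Z_aux_trace_big (A*A) (2*n) h2n hAA2pow
      rw [hTAA, htr, hd]; norm_num
end

section
/- Theorem 2, case (3): If F ∈ PGL(2,ℤ) satisfies F² = 1 and F ≠ 1, then the reversing symmetry group R(F) = {G ∈ PGL(2,ℤ) : G·F·G⁻¹ = F or G·F·G⁻¹ = F⁻¹} is isomorphic to D₂ ≅ C₂ × C₂, the Klein four group (i.e. to ZMod 2 × ZMod 2). -/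
open Matrix

lemma intCircle (x y δ : ℤ) (hδ : δ = 1 ∨ δ = -1) (h : x^2 + y^2 = δ) :
    (x = 1 ∧ y = 0) ∨ (x = -1 ∧ y = 0) ∨ (x = 0 ∧ y = 1) ∨ (x = 0 ∧ y = -1) := by
  have hδ1 : δ = 1 := by
    rcases hδ with h'|h'
    · exact h'
    · exfalso; nlinarith [sq_nonneg x, sq_nonneg y]
  subst hδ1
  have hx1 : -1 ≤ x := by nlinarith [sq_nonneg (x+1), sq_nonneg y]
  have hx2 : x ≤ 1 := by nlinarith [sq_nonneg (x-1), sq_nonneg y]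
  have hy1 : -1 ≤ y := by nlinarith [sq_nonneg (y+1), sq_nonneg x]
  have hy2 : y ≤ 1 := by nlinarith [sq_nonneg (y-1), sq_nonneg x]
  interval_cases x <;> interval_cases y <;> revert h <;> norm_num

lemma intHyperbola (x y δ : ℤ) (hδ : δ = 1 ∨ δ = -1) (h : x^2 - y^2 = δ) :
    (x = 1 ∧ y = 0) ∨ (x = -1 ∧ y = 0) ∨ (x = 0 ∧ y = 1) ∨ (x = 0 ∧ y = -1) := by
  rcases hδ with h'|h' <;> subst h'
  · have h2 : (x - y) * (x + y) = 1 := by linear_combination h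
    rcases Int.mul_eq_one_iff_eq_one_or_neg_one.mp h2 with ⟨u,v⟩|⟨u,v⟩
    · exact Or.inl ⟨by omega, by omega⟩
    · exact Or.inr (Or.inl ⟨by omega, by omega⟩)
  · have h2 : (x - y) * (-(x + y)) = 1 := by linear_combination -h
    rcases Int.mul_eq_one_iff_eq_one_or_neg_one.mp h2 with ⟨u,v⟩|⟨u,v⟩
    · exact Or.inr (Or.inr (Or.inr ⟨by omega, by omega⟩))
    · exact Or.inr (Or.inr (Or.inl ⟨by omega, by omega⟩))

lemma exists_t' (a b : ℤ) (hb : b ≠ 0) : ∃ t : ℤ, 2 * (a - t * b).natAbs ≤ b.natAbs := by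
  rcases lt_or_gt_of_ne hb with hneg | hpos
  · obtain ⟨t, ht⟩ : ∃ t : ℤ, 2 * (a - t * (-b)).natAbs ≤ (-b).natAbs := by
      have hb' : (0:ℤ) < -b := by omega
      have h1 : 0 ≤ a % (-b) := Int.emod_nonneg a (by omega)
      have h2 : a % (-b) < -b := Int.emod_lt_of_pos a hb'
      have e1 : a - (a / (-b)) * (-b) = a % (-b) := by rw [Int.emod_def]; ring
      have e2 : a - (a / (-b) + 1) * (-b) = a % (-b) - (-b) := by rw [Int.emod_def]; ring
      rcases le_or_gt (2 * (a % (-b))) (-b) with h | h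
      · exact ⟨a / (-b), by rw [e1]; omega⟩
      · exact ⟨a / (-b) + 1, by rw [e2]; omega⟩
    refine ⟨-t, ?_⟩
    rw [show a - -t * b = a - t * (-b) by ring, ← Int.natAbs_neg b]
    exact ht
  · have h1 : 0 ≤ a % b := Int.emod_nonneg a hb
    have h2 : a % b < b := Int.emod_lt_of_pos a hpos
    have e1 : a - (a / b) * b = a % b := by rw [Int.emod_def]; ring
    have e2 : a - (a / b + 1) * b = a % b - b := by rw [Int.emod_def]; ring
    rcases le_or_gt (2 * (a % b)) b with h | h
    · exact ⟨a / b, by rw [e1]; omega⟩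
    · exact ⟨a / b + 1, by rw [e2]; omega⟩

lemma classify : ∀ (n : ℕ) (a b c ε δ x y z w : ℤ), a.natAbs ≤ n →
    (ε = 1 ∨ ε = -1) → a^2 + b*c = ε → (δ = 1 ∨ δ = -1) → x*w - y*z = δ →
    y*c = b*z → b*(x-w) = 2*a*y → 2*a*z = c*(x-w) →
    ∃ σ : ℤ, (σ = 1 ∨ σ = -1) ∧
      ((x = σ ∧ y = 0 ∧ z = 0 ∧ w = σ) ∨
       (x = σ*a ∧ y = σ*b ∧ z = σ*c ∧ w = -(σ*a))) := by
  intro n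
  induction n using Nat.strong_induction_on with
  | _ n IH =>
    intro a b c ε δ x y z w hn hε hM hδ hdet e1 e2 e3
    by_cases ha : a = 0
    · subst ha
      have hbc : b * c = ε := by linear_combination hM
      have hb1 : b = 1 ∨ b = -1 := by
        rcases hε with h|h <;> subst h
        · rcases Int.mul_eq_one_iff_eq_one_or_neg_one.mp hbc with ⟨u,_⟩|⟨u,_⟩
          · exact Or.inl u
          · exact Or.inr u
        · have : b * (-c) = 1 := by linear_combination -hbc
          rcases Int.mul_eq_one_iff_eq_one_or_neg_one.mp this with ⟨u,_⟩|⟨u,_⟩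
          · exact Or.inl u
          · exact Or.inr u
      rcases hε with hE|hE <;> subst hE <;> rcases hb1 with hb'|hb' <;> subst hb'
      · -- ε = 1, b = 1, so c = 1
        have hc : c = 1 := by linarith [hbc]
        subst hc
        have hz : z = y := by linarith [e1]
        have hxw : x = w := by linarith [e2]
        have hd : x^2 - y^2 = δ := by linear_combination hdet + x*hxw + y*hz
        rcases intHyperbola x y δ hδ hd with H|H|H|H <;>
          first
            | exact ⟨1, Or.inl rfl, Or.inl (by omega)⟩
            | exact ⟨-1, Or.inr rfl, Or.inl (by omega)⟩
            | exact ⟨1, Or.inl rfl, Or.inr (by omega)⟩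
            | exact ⟨-1, Or.inr rfl, Or.inr (by omega)⟩
      · -- ε = 1, b = -1, c = -1
        have hc : c = -1 := by linarith [hbc]
        subst hc
        have hz : z = y := by linarith [e1]
        have hxw : x = w := by linarith [e2]
        have hd : x^2 - y^2 = δ := by linear_combination hdet + x*hxw + y*hz
        rcases intHyperbola x y δ hδ hd with H|H|H|H <;>
          first
            | exact ⟨1, Or.inl rfl, Or.inl (by omega)⟩
            | exact ⟨-1, Or.inr rfl, Or.inl (by omega)⟩
            | exact ⟨1, Or.inl rfl, Or.inr (by omega)⟩
            | exact ⟨-1, Or.inr rfl, Or.inr (by omega)⟩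
      · -- ε = -1, b = 1, c = -1
        have hc : c = -1 := by linarith [hbc]
        subst hc
        have hz : z = -y := by linarith [e1]
        have hxw : x = w := by linarith [e2]
        have hd : x^2 + y^2 = δ := by linear_combination hdet + x*hxw + y*hz
        rcases intCircle x y δ hδ hd with H|H|H|H <;>
          first
            | exact ⟨1, Or.inl rfl, Or.inl (by omega)⟩
            | exact ⟨-1, Or.inr rfl, Or.inl (by omega)⟩
            | exact ⟨1, Or.inl rfl, Or.inr (by omega)⟩
            | exact ⟨-1, Or.inr rfl, Or.inr (by omega)⟩
      · -- ε = -1, b = -1, c = 1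
        have hc : c = 1 := by linarith [hbc]
        subst hc
        have hz : z = -y := by linarith [e1]
        have hxw : x = w := by linarith [e2]
        have hd : x^2 + y^2 = δ := by linear_combination hdet + x*hxw + y*hz
        rcases intCircle x y δ hδ hd with H|H|H|H <;>
          first
            | exact ⟨1, Or.inl rfl, Or.inl (by omega)⟩
            | exact ⟨-1, Or.inr rfl, Or.inl (by omega)⟩
            | exact ⟨1, Or.inl rfl, Or.inr (by omega)⟩
            | exact ⟨-1, Or.inr rfl, Or.inr (by omega)⟩
    · by_cases hb : b ≠ 0 ∧ b.natAbs ≤ a.natAbs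
      · obtain ⟨t, ht⟩ := exists_t' a b hb.1
        have hdec : (a - t*b).natAbs < n := by
          have h3 : a.natAbs ≠ 0 := fun h => ha (Int.natAbs_eq_zero.mp h)
          have := hb.2; omega
        obtain ⟨σ, hσ, H⟩ := IH _ hdec (a - t*b) b (c + 2*t*a - t^2*b) ε δ
          (x - t*y) y (z + t*(x-w) - t^2*y) (w + t*y) le_rfl hε
          (by linear_combination hM) hδ
          (by linear_combination hdet)
          (by linear_combination e1 - t*e2)
          (by linear_combination e2)
          (by linear_combination e3 + 2*t*e1 - t^2*e2)
        rcases H with ⟨h1, h2, h3, h4⟩ | ⟨h1, h2, h3, h4⟩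
        · refine ⟨σ, hσ, Or.inl ⟨?_, h2, ?_, ?_⟩⟩
          · linear_combination h1 + t*h2
          · linear_combination h3 - t*h1 + t*h4 - t^2*h2
          · linear_combination h4 - t*h2
        · refine ⟨σ, hσ, Or.inr ⟨?_, h2, ?_, ?_⟩⟩
          · linear_combination h1 + t*h2
          · linear_combination h3 - t*h1 + t*h4 - t^2*h2
          · linear_combination h4 - t*h2
      · by_cases hc : c ≠ 0 ∧ c.natAbs ≤ a.natAbs
        · obtain ⟨t, ht⟩ := exists_t' a (-c) (by omega)
          have ht' : 2 * (a + t*c).natAbs ≤ c.natAbs := by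
            rw [show a + t*c = a - t*(-c) by ring, ← Int.natAbs_neg c]
            exact ht
          have hdec : (a + t*c).natAbs < n := by
            have h3 : a.natAbs ≠ 0 := fun h => ha (Int.natAbs_eq_zero.mp h)
            have := hc.2; omega
          obtain ⟨σ, hσ, H⟩ := IH _ hdec (a + t*c) (b - 2*t*a - t^2*c) c ε δ
            (x + t*z) (y + t*(w-x) - t^2*z) z (w - t*z) le_rfl hε
            (by linear_combination hM) hδ
            (by linear_combination hdet)
            (by linear_combination e1 + t*e3)
            (by linear_combination e2 - 2*t*e1 - t^2*e3)
            (by linear_combination e3)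
          rcases H with ⟨h1, h2, h3, h4⟩ | ⟨h1, h2, h3, h4⟩
          · refine ⟨σ, hσ, Or.inl ⟨?_, ?_, h3, ?_⟩⟩
            · linear_combination h1 - t*h3
            · linear_combination h2 + t*h1 - t*h4 - t^2*h3
            · linear_combination h4 + t*h3
          · refine ⟨σ, hσ, Or.inr ⟨?_, ?_, h3, ?_⟩⟩
            · linear_combination h1 - t*h3
            · linear_combination h2 + t*h1 - t*h4 - t^2*h3
            · linear_combination h4 + t*h3
        · push_neg at hb hc
          by_cases hb0 : b = 0
          · subst hb0
            have ha2 : a^2 = ε := by linear_combination hM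
            have hε1 : ε = 1 := by
              rcases hε with h|h
              · exact h
              · exfalso; nlinarith [sq_nonneg a]
            subst hε1
            have ha1 : a = 1 ∨ a = -1 := by
              have h2 : a * a = 1 := by linear_combination ha2
              rcases Int.mul_eq_one_iff_eq_one_or_neg_one.mp h2 with ⟨u,_⟩|⟨u,_⟩
              · exact Or.inl u
              · exact Or.inr u
            have hy0 : y = 0 := by rcases ha1 with h|h <;> subst h <;> linarith [e2]
            subst hy0
            have hxw : x * w = δ := by linear_combination hdet
            rcases hδ with hD|hD <;> subst hD
            · rcases Int.mul_eq_one_iff_eq_one_or_neg_one.mp hxw with ⟨u,v⟩|⟨u,v⟩ <;>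
                subst u <;> subst v <;> rcases ha1 with h|h <;> subst h <;>
                first
                  | exact ⟨1, Or.inl rfl, Or.inl (by omega)⟩
                  | exact ⟨-1, Or.inr rfl, Or.inl (by omega)⟩
            · have hxw2 : x * (-w) = 1 := by linear_combination -hxw
              rcases Int.mul_eq_one_iff_eq_one_or_neg_one.mp hxw2 with ⟨u,v⟩|⟨u,v⟩
              · subst u
                have hw : w = -1 := by omega
                subst hw
                rcases ha1 with h|h <;> subst h <;>
                first
                  | exact ⟨1, Or.inl rfl, Or.inr (by omega)⟩
                  | exact ⟨-1, Or.inr rfl, Or.inr (by omega)⟩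
              · subst u
                have hw : w = 1 := by omega
                subst hw
                rcases ha1 with h|h <;> subst h <;>
                first
                  | exact ⟨1, Or.inl rfl, Or.inr (by omega)⟩
                  | exact ⟨-1, Or.inr rfl, Or.inr (by omega)⟩
          · by_cases hc0 : c = 0
            · subst hc0
              have ha2 : a^2 = ε := by linear_combination hM
              have hε1 : ε = 1 := by
                rcases hε with h|h
                · exact h
                · exfalso; nlinarith [sq_nonneg a]
              subst hε1
              have ha1 : a = 1 ∨ a = -1 := by
                have h2 : a * a = 1 := by linear_combination ha2
                rcases Int.mul_eq_one_iff_eq_one_or_neg_one.mp h2 with ⟨u,_⟩|⟨u,_⟩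
                · exact Or.inl u
                · exact Or.inr u
              have hz0 : z = 0 := by rcases ha1 with h|h <;> subst h <;> linarith [e3]
              subst hz0
              have hxw : x * w = δ := by linear_combination hdet
              rcases hδ with hD|hD <;> subst hD
              · rcases Int.mul_eq_one_iff_eq_one_or_neg_one.mp hxw with ⟨u,v⟩|⟨u,v⟩ <;>
                  subst u <;> subst v <;> rcases ha1 with h|h <;> subst h <;>
                  first
                    | exact ⟨1, Or.inl rfl, Or.inl (by omega)⟩
                    | exact ⟨-1, Or.inr rfl, Or.inl (by omega)⟩
              · have hxw2 : x * (-w) = 1 := by linear_combination -hxw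
                rcases Int.mul_eq_one_iff_eq_one_or_neg_one.mp hxw2 with ⟨u,v⟩|⟨u,v⟩
                · subst u
                  have hw : w = -1 := by omega
                  subst hw
                  rcases ha1 with h|h <;> subst h <;>
                  first
                    | exact ⟨1, Or.inl rfl, Or.inr (by omega)⟩
                    | exact ⟨-1, Or.inr rfl, Or.inr (by omega)⟩
                · subst u
                  have hw : w = 1 := by omega
                  subst hw
                  rcases ha1 with h|h <;> subst h <;>
                  first
                    | exact ⟨1, Or.inl rfl, Or.inr (by omega)⟩
                    | exact ⟨-1, Or.inr rfl, Or.inr (by omega)⟩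
            · exfalso
              have hb' : a.natAbs + 1 ≤ b.natAbs := by have := hb hb0; omega
              have hc' : a.natAbs + 1 ≤ c.natAbs := by have := hc hc0; omega
              have e2' : a.natAbs * a.natAbs + 2*a.natAbs + 1 ≤ b.natAbs * c.natAbs := by
                calc a.natAbs * a.natAbs + 2*a.natAbs + 1 = (a.natAbs+1) * (a.natAbs+1) := by ring
                _ ≤ b.natAbs * c.natAbs := Nat.mul_le_mul hb' hc'
              have e3' : b.natAbs * c.natAbs = (ε - a^2).natAbs := by
                rw [← Int.natAbs_mul]; congr 1; linear_combination hM
              have e1' : (ε - a^2).natAbs ≤ 1 + a.natAbs * a.natAbs := by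
                calc (ε - a^2).natAbs ≤ ε.natAbs + (a^2).natAbs := Int.natAbs_sub_le ε (a^2)
                _ ≤ 1 + a.natAbs * a.natAbs := by
                    rw [pow_two, Int.natAbs_mul]
                    rcases hε with h|h <;> subst h <;> simp
              have h5 : a.natAbs ≠ 0 := fun h => ha (Int.natAbs_eq_zero.mp h)
              have : 1 ≤ a.natAbs := by omega
              linarith

lemma exists_rev : ∀ (n : ℕ) (a b c ε : ℤ), a.natAbs ≤ n → (ε = 1 ∨ ε = -1) →
    a^2 + b*c = ε →
    ∃ x y z : ℤ, 2*a*x + c*y + b*z = 0 ∧ (x^2 + y*z = 1 ∨ x^2 + y*z = -1) := by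
  intro n
  induction n using Nat.strong_induction_on with
  | _ n IH =>
    intro a b c ε hn hε hM
    by_cases ha : a = 0
    · subst ha
      refine ⟨0, b, -c, by ring, ?_⟩
      rcases hε with h | h <;> subst h
      · exact Or.inr (by linear_combination -hM)
      · exact Or.inl (by linear_combination -hM)
    · by_cases hb : b ≠ 0 ∧ b.natAbs ≤ a.natAbs
      · obtain ⟨t, ht⟩ := exists_t' a b hb.1
        have hdec : (a - t*b).natAbs < n := by
          have h3 : a.natAbs ≠ 0 := fun h => ha (Int.natAbs_eq_zero.mp h)
          have := hb.2; omega
        obtain ⟨x', y', z', hlin, hdet⟩ := IH _ hdec (a - t*b) b (c + 2*t*a - t^2*b) ε le_rfl hε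
          (by linear_combination hM)
        refine ⟨x' + t*y', y', z' - 2*t*x' - t^2*y', by linear_combination hlin, ?_⟩
        rcases hdet with h | h
        · exact Or.inl (by linear_combination h)
        · exact Or.inr (by linear_combination h)
      · by_cases hc : c ≠ 0 ∧ c.natAbs ≤ a.natAbs
        · obtain ⟨t, ht⟩ := exists_t' a (-c) (by omega)
          have ht' : 2 * (a + t*c).natAbs ≤ c.natAbs := by
            rw [show a + t*c = a - t*(-c) by ring, ← Int.natAbs_neg c]
            exact ht
          have hdec : (a + t*c).natAbs < n := by
            have h3 : a.natAbs ≠ 0 := fun h => ha (Int.natAbs_eq_zero.mp h)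
            have := hc.2; omega
          obtain ⟨x', y', z', hlin, hdet⟩ := IH _ hdec (a + t*c) (b - 2*t*a - t^2*c) c ε le_rfl hε
            (by linear_combination hM)
          refine ⟨x' - t*z', y' + 2*t*x' - t^2*z', z', by linear_combination hlin, ?_⟩
          rcases hdet with h | h
          · exact Or.inl (by linear_combination h)
          · exact Or.inr (by linear_combination h)
        · push_neg at hb hc
          by_cases hb0 : b = 0
          · subst hb0
            have ha2 : a^2 = ε := by linear_combination hM
            have hε1 : ε = 1 := by
              rcases hε with h|h
              · exact h
              · exfalso; nlinarith [sq_nonneg a]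
            have haa : a * a = 1 := by linear_combination ha2 + hε1
            rcases Int.even_or_odd c with ⟨k, hk⟩ | ⟨k, hk⟩
            · refine ⟨k, -a, a*(k^2-1), by rw [hk]; ring, Or.inl ?_⟩
              linear_combination (1 - k^2) * haa
            · refine ⟨-c, 2*a, -2*a*(k^2+k), by ring, Or.inl ?_⟩
              rw [hk]; linear_combination (-4*k^2-4*k) * haa
          · by_cases hc0 : c = 0
            · subst hc0
              have ha2 : a^2 = ε := by linear_combination hM
              have hε1 : ε = 1 := by
                rcases hε with h|h
                · exact h
                · exfalso; nlinarith [sq_nonneg a]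
              have haa : a * a = 1 := by linear_combination ha2 + hε1
              rcases Int.even_or_odd b with ⟨k, hk⟩ | ⟨k, hk⟩
              · refine ⟨k, a*(k^2-1), -a, by rw [hk]; ring, Or.inl ?_⟩
                linear_combination (1 - k^2) * haa
              · refine ⟨-b, -2*a*(k^2+k), 2*a, by ring, Or.inl ?_⟩
                rw [hk]; linear_combination (-4*k^2-4*k) * haa
            · exfalso
              have hb' : a.natAbs + 1 ≤ b.natAbs := by have := hb hb0; omega
              have hc' : a.natAbs + 1 ≤ c.natAbs := by have := hc hc0; omega
              have e2 : a.natAbs * a.natAbs + 2*a.natAbs + 1 ≤ b.natAbs * c.natAbs := by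
                calc a.natAbs * a.natAbs + 2*a.natAbs + 1 = (a.natAbs+1) * (a.natAbs+1) := by ring
                _ ≤ b.natAbs * c.natAbs := Nat.mul_le_mul hb' hc'
              have e3 : b.natAbs * c.natAbs = (ε - a^2).natAbs := by
                rw [← Int.natAbs_mul]; congr 1; linear_combination hM
              have e1 : (ε - a^2).natAbs ≤ 1 + a.natAbs * a.natAbs := by
                calc (ε - a^2).natAbs ≤ ε.natAbs + (a^2).natAbs := Int.natAbs_sub_le ε (a^2)
                _ ≤ 1 + a.natAbs * a.natAbs := by
                    rw [pow_two, Int.natAbs_mul]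
                    rcases hε with h|h <;> subst h <;> simp
              have h5 : a.natAbs ≠ 0 := fun h => ha (Int.natAbs_eq_zero.mp h)
              have : 1 ≤ a.natAbs := by omega
              linarith



lemma fin_two_ext_iff (a1 b1 c1 d1 a2 b2 c2 d2 : ℤ) :
    (!![a1,b1;c1,d1] = !![a2,b2;c2,d2]) ↔ (a1=a2 ∧ b1=b2 ∧ c1=c2 ∧ d1=d2) := by
  constructor
  · intro h
    rw [← Matrix.ext_iff] at h
    exact ⟨h 0 0, h 0 1, h 1 0, h 1 1⟩
  · rintro ⟨rfl, rfl, rfl, rfl⟩; rfl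

lemma neg_fin_two (p q r s : ℤ) : -(!![p,q;r,s]) = !![-p,-q;-r,-s] := by
  ext i j; fin_cases i <;> fin_cases j <;> simp

lemma neg_one_fin_two : (-1 : Matrix (Fin 2) (Fin 2) ℤ) = !![-1,0;0,-1] := by
  rw [show (-1 : Matrix (Fin 2) (Fin 2) ℤ) = -(1:Matrix (Fin 2) (Fin 2) ℤ) from rfl,
    Matrix.one_fin_two, neg_fin_two]; norm_num

def mkGL (A : Matrix (Fin 2) (Fin 2) ℤ) (h : A.det = 1 ∨ A.det = -1) : GL (Fin 2) ℤ where
  val := A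
  inv := A.det • A.adjugate
  val_inv := by
    rw [Matrix.mul_smul, Matrix.mul_adjugate, smul_smul]
    rcases h with h|h <;> rw [h] <;> norm_num
  inv_val := by
    rw [Matrix.smul_mul, Matrix.adjugate_mul, smul_smul]
    rcases h with h|h <;> rw [h] <;> norm_num

@[simp] lemma mkGL_val (A : Matrix (Fin 2) (Fin 2) ℤ) (h) : (mkGL A h).val = A := rfl

lemma det_fin_two_eq (a b c d : ℤ) : (!![a,b;c,d]).det = a*d - b*c := by
  simp [Matrix.det_fin_two]

lemma GL_det_pm (g : GL (Fin 2) ℤ) : g.val.det = 1 ∨ g.val.det = -1 := by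
  have : IsUnit g.val.det := (Matrix.isUnit_iff_isUnit_det _).mp g.isUnit
  exact Int.isUnit_iff.mp this

lemma center_iff (X : GL (Fin 2) ℤ) :
    X ∈ Subgroup.center (GL (Fin 2) ℤ) ↔ X = 1 ∨ X = -1 := by
  constructor
  · intro hX
    have h := Subgroup.mem_center_iff.mp hX
    set A := X.val with hA
    set a := A 0 0; set b := A 0 1; set c := A 1 0; set d := A 1 1
    have hAeta : A = !![a, b; c, d] := Matrix.eta_fin_two A
    have hE : ((mkGL !![1,1;0,1] (by rw [det_fin_two_eq]; norm_num)) * X).val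
        = (X * (mkGL !![1,1;0,1] (by rw [det_fin_two_eq]; norm_num))).val := by rw [h]
    have hE' : ((mkGL !![1,0;1,1] (by rw [det_fin_two_eq]; norm_num)) * X).val
        = (X * (mkGL !![1,0;1,1] (by rw [det_fin_two_eq]; norm_num))).val := by rw [h]
    rw [Units.val_mul, Units.val_mul, mkGL_val, ← hA, hAeta, Matrix.mul_fin_two,
      Matrix.mul_fin_two, fin_two_ext_iff] at hE hE'
    obtain ⟨p1, p2, p3, p4⟩ := hE
    obtain ⟨q1, q2, q3, q4⟩ := hE'
    have hc : c = 0 := by linarith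
    have hb : b = 0 := by linarith
    have hda : d = a := by linarith
    have hdet := GL_det_pm X
    rw [← hA, hAeta, det_fin_two_eq, hb, hc, hda] at hdet
    have ha1 : a = 1 ∨ a = -1 := by
      rcases hdet with h'|h'
      · rcases Int.mul_eq_one_iff_eq_one_or_neg_one.mp (by linarith : a * a = 1) with ⟨u,_⟩|⟨u,_⟩
        · exact Or.inl u
        · exact Or.inr u
      · exfalso; nlinarith
    rcases ha1 with h'|h'
    · left; apply Units.ext
      show A = 1
      rw [hAeta, hb, hc, hda, h', Matrix.one_fin_two]
    · right; apply Units.ext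
      show A = (-1 : GL (Fin 2) ℤ).val
      rw [Units.val_neg, Units.val_one, hAeta, hb, hc, hda, h', neg_one_fin_two]
  · rintro (rfl | rfl)
    · exact Subgroup.one_mem _
    · rw [Subgroup.mem_center_iff]
      intro g
      apply Units.ext
      rw [Units.val_mul, Units.val_mul, Units.val_neg, Units.val_one, mul_neg_one, neg_one_mul]

lemma mk_eq (A B : GL (Fin 2) ℤ) : (A : PGL2Z) = (B : PGL2Z) ↔ A = B ∨ A = -B := by
  rw [QuotientGroup.eq, center_iff]
  constructor
  · rintro (h | h)
    · left; exact inv_mul_eq_one.mp h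
    · right
      have : B = A * (-1) := by rw [← h]; group
      rw [this, mul_neg_one, neg_neg]
  · rintro (rfl | rfl)
    · left; simp
    · right
      rw [inv_mul_eq_iff_eq_mul, mul_neg_one, neg_neg]

/-- The reversing symmetry group of `F` in a group `Γ`:
`R(F) = {G : G·F·G⁻¹ = F or G·F·G⁻¹ = F⁻¹}`. -/
def reversingSymmetryGroup {Γ : Type*} [Group Γ] (F : Γ) : Subgroup Γ where
  carrier := {G | G * F * G⁻¹ = F ∨ G * F * G⁻¹ = F⁻¹}
  one_mem' := by simp
  mul_mem' := by
    rintro a b (hb | hb) (ha | ha) <;>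
    · have : a * b * F * (a * b)⁻¹ = a * (b * F * b⁻¹) * a⁻¹ := by group
      rw [Set.mem_setOf_eq, this, ha]
      first
        | exact Or.inl hb
        | exact Or.inr hb
        | · rw [show a * F⁻¹ * a⁻¹ = (a * F * a⁻¹)⁻¹ by group, hb]
            first
              | exact Or.inr rfl
              | (rw [inv_inv]; exact Or.inl rfl)
  inv_mem' := by
    rintro a (ha | ha)
    · left
      rw [inv_inv]
      calc a⁻¹ * F * a = a⁻¹ * (a * F * a⁻¹) * a := by rw [ha]
        _ = F := by group
    · right
      rw [inv_inv]
      calc a⁻¹ * F * a = (a⁻¹ * F⁻¹ * a)⁻¹ := by group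
        _ = F⁻¹ := by
            rw [show a⁻¹ * F⁻¹ * a = F from by rw [← ha]; group]

/-- If `F ∈ PGL(2,ℤ)` satisfies `F² = 1`, `F ≠ 1`, then its reversing symmetry
group is isomorphic to `D₂ ≅ C₂ × C₂`, the Klein four group. -/
theorem PGL2Z_revGroup_of_involution (F : PGL2Z) (h2 : F ^ 2 = 1) (h1 : F ≠ 1) :
    Nonempty (reversingSymmetryGroup F ≃* Multiplicative (ZMod 2 × ZMod 2)) := by
  obtain ⟨M, rfl⟩ := QuotientGroup.mk_surjective F
  set A := M.val with hAdef
  have GLone_ne : (1 : GL (Fin 2) ℤ) ≠ -1 := by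
    intro hcon
    have h' := congrArg Units.val hcon
    rw [Units.val_one, Units.val_neg, Units.val_one, Matrix.one_fin_two, neg_fin_two,
      fin_two_ext_iff] at h'
    exact absurd h'.1 (by norm_num)
  have hsqGL : M * M = 1 ∨ M * M = -1 := by
    apply (mk_eq (M*M) 1).mp
    have : ((M*M : GL (Fin 2) ℤ) : PGL2Z) = (M : PGL2Z) * (M : PGL2Z) := rfl
    rw [this, ← pow_two]
    exact h2
  have hsq : A * A = 1 ∨ A * A = -1 := by
    rcases hsqGL with h | h
    · left
      have := congrArg Units.val h
      rwa [Units.val_mul, Units.val_one] at this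
    · right
      have := congrArg Units.val h
      rwa [Units.val_mul, Units.val_neg, Units.val_one] at this
  have hM1 : A ≠ 1 := by
    intro hA1
    exact h1 (by rw [show M = 1 from Units.ext hA1]; rfl)
  have hM1' : A ≠ -1 := by
    intro hA1
    apply h1
    have hMeq : M = -1 := Units.ext (show A = _ by rw [hA1, Units.val_neg, Units.val_one])
    rw [hMeq]
    exact (mk_eq (-1) 1).mpr (Or.inr rfl)
  set a := A 0 0 with hadef
  set b := A 0 1 with hbdef
  set c := A 1 0 with hcdef
  set d := A 1 1 with hddef
  have hAeta : A = !![a, b; c, d] := Matrix.eta_fin_two A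
  obtain ⟨ε, hε, m1, m2, m3, m4⟩ :
      ∃ ε : ℤ, (ε = 1 ∨ ε = -1) ∧ a*a + b*c = ε ∧ a*b + b*d = 0 ∧ c*a + d*c = 0 ∧ c*b + d*d = ε := by
    rcases hsq with h | h
    · refine ⟨1, Or.inl rfl, ?_⟩
      rw [hAeta, Matrix.mul_fin_two, Matrix.one_fin_two, fin_two_ext_iff] at h
      exact ⟨h.1, h.2.1, h.2.2.1, h.2.2.2⟩
    · refine ⟨-1, Or.inr rfl, ?_⟩
      rw [hAeta, Matrix.mul_fin_two, neg_one_fin_two, fin_two_ext_iff] at h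
      exact ⟨h.1, h.2.1, h.2.2.1, h.2.2.2⟩
  have hd : d = -a := by
    by_contra hcon
    have hb0 : b = 0 := by
      rcases mul_eq_zero.mp (show b*(a+d) = 0 by linear_combination m2) with h | h
      · exact h
      · exact absurd (by linarith) hcon
    have hc0 : c = 0 := by
      rcases mul_eq_zero.mp (show c*(a+d) = 0 by linear_combination m3) with h | h
      · exact h
      · exact absurd (by linarith) hcon
    have ha2 : a*a = ε := by linear_combination m1 - c*hb0
    have hd2 : d*d = ε := by linear_combination m4 - b*hc0
    have hε1 : ε = 1 := by
      rcases hε with h|h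
      · exact h
      · exfalso; nlinarith
    subst hε1
    have ha1 : a = 1 ∨ a = -1 := by
      rcases Int.mul_eq_one_iff_eq_one_or_neg_one.mp ha2 with ⟨u,_⟩|⟨u,_⟩
      · exact Or.inl u
      · exact Or.inr u
    have hd1 : d = 1 ∨ d = -1 := by
      rcases Int.mul_eq_one_iff_eq_one_or_neg_one.mp hd2 with ⟨u,_⟩|⟨u,_⟩
      · exact Or.inl u
      · exact Or.inr u
    rcases ha1 with h|h <;> rcases hd1 with h'|h'
    · exact hM1 (by rw [hAeta, hb0, hc0, h, h', Matrix.one_fin_two])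
    · exact hcon (by omega)
    · exact hcon (by omega)
    · exact hM1' (by rw [hAeta, hb0, hc0, h, h', neg_one_fin_two])
  have hA' : A = !![a, b; c, -a] := by rw [hAeta, hd]
  have hM0 : a^2 + b*c = ε := by linear_combination m1
  -- construct the anticommuting element
  obtain ⟨x0, y0, z0, hlin, hquad⟩ := exists_rev a.natAbs a b c ε le_rfl hε hM0
  have hXdet : (!![x0,y0;z0,-x0]).det = 1 ∨ (!![x0,y0;z0,-x0]).det = -1 := by
    rw [det_fin_two_eq]
    rcases hquad with h|h
    · right; linear_combination -h
    · left; linear_combination -h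
  set G0 : GL (Fin 2) ℤ := mkGL _ hXdet with hG0def
  have hG0val : G0.val = !![x0, y0; z0, -x0] := rfl
  have hanti : G0.val * A = -(A * G0.val) := by
    rw [hG0val, hA', Matrix.mul_fin_two, Matrix.mul_fin_two, neg_fin_two, fin_two_ext_iff]
    exact ⟨by linear_combination hlin, by ring, by ring, by linear_combination hlin⟩
  have hantiGL : G0 * M = -(M * G0) := by
    apply Units.ext
    rw [Units.val_mul, Units.val_neg, Units.val_mul]
    exact hanti
  have hG0sq : G0 * G0 = 1 ∨ G0 * G0 = -1 := by
    rcases hquad with h|h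
    · left; apply Units.ext
      rw [Units.val_mul, hG0val, Matrix.mul_fin_two, Units.val_one, Matrix.one_fin_two,
        fin_two_ext_iff]
      exact ⟨by linear_combination h, by ring, by ring, by linear_combination h⟩
    · right; apply Units.ext
      rw [Units.val_mul, hG0val, Matrix.mul_fin_two, Units.val_neg, Units.val_one,
        neg_one_fin_two, fin_two_ext_iff]
      exact ⟨by linear_combination h, by ring, by ring, by linear_combination h⟩
  -- classification of commuting elements
  have comm_class : ∀ g : GL (Fin 2) ℤ, g.val * A = A * g.val →
      g = 1 ∨ g = -1 ∨ g = M ∨ g = -M := by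
    intro g hg
    have hBeta : g.val = !![g.val 0 0, g.val 0 1; g.val 1 0, g.val 1 1] := Matrix.eta_fin_two _
    set x := g.val 0 0
    set y := g.val 0 1
    set z := g.val 1 0
    set w := g.val 1 1
    have hdet := GL_det_pm g
    rw [Matrix.det_fin_two] at hdet
    rw [hBeta, hA', Matrix.mul_fin_two, Matrix.mul_fin_two, fin_two_ext_iff] at hg
    obtain ⟨g1, g2, g3, _⟩ := hg
    obtain ⟨σ, hσ, H⟩ := classify a.natAbs a b c ε (x*w - y*z) x y z w le_rfl hε hM0 hdet rfl
      (by linear_combination g1) (by linear_combination g2) (by linear_combination g3)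
    rcases H with ⟨e1,e2,e3,e4⟩|⟨e1,e2,e3,e4⟩ <;> rcases hσ with rfl|rfl
    · left; apply Units.ext
      rw [hBeta, e1, e2, e3, e4, Units.val_one, Matrix.one_fin_two]
    · right; left; apply Units.ext
      rw [hBeta, e1, e2, e3, e4, Units.val_neg, Units.val_one, neg_one_fin_two]
    · right; right; left; apply Units.ext
      rw [hBeta, e1, e2, e3, e4]
      show _ = A
      rw [hA', fin_two_ext_iff]
      exact ⟨by ring, by ring, by ring, by ring⟩
    · right; right; right; apply Units.ext
      rw [hBeta, e1, e2, e3, e4, Units.val_neg]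
      show _ = -A
      rw [hA', neg_fin_two, fin_two_ext_iff]
      exact ⟨by ring, by ring, by ring, by ring⟩
  -- PGL-level setup
  have hFF : (M : PGL2Z) * (M : PGL2Z) = 1 := by rw [← pow_two]; exact h2
  have hFinv : (M : PGL2Z)⁻¹ = (M : PGL2Z) := inv_eq_of_mul_eq_one_right hFF
  have mem_iff : ∀ P : PGL2Z, P ∈ reversingSymmetryGroup (M : PGL2Z) ↔
      P * (M : PGL2Z) * P⁻¹ = (M : PGL2Z) := by
    intro P
    have h0 : P ∈ reversingSymmetryGroup (M : PGL2Z) ↔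
        (P * (M:PGL2Z) * P⁻¹ = (M:PGL2Z) ∨ P * (M:PGL2Z) * P⁻¹ = ((M:PGL2Z))⁻¹) :=
      ⟨fun h => h, fun h => h⟩
    rw [h0, hFinv, or_self]
  set R₀ : PGL2Z := (G0 : PGL2Z) with hR₀def
  have hconj : G0 * M * G0⁻¹ = -M := by
    rw [hantiGL, neg_mul, mul_inv_cancel_right]
  have hR0mem : R₀ ∈ reversingSymmetryGroup (M : PGL2Z) := by
    apply (mem_iff R₀).mpr
    show ((G0 * M * G0⁻¹ : GL (Fin 2) ℤ) : PGL2Z) = (M : PGL2Z)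
    rw [hconj]
    exact (mk_eq (-M) M).mpr (Or.inr rfl)
  have hFmem : (M : PGL2Z) ∈ reversingSymmetryGroup (M : PGL2Z) := by
    rw [mem_iff, hFF, one_mul, hFinv]
  have hR0sq : R₀ * R₀ = 1 := by
    show ((G0 * G0 : GL (Fin 2) ℤ) : PGL2Z) = 1
    rcases hG0sq with h|h
    · rw [h]; rfl
    · rw [h]; exact (mk_eq (-1) 1).mpr (Or.inr rfl)
  have hcommFR : (M : PGL2Z) * R₀ = R₀ * (M : PGL2Z) := by
    have hstep : ((M * G0 : GL (Fin 2) ℤ) : PGL2Z) = ((G0 * M : GL (Fin 2) ℤ) : PGL2Z) := by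
      apply (mk_eq _ _).mpr
      right
      have := congrArg Neg.neg hantiGL
      rw [neg_neg] at this
      exact this.symm
    exact hstep
  have hR1 : R₀ ≠ 1 := by
    intro h
    rcases (mk_eq G0 1).mp h with h'|h'
    · have := congrArg Units.val h'
      rw [hG0val, Units.val_one, Matrix.one_fin_two, fin_two_ext_iff] at this
      omega
    · have := congrArg Units.val h'
      rw [hG0val, Units.val_neg, Units.val_one, neg_one_fin_two, fin_two_ext_iff] at this
      omega
  have hMM_contra : M * M = -(M * M) → False := by
    intro h
    rcases hsqGL with hs|hs <;> rw [hs] at h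
    · exact GLone_ne h
    · rw [neg_neg] at h
      exact GLone_ne h.symm
  have hRF : R₀ ≠ (M : PGL2Z) := by
    intro h
    rcases (mk_eq G0 M).mp h with h'|h'
    · apply hMM_contra
      have hx := hantiGL
      rw [h'] at hx
      exact hx
    · apply hMM_contra
      have := hantiGL
      rw [h', neg_mul, mul_neg, neg_neg] at this
      have hy := congrArg Neg.neg this
      rw [neg_neg] at hy
      exact hy
  -- the four-element subgroup structure
  set H := reversingSymmetryGroup (M : PGL2Z)
  set f : H := ⟨(M : PGL2Z), hFmem⟩ with hfdef
  set r : H := ⟨R₀, hR0mem⟩ with hrdef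
  have hf2 : f * f = 1 := Subtype.ext hFF
  have hr2 : r * r = 1 := Subtype.ext hR0sq
  have hfr : Commute r f := by
    apply Subtype.ext
    show R₀ * (M:PGL2Z) = (M:PGL2Z) * R₀
    exact hcommFR.symm
  have powtwo : ∀ u : H, u * u = 1 → ∀ m : ℕ, u ^ (m % 2) = u ^ m := by
    intro u hu m
    conv_rhs => rw [← Nat.div_add_mod m 2]
    rw [pow_add, pow_mul, show u^2 = 1 by rw [pow_two, hu], one_pow, one_mul]
  let φ : Multiplicative (ZMod 2 × ZMod 2) →* H :=
    MonoidHom.mk' (fun p => f ^ ((Multiplicative.toAdd p).1.val) *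
      r ^ ((Multiplicative.toAdd p).2.val)) (by
        intro p q
        show f ^ ((Multiplicative.toAdd p + Multiplicative.toAdd q).1.val) *
          r ^ ((Multiplicative.toAdd p + Multiplicative.toAdd q).2.val) = _
        rw [Prod.fst_add, Prod.snd_add, ZMod.val_add, ZMod.val_add,
          powtwo f hf2, powtwo r hr2, pow_add, pow_add,
          Commute.mul_mul_mul_comm ((hfr.pow_pow _ _)) _ _])
  have hval0 : (0 : ZMod 2).val = 0 := rfl
  have hval1 : (1 : ZMod 2).val = 1 := rfl
  have hφ : ∀ p, φ p = f ^ ((Multiplicative.toAdd p).1.val) *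
      r ^ ((Multiplicative.toAdd p).2.val) := fun _ => rfl
  have hcase : ∀ u : ZMod 2, u = 0 ∨ u = 1 := by decide
  have hinj : Function.Injective φ := by
    rw [injective_iff_map_eq_one]
    intro p hp
    rw [hφ] at hp
    rcases hcase (Multiplicative.toAdd p).1 with hi|hi <;>
      rcases hcase (Multiplicative.toAdd p).2 with hj|hj
    · have hp1 : p = Multiplicative.ofAdd (0, 0) := by
        rw [show p = Multiplicative.ofAdd (Multiplicative.toAdd p) from rfl,
          show (Multiplicative.toAdd p) =
            ((Multiplicative.toAdd p).1, (Multiplicative.toAdd p).2) from rfl, hi, hj]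
      exact hp1
    · exfalso
      rw [hi, hj, hval0, hval1, pow_zero, pow_one, one_mul] at hp
      have := congrArg Subtype.val hp
      exact hR1 this
    · exfalso
      rw [hi, hj, hval0, hval1, pow_zero, pow_one, mul_one] at hp
      have := congrArg Subtype.val hp
      exact h1 this
    · exfalso
      rw [hi, hj, hval1, pow_one, pow_one] at hp
      have hval : (M : PGL2Z) * R₀ = 1 := congrArg Subtype.val hp
      have hReq : R₀ = ((M : PGL2Z))⁻¹ := eq_inv_of_mul_eq_one_right hval
      rw [hFinv] at hReq
      exact hRF hReq
  have hsurj : Function.Surjective φ := by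
    rintro ⟨P, hPmem⟩
    have hPc := (mem_iff P).mp hPmem
    obtain ⟨g, rfl⟩ := QuotientGroup.mk_surjective P
    have hgg : ((g * M * g⁻¹ : GL (Fin 2) ℤ) : PGL2Z) = (M : PGL2Z) := hPc
    rcases (mk_eq _ _).mp hgg with h|h
    · have hgM : g * M = M * g := by
        have h2' := congrArg (· * g) h
        simp only [inv_mul_cancel_right] at h2'
        exact h2'
      have hval : g.val * A = A * g.val := by
        rw [← Units.val_mul, ← Units.val_mul, hgM]
      rcases comm_class g hval with rfl|rfl|rfl|rfl
      · exact ⟨1, by rw [_root_.map_one φ]; exact Subtype.ext rfl⟩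
      · exact ⟨1, by rw [_root_.map_one φ]; exact Subtype.ext ((mk_eq (-1) 1).mpr (Or.inr rfl)).symm⟩
      · refine ⟨Multiplicative.ofAdd (1, 0), Subtype.ext ?_⟩
        rw [hφ]
        show ((f ^ (1 : ZMod 2).val * r ^ (0 : ZMod 2).val : H) : PGL2Z) = _
        rw [hval0, hval1, pow_one, pow_zero, mul_one]
      · refine ⟨Multiplicative.ofAdd (1, 0), Subtype.ext ?_⟩
        rw [hφ]
        show ((f ^ (1 : ZMod 2).val * r ^ (0 : ZMod 2).val : H) : PGL2Z) = _
        rw [hval0, hval1, pow_one, pow_zero, mul_one]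
        exact ((mk_eq (-M) M).mpr (Or.inr rfl)).symm
    · have hgM : g * M = -(M * g) := by
        have h2' := congrArg (· * g) h
        simp only [inv_mul_cancel_right] at h2'
        rw [neg_mul] at h2'
        exact h2'
      have hG0i : G0⁻¹ * M = -(M * G0⁻¹) := by
        have hMG0 : M * G0 = -(G0 * M) := by
          have hx := congrArg Neg.neg hantiGL
          rw [neg_neg] at hx
          exact hx.symm
        calc G0⁻¹ * M = G0⁻¹ * (M * G0 * G0⁻¹) := by rw [mul_inv_cancel_right]
          _ = G0⁻¹ * (-(G0 * M) * G0⁻¹) := by rw [hMG0]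
          _ = -(G0⁻¹ * (G0 * M * G0⁻¹)) := by rw [neg_mul, mul_neg]
          _ = -(M * G0⁻¹) := by rw [show G0⁻¹ * (G0 * M * G0⁻¹) = M * G0⁻¹ by group]
      have hcomm2 : (g * G0⁻¹) * M = M * (g * G0⁻¹) := by
        calc (g * G0⁻¹) * M = g * (G0⁻¹ * M) := by rw [mul_assoc]
          _ = g * -(M * G0⁻¹) := by rw [hG0i]
          _ = -(g * M * G0⁻¹) := by rw [mul_neg, mul_assoc]
          _ = -(-(M * g) * G0⁻¹) := by rw [hgM]
          _ = M * g * G0⁻¹ := by rw [neg_mul, neg_neg]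
          _ = M * (g * G0⁻¹) := by rw [mul_assoc]
      have hval2 : (g * G0⁻¹).val * A = A * (g * G0⁻¹).val := by
        rw [← Units.val_mul, ← Units.val_mul, hcomm2]
      rcases comm_class _ hval2 with hh|hh|hh|hh
      · have hgeq : g = G0 := by
          have hx := congrArg (· * G0) hh
          simp only [inv_mul_cancel_right, one_mul] at hx
          exact hx
        subst hgeq
        refine ⟨Multiplicative.ofAdd (0, 1), Subtype.ext ?_⟩
        rw [hφ]
        show ((f ^ (0 : ZMod 2).val * r ^ (1 : ZMod 2).val : H) : PGL2Z) = _
        rw [hval0, hval1, pow_zero, pow_one, one_mul]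
      · have hgeq : g = -G0 := by
          have hx := congrArg (· * G0) hh
          simp only [inv_mul_cancel_right] at hx
          rw [hx, neg_one_mul]
        subst hgeq
        refine ⟨Multiplicative.ofAdd (0, 1), Subtype.ext ?_⟩
        rw [hφ]
        show ((f ^ (0 : ZMod 2).val * r ^ (1 : ZMod 2).val : H) : PGL2Z) = _
        rw [hval0, hval1, pow_zero, pow_one, one_mul]
        exact ((mk_eq (-G0) G0).mpr (Or.inr rfl)).symm
      · have hgeq : g = M * G0 := by
          have hx := congrArg (· * G0) hh
          simp only [inv_mul_cancel_right] at hx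
          exact hx
        subst hgeq
        refine ⟨Multiplicative.ofAdd (1, 1), Subtype.ext ?_⟩
        rw [hφ]
        show ((f ^ (1 : ZMod 2).val * r ^ (1 : ZMod 2).val : H) : PGL2Z) = _
        rw [hval1, pow_one, pow_one]
        rfl
      · have hgeq : g = -(M * G0) := by
          have hx := congrArg (· * G0) hh
          simp only [inv_mul_cancel_right] at hx
          rw [hx, neg_mul]
        subst hgeq
        refine ⟨Multiplicative.ofAdd (1, 1), Subtype.ext ?_⟩
        rw [hφ]
        show ((f ^ (1 : ZMod 2).val * r ^ (1 : ZMod 2).val : H) : PGL2Z) = _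
        rw [hval1, pow_one, pow_one]
        exact ((mk_eq (-(M * G0)) (M * G0)).mpr (Or.inr rfl)).symm
  exact ⟨(MulEquiv.ofBijective φ ⟨hinj, hsurj⟩).symm⟩
end

section
/- Theorem 2, case (4): If F ∈ PGL(2,ℤ) satisfies F³ = 1 and F ≠ 1, then the reversing symmetry group R(F) = {G ∈ PGL(2,ℤ) : G·F·G⁻¹ = F or G·F·G⁻¹ = F⁻¹} is isomorphic to the dihedral group D₃ of order 6. -/
open Matrix

namespace PGL2ZRev

/-! ### Arithmetic lemmas for the reduction of forms of discriminant -3 -/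

lemma shift_lemma (B A mI : ℤ) (h1 : 1 ≤ mI) (hA : A = mI ∨ A = -mI) :
    ∃ k : ℤ, |B + 2*A*k| ≤ mI := by
  have h2m : (0:ℤ) < 2*mI := by omega
  have h0 : 0 ≤ B % (2*mI) := Int.emod_nonneg _ (by omega)
  have hlt : B % (2*mI) < 2*mI := Int.emod_lt_of_pos _ h2m
  have hdef : B % (2*mI) = B - 2*mI*(B / (2*mI)) := Int.emod_def _ _
  set j := B / (2*mI) with hj
  rcases le_or_gt (B % (2*mI)) mI with h | h
  · rcases hA with hA | hA
    · refine ⟨-j, ?_⟩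
      rw [hA]
      have : B + 2*mI*(-j) = B % (2*mI) := by linear_combination -hdef
      rw [this, abs_le]; omega
    · refine ⟨j, ?_⟩
      rw [hA]
      have : B + 2*(-mI)*j = B % (2*mI) := by linear_combination -hdef
      rw [this, abs_le]; omega
  · rcases hA with hA | hA
    · refine ⟨-(j+1), ?_⟩
      rw [hA]
      have : B + 2*mI*(-(j+1)) = B % (2*mI) - 2*mI := by linear_combination -hdef
      rw [this, abs_le]; omega
    · refine ⟨j+1, ?_⟩
      rw [hA]
      have : B + 2*(-mI)*(j+1) = B % (2*mI) - 2*mI := by linear_combination -hdef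
      rw [this, abs_le]; omega

lemma final_lemma (A B C mI : ℤ) (h1 : 1 ≤ mI) (hA : |A| = mI) (hC : mI ≤ |C|)
    (hdisc : B^2 - 4*A*C = -3) (hB : |B| ≤ mI) : mI ≤ 1 := by
  have hpos : 0 < A*C := by nlinarith [sq_nonneg B]
  have hprod : 4*(mI*|C|) = B^2 + 3 := by
    rw [← hA, ← abs_mul, abs_of_pos hpos]; linarith
  have hBsq : B^2 ≤ mI^2 := by
    rw [abs_le] at hB; nlinarith [hB.1, hB.2]
  nlinarith [mul_le_mul_of_nonneg_left hC (by omega : (0:ℤ) ≤ mI)]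

/-- A binary quadratic form of discriminant `-3` represents `1` or `-1`. -/
theorem form_rep (b c e : ℤ) (hdisc : e^2 + 4*b*c = -3) :
    ∃ x y : ℤ, c*x^2 + e*x*y - b*y^2 = 1 ∨ c*x^2 + e*x*y - b*y^2 = -1 := by
  have hc : c ≠ 0 := by rintro rfl; nlinarith [sq_nonneg e]
  have hdef : ∀ x y : ℤ, ¬(x = 0 ∧ y = 0) → c*x^2 + e*x*y - b*y^2 ≠ 0 := by
    intro x y hxy h0
    have key : 4*c*(c*x^2 + e*x*y - b*y^2) = (2*c*x + e*y)^2 + 3*y^2 := by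
      linear_combination (-y^2) * hdisc
    rw [h0, mul_zero] at key
    have hy : y = 0 := by nlinarith [sq_nonneg (2*c*x+e*y), sq_nonneg y]
    have hx : 2*c*x + e*y = 0 := by nlinarith [sq_nonneg (2*c*x+e*y), sq_nonneg y]
    rw [hy] at hx
    simp at hx
    rcases hx with h | h
    · exact hc h
    · exact hxy ⟨h, hy⟩
  have hex : ∃ n : ℕ, ∃ x y : ℤ, ¬(x = 0 ∧ y = 0) ∧ (c*x^2 + e*x*y - b*y^2).natAbs = n :=
    ⟨(c*1^2 + e*1*0 - b*0^2).natAbs, 1, 0, by norm_num, rfl⟩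
  classical
  obtain ⟨x, y, hxy0, hQm⟩ := Nat.find_spec hex
  have hmin : ∀ u v : ℤ, ¬(u = 0 ∧ v = 0) →
      Nat.find hex ≤ (c*u^2 + e*u*v - b*v^2).natAbs := by
    intro u v huv
    by_contra hlt
    exact Nat.find_min hex (by omega) ⟨u, v, huv, rfl⟩
  have hm1 : 1 ≤ Nat.find hex := by
    have := hdef x y hxy0
    omega
  suffices hm' : Nat.find hex = 1 by
    refine ⟨x, y, ?_⟩
    have h1 : (c*x^2 + e*x*y - b*y^2).natAbs = 1 := by omega
    rcases Int.natAbs_eq_iff.mp h1 with h | h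
    · left; exact_mod_cast h
    · right; exact_mod_cast h
  -- gcd step
  obtain ⟨G, hG⟩ : ∃ G : ℤ, G = (Int.gcd x y : ℤ) := ⟨_, rfl⟩
  obtain ⟨x', hx'⟩ : G ∣ x := hG ▸ Int.gcd_dvd_left x y
  obtain ⟨y', hy'⟩ : G ∣ y := hG ▸ Int.gcd_dvd_right x y
  have hg0 : Int.gcd x y ≠ 0 := by
    intro h
    rw [h] at hG; norm_num at hG
    rw [hG] at hx' hy'; simp at hx' hy'
    exact hxy0 ⟨hx', hy'⟩
  have hxy'0 : ¬(x' = 0 ∧ y' = 0) := by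
    rintro ⟨rfl, rfl⟩
    simp at hx' hy'
    exact hxy0 ⟨hx', hy'⟩
  have hg1 : Int.gcd x y = 1 := by
    by_contra hgne
    have h2 : 2 ≤ Int.gcd x y := by omega
    have h2' : 2 ≤ G.natAbs := by rw [hG]; simpa using h2
    have hle := hmin x' y' hxy'0
    have hQfac : c*x^2 + e*x*y - b*y^2 = G^2 * (c*x'^2 + e*x'*y' - b*y'^2) := by
      rw [hx', hy']; ring
    have hnat : (c*x^2 + e*x*y - b*y^2).natAbs
        = G.natAbs^2 * (c*x'^2 + e*x'*y' - b*y'^2).natAbs := by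
      rw [hQfac, Int.natAbs_mul, Int.natAbs_pow]
    have h4 : 4 ≤ G.natAbs^2 := by nlinarith
    have c2 : 4*(c*x'^2 + e*x'*y' - b*y'^2).natAbs
        ≤ G.natAbs^2*(c*x'^2 + e*x'*y' - b*y'^2).natAbs :=
      Nat.mul_le_mul_right _ h4
    omega
  obtain ⟨p, q, hpq⟩ := Int.isCoprime_iff_gcd_eq_one.mpr hg1
  set u : ℤ := -q
  set v : ℤ := p
  have hdet1 : x*v - y*u = 1 := by simp only [u, v]; linarith
  have hAm : c*x^2 + e*x*y - b*y^2 = (Nat.find hex : ℤ)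
      ∨ c*x^2 + e*x*y - b*y^2 = -(Nat.find hex : ℤ) := by
    rcases Int.natAbs_eq (c*x^2 + e*x*y - b*y^2) with h | h <;> [left; right] <;> omega
  obtain ⟨k, hk⟩ := shift_lemma (2*c*x*u + e*(x*v + y*u) - 2*b*y*v)
    (c*x^2 + e*x*y - b*y^2) (Nat.find hex : ℤ) (by exact_mod_cast hm1) hAm
  set B₂ : ℤ := 2*c*x*u + e*(x*v + y*u) - 2*b*y*v + 2*(c*x^2 + e*x*y - b*y^2)*k with hB₂
  set u₂ : ℤ := x*k + u with hu₂
  set v₂ : ℤ := y*k + v with hv₂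
  have hdet2 : x*v₂ - y*u₂ = 1 := by simp only [hu₂, hv₂]; linarith [hdet1]
  have huv2 : ¬(u₂ = 0 ∧ v₂ = 0) := by
    rintro ⟨h1, h2⟩; rw [h1, h2] at hdet2; simp at hdet2
  have hdisc2 : B₂^2 - 4*(c*x^2 + e*x*y - b*y^2)*(c*u₂^2 + e*u₂*v₂ - b*v₂^2) = -3 := by
    have key : B₂^2 - 4*(c*x^2 + e*x*y - b*y^2)*(c*u₂^2 + e*u₂*v₂ - b*v₂^2)
        = (e^2+4*b*c)*(x*v₂ - y*u₂)^2 := by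
      simp only [hB₂, hu₂, hv₂]; ring
    rw [key, hdet2, hdisc]; ring
  have hCm : (Nat.find hex : ℤ) ≤ |c*u₂^2 + e*u₂*v₂ - b*v₂^2| := by
    have := hmin u₂ v₂ huv2
    rw [Int.abs_eq_natAbs]
    exact_mod_cast this
  have habs : |c*x^2 + e*x*y - b*y^2| = (Nat.find hex : ℤ) := by
    rw [Int.abs_eq_natAbs]; exact_mod_cast hQm
  have := final_lemma (c*x^2 + e*x*y - b*y^2) B₂ (c*u₂^2 + e*u₂*v₂ - b*v₂^2)
    (Nat.find hex : ℤ) (by exact_mod_cast hm1) habs hCm hdisc2 hk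
  omega

/-! ### Concrete elements of `GL(2,ℤ)` -/

def S : GL (Fin 2) ℤ := ⟨!![0,-1;1,-1], !![-1,1;-1,0], by decide, by decide⟩
def Rr : GL (Fin 2) ℤ := ⟨!![1,0;1,-1], !![1,0;1,-1], by decide, by decide⟩
def U : GL (Fin 2) ℤ := ⟨!![1,1;0,1], !![1,-1;0,1], by decide, by decide⟩
def L : GL (Fin 2) ℤ := ⟨!![1,0;1,1], !![1,0;-1,1], by decide, by decide⟩

/-! ### The center of `GL(2,ℤ)` is `{±1}` -/

theorem center_iff (M : GL (Fin 2) ℤ) :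
    M ∈ Subgroup.center (GL (Fin 2) ℤ) ↔ M = 1 ∨ M = -1 := by
  constructor
  · intro h
    rw [Subgroup.mem_center_iff] at h
    have hM : M.val = !![M.val 0 0, M.val 0 1; M.val 1 0, M.val 1 1] :=
      Matrix.eta_fin_two M.val
    set a := M.val 0 0; set b := M.val 0 1; set c := M.val 1 0; set d := M.val 1 1
    have hU' : U.val * M.val = M.val * U.val := congrArg Units.val (h U)
    have hL' : L.val * M.val = M.val * L.val := congrArg Units.val (h L)
    rw [hM] at hU' hL'
    simp only [U, L, Matrix.mul_fin_two] at hU' hL'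
    have e1 := congrFun (congrFun hU' 0) 0
    have e2 := congrFun (congrFun hU' 0) 1
    have e3 := congrFun (congrFun hL' 0) 0
    simp at e1 e2 e3
    have hd : d = a := by omega
    have hdet : a * d - b * c = 1 ∨ a * d - b * c = -1 := by
      have h := (Matrix.isUnit_iff_isUnit_det M.val).mp M.isUnit
      rw [hM] at h
      rcases Int.isUnit_iff.mp h with h | h <;> [left; right] <;>
        simpa [Matrix.det_fin_two] using h
    rw [e1, e3, hd] at hdet
    have haa : a * a = 1 := by
      rcases hdet with h | h
      · linarith
      · exfalso; nlinarith [sq_nonneg a]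
    rcases mul_self_eq_one_iff.mp haa with ha | ha
    · left; apply Units.ext; rw [hM, e1, e3, hd, ha]; decide
    · right; apply Units.ext; rw [hM, e1, e3, hd, ha]; decide
  · rintro (rfl | rfl) <;> rw [Subgroup.mem_center_iff] <;> intro g <;>
      apply Units.ext <;> simp

/-! ### trace and det of an element of order 3 -/

theorem trace_det (A : GL (Fin 2) ℤ) (h3 : A^3 = 1) (h1 : A ≠ 1) :
    A.val 0 0 + A.val 1 1 = -1 ∧ A.val 0 0 * A.val 1 1 - A.val 0 1 * A.val 1 0 = 1 := by
  obtain ⟨a, b, c, d, hA⟩ : ∃ a b c d : ℤ, A.val = !![a,b;c,d] :=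
    ⟨_,_,_,_, Matrix.eta_fin_two A.val⟩
  have hcube : A.val * A.val * A.val = 1 := by
    have h := congrArg Units.val h3
    rw [pow_succ, pow_succ, pow_one] at h
    simpa using h
  rw [hA] at hcube
  simp only [Matrix.mul_fin_two] at hcube
  have e11 := congrFun (congrFun hcube 0) 0
  have e12 := congrFun (congrFun hcube 0) 1
  have e21 := congrFun (congrFun hcube 1) 0
  have e22 := congrFun (congrFun hcube 1) 1
  simp [Matrix.one_fin_two] at e11 e12 e21 e22
  have hdet : a * d - b * c = 1 ∨ a * d - b * c = -1 := by
    have h := (Matrix.isUnit_iff_isUnit_det A.val).mp A.isUnit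
    rw [hA] at h
    rcases Int.isUnit_iff.mp h with h | h <;> [left; right] <;>
      simpa [Matrix.det_fin_two] using h
  suffices h : a + d = -1 ∧ a*d - b*c = 1 by rw [hA]; simpa using h
  have id12 : b*((a+d)^2 - (a*d-b*c)) = 0 := by linear_combination e12
  have id21 : c*((a+d)^2 - (a*d-b*c)) = 0 := by linear_combination e21
  have id11 : ((a+d)^2 - (a*d-b*c))*a - (a+d)*(a*d-b*c) = 1 := by linear_combination e11
  have id22 : ((a+d)^2 - (a*d-b*c))*d - (a+d)*(a*d-b*c) = 1 := by linear_combination e22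
  by_cases hK : (a+d)^2 - (a*d-b*c) = 0
  · have hD1 : a*d - b*c = 1 := by
      rcases hdet with h | h
      · exact h
      · exfalso; nlinarith [sq_nonneg (a+d)]
    refine ⟨?_, hD1⟩
    rw [hK, zero_mul, zero_sub, hD1, mul_one] at id11
    linarith
  · exfalso
    have hb : b = 0 := by rcases mul_eq_zero.mp id12 with h | h; exacts [h, absurd h hK]
    have hc : c = 0 := by rcases mul_eq_zero.mp id21 with h | h; exacts [h, absurd h hK]
    have had : (a - d) * ((a+d)^2 - (a*d-b*c)) = 0 := by linear_combination id11 - id22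
    have hda : d = a := by
      rcases mul_eq_zero.mp had with h | h; exacts [by linarith, absurd h hK]
    subst hb hc hda
    have ha3 : d^3 = 1 := by linear_combination id11
    have ha1 : d = 1 := by nlinarith [sq_nonneg (d-1), sq_nonneg (d+1)]
    subst ha1
    exact h1 (Units.ext (by rw [hA]; simp [Matrix.one_fin_two]))

/-! ### Conjugating an order-3 element to `S` -/

def mkGL (p q r s : ℤ) (h : p*s - q*r = 1 ∨ p*s - q*r = -1) : GL (Fin 2) ℤ where
  val := !![p, q; r, s]
  inv := !![(p*s-q*r)*s, -(p*s-q*r)*q; -(p*s-q*r)*r, (p*s-q*r)*p]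
  val_inv := by
    ext i j
    fin_cases i <;> fin_cases j <;>
      simp [Matrix.mul_fin_two, Matrix.one_fin_two] <;> rcases h with h | h <;> nlinarith
  inv_val := by
    ext i j
    fin_cases i <;> fin_cases j <;>
      simp [Matrix.mul_fin_two, Matrix.one_fin_two] <;> rcases h with h | h <;> nlinarith

theorem conj_to_S (A : GL (Fin 2) ℤ)
    (htr : A.val 0 0 + A.val 1 1 = -1)
    (hdet : A.val 0 0 * A.val 1 1 - A.val 0 1 * A.val 1 0 = 1) :
    ∃ P : GL (Fin 2) ℤ, A * P = P * S := by
  obtain ⟨a, b, c, d, hA⟩ : ∃ a b c d : ℤ, A.val = !![a,b;c,d] :=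
    ⟨_,_,_,_, Matrix.eta_fin_two A.val⟩
  rw [hA] at htr hdet
  simp at htr hdet
  have hdisc : (d-a)^2 + 4*b*c = -3 := by linear_combination (a+d-1)*htr - 4*hdet
  obtain ⟨x, y, hQ⟩ := form_rep b c (d-a) hdisc
  have hPdet : x*(c*x+d*y) - (a*x+b*y)*y = 1 ∨ x*(c*x+d*y) - (a*x+b*y)*y = -1 := by
    rcases hQ with h | h <;> [left; right] <;> linear_combination h
  refine ⟨mkGL x (a*x+b*y) y (c*x+d*y) hPdet, ?_⟩
  apply Units.ext
  show A.val * _ = _ * S.val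
  rw [hA]
  show !![a,b;c,d] * !![x, a*x+b*y; y, c*x+d*y]
     = !![x, a*x+b*y; y, c*x+d*y] * !![0,-1;1,-1]
  simp only [Matrix.mul_fin_two]
  ext i j
  fin_cases i <;> fin_cases j
  · simp
  · simp
    linear_combination (a*x + b*y)*htr - x*hdet
  · simp
  · simp
    linear_combination (c*x + d*y)*htr - y*hdet


set_option maxHeartbeats 1000000 in
theorem classify (G : GL (Fin 2) ℤ)
    (h : G*S = S*G ∨ G*S = -(S*G) ∨ G*S = S*S*G ∨ G*S = -(S*S*G)) :
    G = 1 ∨ G = -1 ∨ G = S ∨ G = -S ∨ G = S*S ∨ G = -(S*S) ∨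
    G = Rr ∨ G = -Rr ∨ G = Rr*S ∨ G = -(Rr*S) ∨ G = Rr*S*S ∨ G = -(Rr*S*S) := by
  obtain ⟨a, b, c, d, hG⟩ : ∃ a b c d : ℤ, G.val = !![a,b;c,d] :=
    ⟨_,_,_,_, Matrix.eta_fin_two G.val⟩
  have hdet : a * d - b * c = 1 ∨ a * d - b * c = -1 := by
    have h := (Matrix.isUnit_iff_isUnit_det G.val).mp G.isUnit
    rw [hG] at h
    rcases Int.isUnit_iff.mp h with h | h <;> [left; right] <;>
      simpa [Matrix.det_fin_two] using h
  have hS : S.val = !![0,-1;1,-1] := rfl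
  rcases h with h | h | h | h
  · have hv := congrArg Units.val h
    rw [Units.val_mul, Units.val_mul, hG, hS] at hv
    simp only [Matrix.mul_fin_two] at hv
    have e1 := congrFun (congrFun hv 0) 0
    have e2 := congrFun (congrFun hv 0) 1
    have e3 := congrFun (congrFun hv 1) 0
    simp at e1 e2 e3
    subst e1 e3
    have hdet1 : a * (a + -c) - -c * c = 1 := by
      rcases hdet with h' | h'
      · exact h'
      · exfalso; nlinarith [sq_nonneg (2*a - c), sq_nonneg c]
    have hcb : -1 ≤ c ∧ c ≤ 1 := by
      constructor <;> nlinarith [sq_nonneg (2*a - c)]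
    have hab : -1 ≤ a ∧ a ≤ 1 := by
      constructor <;> nlinarith [sq_nonneg (2*c - a)]
    obtain ⟨hc1, hc2⟩ := hcb
    obtain ⟨ha1, ha2⟩ := hab
    interval_cases a <;> interval_cases c <;>
      first
        | (exfalso; omega)
        | exact Or.inl (Units.ext (by rw [hG]; decide))
        | exact Or.inr (Or.inl (Units.ext (by rw [hG]; decide)))
        | exact Or.inr (Or.inr (Or.inl (Units.ext (by rw [hG]; decide))))
        | exact Or.inr (Or.inr (Or.inr (Or.inl (Units.ext (by rw [hG]; decide)))))
        | exact Or.inr (Or.inr (Or.inr (Or.inr (Or.inl (Units.ext (by rw [hG]; decide))))))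
        | exact Or.inr (Or.inr (Or.inr (Or.inr (Or.inr (Or.inl (Units.ext (by rw [hG]; decide)))))))
  · have hv := congrArg Units.val h
    rw [Units.val_mul, Units.val_neg, Units.val_mul, hG, hS] at hv
    simp only [Matrix.mul_fin_two, Matrix.neg_mul, neg_neg] at hv
    have e1 := congrFun (congrFun hv 0) 0
    have e2 := congrFun (congrFun hv 0) 1
    have e3 := congrFun (congrFun hv 1) 0
    have e4 := congrFun (congrFun hv 1) 1
    simp at e1 e2 e3 e4
    exfalso
    have hz : a = 0 ∧ b = 0 ∧ c = 0 ∧ d = 0 := by omega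
    obtain ⟨rfl, rfl, rfl, rfl⟩ := hz
    norm_num at hdet
  · have hv := congrArg Units.val h
    rw [Units.val_mul, Units.val_mul, Units.val_mul, hG, hS] at hv
    simp only [Matrix.mul_fin_two] at hv
    have e1 := congrFun (congrFun hv 0) 0
    have e2 := congrFun (congrFun hv 0) 1
    have e3 := congrFun (congrFun hv 1) 0
    have e4 := congrFun (congrFun hv 1) 1
    simp at e1 e2 e3 e4
    have hc : c = a + b := by omega
    have hd : d = -a := by omega
    subst hc hd
    have hdet1 : a * -a - b * (a + b) = -1 := by
      rcases hdet with h' | h'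
      · exfalso; nlinarith [sq_nonneg (2*a + b), sq_nonneg b]
      · exact h'
    have hbb : -1 ≤ b ∧ b ≤ 1 := by
      constructor <;> nlinarith [sq_nonneg (2*a + b)]
    have hab : -1 ≤ a ∧ a ≤ 1 := by
      constructor <;> nlinarith [sq_nonneg (2*b + a)]
    obtain ⟨hb1, hb2⟩ := hbb
    obtain ⟨ha1, ha2⟩ := hab
    interval_cases a <;> interval_cases b <;>
      first
        | (exfalso; omega)
        | exact Or.inr (Or.inr (Or.inr (Or.inr (Or.inr (Or.inr (Or.inl (Units.ext (by rw [hG]; decide))))))))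
        | exact Or.inr (Or.inr (Or.inr (Or.inr (Or.inr (Or.inr (Or.inr (Or.inl (Units.ext (by rw [hG]; decide)))))))))
        | exact Or.inr (Or.inr (Or.inr (Or.inr (Or.inr (Or.inr (Or.inr (Or.inr (Or.inl (Units.ext (by rw [hG]; decide))))))))))
        | exact Or.inr (Or.inr (Or.inr (Or.inr (Or.inr (Or.inr (Or.inr (Or.inr (Or.inr (Or.inl (Units.ext (by rw [hG]; decide)))))))))))
        | exact Or.inr (Or.inr (Or.inr (Or.inr (Or.inr (Or.inr (Or.inr (Or.inr (Or.inr (Or.inr (Or.inl (Units.ext (by rw [hG]; decide))))))))))))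
        | exact Or.inr (Or.inr (Or.inr (Or.inr (Or.inr (Or.inr (Or.inr (Or.inr (Or.inr (Or.inr (Or.inr (Units.ext (by rw [hG]; decide))))))))))))
  · have hv := congrArg Units.val h
    rw [Units.val_mul, Units.val_neg, Units.val_mul, Units.val_mul, hG, hS] at hv
    simp only [Matrix.mul_fin_two, Matrix.neg_mul, neg_neg] at hv
    have e1 := congrFun (congrFun hv 0) 0
    have e2 := congrFun (congrFun hv 0) 1
    have e3 := congrFun (congrFun hv 1) 0
    have e4 := congrFun (congrFun hv 1) 1
    simp at e1 e2 e3 e4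
    exfalso
    have hz : a = 0 ∧ b = 0 ∧ c = 0 ∧ d = 0 := by omega
    obtain ⟨rfl, rfl, rfl, rfl⟩ := hz
    norm_num at hdet

def psi : DihedralGroup 3 →* GL (Fin 2) ℤ where
  toFun g := match g with
    | .r i => S ^ i.val
    | .sr i => Rr * S ^ i.val
  map_one' := by show S ^ (0 : ZMod 3).val = 1; decide
  map_mul' := by rintro (i | i) (j | j) <;> fin_cases i <;> fin_cases j <;> decide

end PGL2ZRev



namespace PGL2ZRev

lemma mem_rev {Γ : Type*} [Group Γ] (F g : Γ) :
    g ∈ reversingSymmetryGroup F ↔ (g * F * g⁻¹ = F ∨ g * F * g⁻¹ = F⁻¹) := Iff.rfl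

lemma rev_conj {Γ : Type*} [Group Γ] (c F : Γ) :
    (reversingSymmetryGroup F).map (MulAut.conj c).toMonoidHom
      = reversingSymmetryGroup (c * F * c⁻¹) := by
  ext x
  rw [Subgroup.mem_map_equiv, mem_rev, mem_rev]
  constructor
  · rintro (h | h)
    · left
      calc x * (c*F*c⁻¹) * x⁻¹
          = c * (((MulAut.conj c).symm x) * F * ((MulAut.conj c).symm x)⁻¹) * c⁻¹ := by
            simp [MulAut.conj]; group
        _ = c * F * c⁻¹ := by rw [h]
    · right
      calc x * (c*F*c⁻¹) * x⁻¹
          = c * (((MulAut.conj c).symm x) * F * ((MulAut.conj c).symm x)⁻¹) * c⁻¹ := by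
            simp [MulAut.conj]; group
        _ = c * F⁻¹ * c⁻¹ := by rw [h]
        _ = (c * F * c⁻¹)⁻¹ := by group
  · rintro (h | h)
    · left
      have : (MulAut.conj c).symm x * F * ((MulAut.conj c).symm x)⁻¹
          = c⁻¹ * (x * (c*F*c⁻¹) * x⁻¹) * c := by simp [MulAut.conj]; group
      rw [this, h]; group
    · right
      have : (MulAut.conj c).symm x * F * ((MulAut.conj c).symm x)⁻¹
          = c⁻¹ * (x * (c*F*c⁻¹) * x⁻¹) * c := by simp [MulAut.conj]; group
      rw [this, h]; group

/-- the projection -/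
def π : GL (Fin 2) ℤ →* PGL2Z := QuotientGroup.mk' _

lemma pgl_eq (M N : GL (Fin 2) ℤ) : π M = π N ↔ M = N ∨ M = -N := by
  constructor
  · intro h
    have h' := QuotientGroup.eq.mp h
    rw [center_iff] at h'
    rcases h' with h' | h'
    · left; exact inv_mul_eq_one.mp h'
    · right
      have hN : N = -M := by
        have := congrArg (fun z => M * z) h'
        simpa [mul_assoc] using this
      rw [hN, neg_neg]
  · rintro (rfl | rfl)
    · rfl
    · symm
      apply QuotientGroup.eq.mpr
      rw [center_iff]
      right
      simp

def phi : DihedralGroup 3 →* PGL2Z := π.comp psi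

lemma pgl_neg (H : GL (Fin 2) ℤ) : π (-H) = π H := (pgl_eq _ _).mpr (Or.inr rfl)

lemma phi_inj : Function.Injective phi := by
  rw [injective_iff_map_eq_one]
  rintro (i | i) h
  · fin_cases i
    · rfl
    · exfalso
      have h' := (pgl_eq _ 1).mp h
      revert h'
      decide
    · exfalso
      have h' := (pgl_eq _ 1).mp h
      revert h'
      decide
  · exfalso
    fin_cases i <;>
    · have h' := (pgl_eq _ 1).mp h
      revert h'
      decide

lemma phi_mem (g : DihedralGroup 3) : phi g ∈ reversingSymmetryGroup (π S) := by
  rcases g with i | i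
  · left
    show π (psi (.r i)) * π S * (π (psi (.r i)))⁻¹ = π S
    have h : psi (.r i) * S * (psi (.r i))⁻¹ = S := by fin_cases i <;> decide
    rw [← _root_.map_inv, ← _root_.map_mul, ← _root_.map_mul, h]
  · right
    show π (psi (.sr i)) * π S * (π (psi (.sr i)))⁻¹ = (π S)⁻¹
    have h : psi (.sr i) * S * (psi (.sr i))⁻¹ = S⁻¹ := by fin_cases i <;> decide
    rw [← _root_.map_inv, ← _root_.map_mul, ← _root_.map_mul, h, _root_.map_inv]

lemma phi_range : phi.range = reversingSymmetryGroup (π S) := by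
  ext x
  constructor
  · rintro ⟨g, rfl⟩
    exact phi_mem g
  · intro hx
    obtain ⟨G, rfl⟩ := QuotientGroup.mk'_surjective _ x
    have hx' : π G * π S * (π G)⁻¹ = π S ∨ π G * π S * (π G)⁻¹ = (π S)⁻¹ := hx
    have hcomm : G*S = S*G ∨ G*S = -(S*G) ∨ G*S = S*S*G ∨ G*S = -(S*S*G) := by
      rcases hx' with h | h
      · have h2 : π (G*S*G⁻¹) = π S := by rw [_root_.map_mul, _root_.map_mul, _root_.map_inv]; exact h
        rcases (pgl_eq _ _).mp h2 with h3 | h3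
        · left
          have := congrArg (fun z => z * G) h3
          simpa [mul_assoc] using this
        · right; left
          have : G*S = -S*G := by
            have := congrArg (fun z => z * G) h3
            simpa [mul_assoc] using this
          rw [this, neg_mul]
      · have h2 : π (G*S*G⁻¹) = π S⁻¹ := by rw [_root_.map_mul, _root_.map_mul, _root_.map_inv, _root_.map_inv]; exact h
        have hSinv : S⁻¹ = S*S := by decide
        rcases (pgl_eq _ _).mp h2 with h3 | h3
        · right; right; left
          rw [← hSinv]
          have := congrArg (fun z => z * G) h3
          simpa [mul_assoc] using this
        · right; right; right
          rw [← hSinv]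
          have := congrArg (fun z => z * G) h3
          simpa [mul_assoc, neg_mul] using this
    rcases classify G hcomm with rfl|rfl|rfl|rfl|rfl|rfl|rfl|rfl|rfl|rfl|rfl|rfl
    · exact ⟨.r 0, (pgl_eq _ _).mpr (by decide)⟩
    · exact ⟨.r 0, (pgl_eq _ _).mpr (by decide)⟩
    · exact ⟨.r 1, (pgl_eq _ _).mpr (by decide)⟩
    · exact ⟨.r 1, (pgl_eq _ _).mpr (by decide)⟩
    · exact ⟨.r 2, (pgl_eq _ _).mpr (by decide)⟩
    · exact ⟨.r 2, (pgl_eq _ _).mpr (by decide)⟩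
    · exact ⟨.sr 0, (pgl_eq _ _).mpr (by decide)⟩
    · exact ⟨.sr 0, (pgl_eq _ _).mpr (by decide)⟩
    · exact ⟨.sr 1, (pgl_eq _ _).mpr (by decide)⟩
    · exact ⟨.sr 1, (pgl_eq _ _).mpr (by decide)⟩
    · exact ⟨.sr 2, (pgl_eq _ _).mpr (by decide)⟩
    · exact ⟨.sr 2, (pgl_eq _ _).mpr (by decide)⟩

theorem main (F : PGL2Z) (h3 : F ^ 3 = 1) (h1 : F ≠ 1) :
    Nonempty (reversingSymmetryGroup F ≃* DihedralGroup 3) := by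
  obtain ⟨A, rfl⟩ := QuotientGroup.mk'_surjective (Subgroup.center (GL (Fin 2) ℤ)) F
  have hA3 : A^3 = 1 ∨ A^3 = -1 := by
    have h' : π (A^3) = 1 := by rw [map_pow]; exact h3
    have h'' : A^3 ∈ Subgroup.center (GL (Fin 2) ℤ) :=
      (QuotientGroup.eq_one_iff (A^3)).mp h'
    rwa [center_iff] at h''
  obtain ⟨A', hA'3, hA'F⟩ : ∃ A' : GL (Fin 2) ℤ, A'^3 = 1 ∧ π A' = π A := by
    rcases hA3 with h | h
    · exact ⟨A, h, rfl⟩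
    · refine ⟨-A, ?_, pgl_neg A⟩
      rw [Odd.neg_pow ⟨1, by norm_num⟩, h, neg_neg]
  have hA'1 : A' ≠ 1 := by
    rintro rfl
    exact h1 (hA'F.symm.trans (map_one π))
  obtain ⟨htr, hdet⟩ := trace_det A' hA'3 hA'1
  obtain ⟨P, hP⟩ := conj_to_S A' htr hdet
  have hconj : π A = (π P) * (π S) * (π P)⁻¹ := by
    have hA'eq : A' = P * S * P⁻¹ := by
      have := congrArg (fun z => z * P⁻¹) hP
      simpa [mul_assoc] using this
    rw [← hA'F, hA'eq, _root_.map_mul, _root_.map_mul, _root_.map_inv]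
  have hmap : (reversingSymmetryGroup (π S)).map (MulAut.conj (π P)).toMonoidHom
      = reversingSymmetryGroup ((π A : PGL2Z)) := by
    rw [hconj]; exact rev_conj _ _
  exact ⟨((((MonoidHom.ofInjective phi_inj).trans
      (MulEquiv.subgroupCongr phi_range)).trans
      (MulEquiv.subgroupMap (MulAut.conj (π P)) (reversingSymmetryGroup (π S)))).trans
      (MulEquiv.subgroupCongr hmap)).symm⟩

end PGL2ZRev

/-- If `F ∈ PGL(2,ℤ)` satisfies `F³ = 1`, `F ≠ 1`, then its reversing symmetry
group is isomorphic to the dihedral group `D₃` of order 6. -/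
theorem PGL2Z_revGroup_of_order_three (F : PGL2Z) (h3 : F ^ 3 = 1) (h1 : F ≠ 1) :
    Nonempty (reversingSymmetryGroup F ≃* DihedralGroup 3) :=
  PGL2ZRev.main F h3 h1
end
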